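/- arXiv:2103.09370 — 6 statements merged into one kernel-verified Lean document; each statement's English description precedes it below -/
import Mathlib

section
/- Let Ω be a compact metric space, M ⊆ Ω a closed purely 1-unrectifiable subset, L < ∞ and ε > 0. Then there exists a compact neighborhood V of M in Ω (a compact set V with M contained in the interior of V) such that H¹_∞(im(γ) ∩ V) < ε for every Lipschitz curve γ : [a,b] → Ω whose length (total variation) is at most L. -/
open Metric Set MeasureTheory
open scoped ENNReal NNReal

/-- The Hausdorff 1-content of a set: infimum of `∑ diam (E i)` over countable covers. -/
noncomputable def hausdorffContent {Ω : Type*} [MetricSpace Ω] (S : Set Ω) : ℝ≥0∞ :=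
  ⨅ (E : ℕ → Set Ω) (_ : S ⊆ ⋃ i, E i), ∑' i, EMetric.diam (E i)

lemma hausdorffContent_le_of_cover {Ω : Type*} [MetricSpace Ω] {S : Set Ω} {E : ℕ → Set Ω}
    (h : S ⊆ ⋃ i, E i) : hausdorffContent S ≤ ∑' i, EMetric.diam (E i) :=
  iInf₂_le E h

lemma hausdorffContent_mono {Ω : Type*} [MetricSpace Ω] {S T : Set Ω} (h : S ⊆ T) :
    hausdorffContent S ≤ hausdorffContent T :=
  le_iInf₂ fun E hE => iInf₂_le E (h.trans hE)

lemma hausdorffContent_empty {Ω : Type*} [MetricSpace Ω] :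
    hausdorffContent (∅ : Set Ω) = 0 := by
  refine le_antisymm ?_ (zero_le)
  have : hausdorffContent (∅ : Set Ω) ≤ ∑' i : ℕ, EMetric.diam (∅ : Set Ω) :=
    hausdorffContent_le_of_cover (by simp)
  simpa [EMetric.diam] using this

lemma hausdorffContent_le_hausdorffMeasure {Ω : Type*} [MetricSpace Ω] [MeasurableSpace Ω]
    [BorelSpace Ω] (S : Set Ω) : hausdorffContent S ≤ μH[1] S := by
  rw [MeasureTheory.Measure.hausdorffMeasure_apply]
  refine le_trans ?_ (le_iSup₂ (f := fun (r : ℝ≥0∞) (_ : 0 < r) =>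
    ⨅ (t : ℕ → Set Ω) (_ : S ⊆ ⋃ n, t n) (_ : ∀ n, EMetric.diam (t n) ≤ r),
      ∑' n, ⨆ _ : (t n).Nonempty, EMetric.diam (t n) ^ (1:ℝ)) 1 zero_lt_one)
  refine le_iInf fun t => le_iInf fun ht => le_iInf fun _ => ?_
  refine (hausdorffContent_le_of_cover ht).trans (ENNReal.tsum_le_tsum fun n => ?_)
  rcases (t n).eq_empty_or_nonempty with h | h
  · simp [h, EMetric.diam]
  · rw [iSup_pos h, ENNReal.rpow_one]

lemma exists_open_cover_of_content_zero {Ω : Type*} [MetricSpace Ω] {S : Set Ω}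
    (h0 : hausdorffContent S = 0) {ε : ℝ} (hε : 0 < ε) :
    ∃ E : ℕ → Set Ω, (∀ i, IsOpen (E i)) ∧ S ⊆ ⋃ i, E i ∧
      ∑' i, EMetric.diam (E i) < ENNReal.ofReal ε := by
  have h2 : hausdorffContent S < ENNReal.ofReal (ε / 2) := by
    rw [h0]; exact ENNReal.ofReal_pos.2 (by linarith)
  rw [hausdorffContent, iInf_lt_iff] at h2
  obtain ⟨F, hF⟩ := h2
  rw [iInf_lt_iff] at hF
  obtain ⟨hFcov, hFsum⟩ := hF
  set δ : ℝ := ε / 8 with hδ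
  have hδpos : 0 < δ := by positivity
  refine ⟨fun i => Metric.thickening (δ * (1 / 2) ^ i) (F i), fun i => Metric.isOpen_thickening,
    hFcov.trans (Set.iUnion_mono fun i => Metric.self_subset_thickening (by positivity) _), ?_⟩
  have hbound : ∀ i : ℕ, EMetric.diam (Metric.thickening (δ * (1 / 2) ^ i) (F i)) ≤
      EMetric.diam (F i) + 2 * ENNReal.ofReal (δ * (1 / 2) ^ i) := by
    intro i
    have := Metric.ediam_thickening_le (s := F i) ((δ * (1 / 2) ^ i).toNNReal)
    rw [Real.coe_toNNReal _ (by positivity)] at this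
    simpa [ENNReal.ofReal, EMetric.diam] using this
  calc ∑' i, EMetric.diam (Metric.thickening (δ * (1 / 2) ^ i) (F i))
      ≤ ∑' i, (EMetric.diam (F i) + 2 * ENNReal.ofReal (δ * (1 / 2) ^ i)) :=
        ENNReal.tsum_le_tsum hbound
    _ = (∑' i, EMetric.diam (F i)) + ∑' i, 2 * ENNReal.ofReal (δ * (1 / 2) ^ i) :=
        ENNReal.tsum_add
    _ ≤ (∑' i, EMetric.diam (F i)) + ENNReal.ofReal (ε / 2) := by
        gcongr
        have : ∀ i : ℕ, 2 * ENNReal.ofReal (δ * (1 / 2) ^ i)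
            = (ENNReal.ofReal (2 * δ)) * (2⁻¹ : ℝ≥0∞) ^ i := by
          intro i
          rw [ENNReal.ofReal_mul (by positivity), ENNReal.ofReal_mul (by norm_num),
            ENNReal.ofReal_pow (by norm_num)]
          ring_nf
          have h12 : ENNReal.ofReal (1/2 : ℝ) = 2⁻¹ := by
            rw [ENNReal.ofReal_div_of_pos (by norm_num)]
            norm_num [ENNReal.ofReal_ofNat, ENNReal.ofReal_one]
          rw [h12, ENNReal.ofReal_ofNat]; ring
        rw [tsum_congr this, ENNReal.tsum_mul_left, ENNReal.tsum_geometric,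
          ENNReal.one_sub_inv_two, inv_inv]
        rw [← ENNReal.ofReal_ofNat 2, ← ENNReal.ofReal_mul (by positivity)]
        apply ENNReal.ofReal_le_ofReal
        rw [hδ]; ring_nf; linarith
    _ < ENNReal.ofReal (ε / 2) + ENNReal.ofReal (ε / 2) :=
        ENNReal.add_lt_add_right ENNReal.ofReal_ne_top hFsum
    _ = ENNReal.ofReal ε := by
        rw [← ENNReal.ofReal_add (by linarith) (by linarith)]; norm_num

lemma exists_reparam {Ω : Type*} [MetricSpace Ω] {a b : ℝ} {γ : ℝ → Ω} {K : ℝ≥0}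
    (hab : a ≤ b) (hlip : LipschitzOnWith K γ (Set.Icc a b))
    (hfin : eVariationOn γ (Set.Icc a b) ≠ ⊤)
    {C : ℝ} (hC : (eVariationOn γ (Set.Icc a b)).toReal ≤ C) :
    ∃ σ : ℝ → Ω, LipschitzWith 1 σ ∧ γ '' Set.Icc a b ⊆ σ '' Set.Icc 0 C := by
  set s : Set ℝ := Set.Icc a b with hs
  have ha : a ∈ s := ⟨le_refl a, hab⟩
  have hb : b ∈ s := ⟨hab, le_refl b⟩
  have hbd : LocallyBoundedVariationOn γ s := hlip.locallyBoundedVariationOn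
  set v : ℝ → ℝ := fun t => variationOnFromTo γ s a t with hv
  have hva : v a = 0 := variationOnFromTo.self γ s a
  have hadd : ∀ {x y : ℝ}, x ∈ s → y ∈ s → variationOnFromTo γ s x y = v y - v x := by
    intro x y hx hy
    have h := variationOnFromTo.add hbd ha hx hy
    simp only [hv] at h ⊢
    linarith
  have hfin' : ∀ x y : ℝ, eVariationOn γ (s ∩ Set.Icc x y) ≠ ⊤ :=
    fun x y => ne_top_of_le_ne_top hfin (eVariationOn.mono γ inter_subset_left)
  have hedist : ∀ {x y : ℝ}, x ∈ s → y ∈ s → x ≤ y →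
      edist (γ x) (γ y) ≤ ENNReal.ofReal (v y - v x) := by
    intro x y hx hy hxy
    rw [← hadd hx hy, variationOnFromTo.eq_of_le γ s hxy,
      ENNReal.ofReal_toReal (hfin' x y)]
    exact eVariationOn.edist_le γ ⟨hx, le_refl x, hxy⟩ ⟨hy, hxy, le_refl y⟩
  have hmono : MonotoneOn v s := variationOnFromTo.monotoneOn hbd ha
  have habs : ∀ {x y : ℝ}, x ∈ s → y ∈ s →
      edist (γ x) (γ y) ≤ ENNReal.ofReal |v y - v x| := by
    intro x y hx hy
    rcases le_total x y with h | h
    · exact (hedist hx hy h).trans (ENNReal.ofReal_le_ofReal (le_abs_self _))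
    · rw [edist_comm, abs_sub_comm]
      exact (hedist hy hx h).trans (ENNReal.ofReal_le_ofReal (le_abs_self _))
  have hvlip : LipschitzOnWith K v s := by
    apply LipschitzOnWith.of_dist_le_mul
    intro x hx y hy
    wlog hxy : y ≤ x generalizing x y
    · rw [dist_comm, dist_comm x y]; exact this y hy x hx (le_of_not_ge hxy)
    have h1 : v x - v y ≤ K * (x - y) := by
      have e1 : v x - v y = (eVariationOn γ (s ∩ Set.Icc y x)).toReal := by
        rw [← hadd hy hx, variationOnFromTo.eq_of_le γ s hxy]
      have e2 : eVariationOn γ (s ∩ Set.Icc y x) ≤ ↑K * ENNReal.ofReal (x - y) := by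
        refine le_trans (eVariationOn.mono γ inter_subset_right) ?_
        have hmapsto : MapsTo id (Set.Icc y x) s := fun t ht =>
          ⟨hy.1.trans ht.1, ht.2.trans hx.2⟩
        have h3 : eVariationOn (γ ∘ id) (Set.Icc y x) ≤ ↑K * eVariationOn id (Set.Icc y x) :=
          hlip.comp_eVariationOn_le hmapsto
        rw [Function.comp_id] at h3
        refine h3.trans ?_
        gcongr
        have h4 : MonotoneOn (id : ℝ → ℝ) (Set.Icc y x) := fun _ _ _ _ h => h
        have h5 := h4.eVariationOn_le (Set.left_mem_Icc.2 hxy) (Set.right_mem_Icc.2 hxy)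
        rwa [Set.inter_self] at h5
      rw [e1]
      calc (eVariationOn γ (s ∩ Set.Icc y x)).toReal
          ≤ (↑K * ENNReal.ofReal (x - y)).toReal :=
            ENNReal.toReal_mono (by finiteness) e2
        _ = K * (x - y) := by
            rw [ENNReal.toReal_mul, ENNReal.coe_toReal,
              ENNReal.toReal_ofReal (by linarith)]
    have h0 : 0 ≤ v x - v y := sub_nonneg.2 (hmono hy hx hxy)
    rw [Real.dist_eq, Real.dist_eq, abs_of_nonneg h0, abs_of_nonneg (by linarith : (0:ℝ) ≤ x - y)]
    exact h1
  have hsurj : Set.Icc 0 (v b) ⊆ v '' s := by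
    have h := intermediate_value_Icc hab hvlip.continuousOn
    rwa [hva] at h
  have hl0 : 0 ≤ v b := variationOnFromTo.nonneg_of_le γ s hab
  have hlC : v b ≤ C := by
    have : v b = (eVariationOn γ s).toReal := by
      rw [hv]
      simp only []
      rw [variationOnFromTo.eq_of_le γ s hab, hs, Set.inter_self]
    rw [this]; exact hC
  set clamp : ℝ → ℝ := fun u => max 0 (min u (v b)) with hclamp
  have hclamp_mem : ∀ u, clamp u ∈ Set.Icc 0 (v b) := fun u =>
    ⟨le_max_left _ _, max_le hl0 (min_le_right _ _)⟩
  have hclamp_lip : ∀ u w : ℝ, |clamp u - clamp w| ≤ |u - w| := by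
    intro u w
    have h1 : |max 0 (min u (v b)) - max 0 (min w (v b))| ≤ |min u (v b) - min w (v b)| := by
      rw [max_comm 0 (min u (v b)), max_comm 0 (min w (v b))]
      exact abs_max_sub_max_le_abs _ _ _
    refine h1.trans ?_
    have h2 := abs_min_sub_min_le_max u (v b) w (v b)
    simpa using h2
  have hchoice : ∀ u : ℝ, ∃ t, t ∈ s ∧ v t = clamp u := by
    intro u
    rcases hsurj (hclamp_mem u) with ⟨t, ht, hvt⟩
    exact ⟨t, ht, hvt⟩
  choose T hTs hTv using hchoice
  refine ⟨fun u => γ (T u), ?_, ?_⟩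
  · intro u w
    simp only [ENNReal.coe_one, one_mul]
    calc edist (γ (T u)) (γ (T w)) ≤ ENNReal.ofReal |v (T w) - v (T u)| :=
          habs (hTs u) (hTs w)
      _ = ENNReal.ofReal |clamp w - clamp u| := by rw [hTv, hTv]
      _ ≤ ENNReal.ofReal |w - u| := ENNReal.ofReal_le_ofReal (hclamp_lip w u)
      _ = edist u w := by rw [edist_dist, Real.dist_eq, abs_sub_comm]
  · rintro x ⟨t, ht, rfl⟩
    set u := v t with hu
    have hu0 : 0 ≤ u := variationOnFromTo.nonneg_of_le γ s ht.1
    have hub : u ≤ v b := hmono ht hb ht.2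
    have hclu : clamp u = u := by
      rw [hclamp]
      simp only []
      rw [min_eq_left hub, max_eq_right hu0]
    have hvTu : v (T u) = v t := by rw [hTv u, hclu]
    have hz : γ (T u) = γ t := by
      have h := habs (hTs u) ht
      rw [hvTu] at h
      simp only [sub_self, abs_zero, ENNReal.ofReal_zero, le_zero_iff] at h
      exact edist_eq_zero.1 h
    exact ⟨u, ⟨hu0, hub.trans hlC⟩, hz⟩

/-- A subset `M` of a metric space is *purely 1-unrectifiable* if for every `A ⊆ ℝ` and
every Lipschitz map `f : A → M` (viewed as a Lipschitz map on `A` with image in `M`),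
the 1-dimensional Hausdorff measure of `f(A)` is zero. -/
def Purely1UnrectifiableSet {Ω : Type*} [MetricSpace Ω] [MeasurableSpace Ω] [BorelSpace Ω]
    (M : Set Ω) : Prop :=
  ∀ (A : Set ℝ) (f : ℝ → Ω) (K : ℝ≥0), LipschitzOnWith K f A → f '' A ⊆ M →
    μH[1] (f '' A) = 0

/-- **Neighborhood inducing small Hausdorff content.** For every compact metric space `Ω`,
closed purely 1-unrectifiable `M ⊆ Ω`, `L < ∞` and `ε > 0`, there is a compact
neighborhood `V` of `M` such that `H¹_∞(im(γ) ∩ V) < ε` for every Lipschitz curve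
`γ : [a,b] → Ω` of length (total variation) at most `L`. -/
theorem exists_compact_nhd_small_content_on_curves
    {Ω : Type*} [MetricSpace Ω] [CompactSpace Ω] [MeasurableSpace Ω] [BorelSpace Ω]
    (M : Set Ω) (hMcl : IsClosed M) (hM : Purely1UnrectifiableSet M)
    (L : ℝ) (ε : ℝ) (hε : 0 < ε) :
    ∃ V : Set Ω, IsCompact V ∧ M ⊆ interior V ∧
      ∀ (a b : ℝ) (γ : ℝ → Ω) (K : ℝ≥0), a ≤ b → LipschitzOnWith K γ (Set.Icc a b) →
        eVariationOn γ (Set.Icc a b) ≤ ENNReal.ofReal L →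
        hausdorffContent (γ '' Set.Icc a b ∩ V) < ENNReal.ofReal ε := by
  rcases M.eq_empty_or_nonempty with hMe | hMne
  · refine ⟨∅, isCompact_empty, by simp [hMe], ?_⟩
    intro a b γ K hab hlip hvar
    rw [Set.inter_empty, hausdorffContent_empty]
    exact ENNReal.ofReal_pos.2 hε
  by_contra hcon
  push_neg at hcon
  set V : ℕ → Set Ω := fun n => {x | infDist x M ≤ 1 / (n + 1)} with hV
  have hVclosed : ∀ n, IsClosed (V n) :=
    fun n => isClosed_le (continuous_infDist_pt M) continuous_const
  have hVcompact : ∀ n, IsCompact (V n) := fun n => (hVclosed n).isCompact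
  have hVint : ∀ n, M ⊆ interior (V n) := by
    intro n
    have hopen : IsOpen {x : Ω | infDist x M < 1 / (n + 1)} :=
      isOpen_lt (continuous_infDist_pt M) continuous_const
    have hsub : {x : Ω | infDist x M < 1 / (n + 1)} ⊆ V n := fun x hx =>
      show infDist x M ≤ 1 / (n + 1) from le_of_lt hx
    refine subset_trans ?_ (interior_maximal hsub hopen)
    intro x hx
    simp only [mem_setOf_eq, infDist_zero_of_mem hx]
    positivity
  have hcurve : ∀ n : ℕ, ∃ a, ∃ b, ∃ γ : ℝ → Ω, ∃ K : ℝ≥0,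
      a ≤ b ∧ LipschitzOnWith K γ (Set.Icc a b) ∧
      eVariationOn γ (Set.Icc a b) ≤ ENNReal.ofReal L ∧
      ENNReal.ofReal ε ≤ hausdorffContent (γ '' Set.Icc a b ∩ V n) := by
    intro n
    obtain ⟨a, b, γ, K, h1, h2, h3, h4⟩ := hcon (V n) (hVcompact n) (hVint n)
    exact ⟨a, b, γ, K, h1, h2, h3, h4⟩
  choose A B g Kf hab hlip hvar hcont using hcurve
  set C : ℝ := max L 0 with hCdef
  have hσ : ∀ n, ∃ σ : ℝ → Ω, LipschitzWith 1 σ ∧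
      g n '' Set.Icc (A n) (B n) ⊆ σ '' Set.Icc 0 C := by
    intro n
    refine exists_reparam (hab n) (hlip n)
      (ne_top_of_le_ne_top ENNReal.ofReal_ne_top (hvar n)) ?_
    calc (eVariationOn (g n) (Set.Icc (A n) (B n))).toReal
        ≤ (ENNReal.ofReal L).toReal := ENNReal.toReal_mono ENNReal.ofReal_ne_top (hvar n)
      _ = max L 0 := ENNReal.toReal_ofReal'
      _ ≤ C := le_of_eq rfl
  choose σ hσlip hσim using hσ
  have hcontσ : ∀ n, ENNReal.ofReal ε ≤ hausdorffContent (σ n '' Set.Icc 0 C ∩ V n) := fun n =>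
    (hcont n).trans (hausdorffContent_mono (inter_subset_inter_left _ (hσim n)))
  set U : Ultrafilter ℕ := Filter.hyperfilter ℕ with hU
  have hUatTop : (U : Filter ℕ) ≤ Filter.atTop := by
    rw [← Nat.cofinite_eq_atTop]; exact Filter.hyperfilter_le_cofinite
  have hlim : ∀ t : ℝ, ∃ x : Ω, Filter.Tendsto (fun n => σ n t) (U : Filter ℕ) (nhds x) := by
    intro t
    obtain ⟨x, -, hx⟩ := isCompact_univ.ultrafilter_le_nhds
      (U.map fun n => σ n t) (by rw [Filter.principal_univ]; exact le_top)
    exact ⟨x, hx⟩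
  choose γl hγl using hlim
  have hγlip : LipschitzWith 1 γl := by
    intro t t'
    have h1 : Filter.Tendsto (fun n => edist (σ n t) (σ n t')) (U : Filter ℕ)
        (nhds (edist (γl t) (γl t'))) := (hγl t).edist (hγl t')
    exact le_of_tendsto h1 (Filter.Eventually.of_forall fun n => hσlip n t t')
  have hmeas : μH[1] (γl '' (Set.Icc 0 C ∩ γl ⁻¹' M)) = 0 := by
    refine hM _ γl 1 (LipschitzWith.lipschitzOnWith hγlip) ?_
    rintro x ⟨t, ⟨-, htM⟩, rfl⟩; exact htM
  have hzero : hausdorffContent (γl '' Set.Icc 0 C ∩ M) = 0 := by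
    refine le_antisymm ?_ (zero_le)
    have hsub : γl '' Set.Icc 0 C ∩ M ⊆ γl '' (Set.Icc 0 C ∩ γl ⁻¹' M) := by
      rintro x ⟨⟨t, ht, rfl⟩, hxM⟩; exact ⟨t, ⟨ht, hxM⟩, rfl⟩
    calc hausdorffContent (γl '' Set.Icc 0 C ∩ M)
        ≤ hausdorffContent (γl '' (Set.Icc 0 C ∩ γl ⁻¹' M)) := hausdorffContent_mono hsub
      _ ≤ μH[1] (γl '' (Set.Icc 0 C ∩ γl ⁻¹' M)) := hausdorffContent_le_hausdorffMeasure _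
      _ = 0 := hmeas
  obtain ⟨E, hEopen, hEcov, hEsum⟩ := exists_open_cover_of_content_zero hzero hε
  have hfinal : ∃ n, σ n '' Set.Icc 0 C ∩ V n ⊆ ⋃ i, E i := by
    by_contra hne
    push_neg at hne
    have hpt : ∀ n, ∃ t, t ∈ Set.Icc (0:ℝ) C ∧ σ n t ∈ V n ∧ σ n t ∉ ⋃ i, E i := by
      intro n
      obtain ⟨x, hx, hxE⟩ := Set.not_subset.1 (hne n)
      obtain ⟨⟨t, ht, rfl⟩, hxV⟩ := hx
      exact ⟨t, ht, hxV, hxE⟩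
    choose τ hτmem hτV hτE using hpt
    obtain ⟨t0, ht0, hconv'⟩ := isCompact_Icc.ultrafilter_le_nhds (U.map τ)
      (by rw [Ultrafilter.coe_map, Filter.le_principal_iff, Filter.mem_map]
          exact Filter.univ_mem' hτmem)
    have hconv : Filter.Tendsto τ (U : Filter ℕ) (nhds t0) := hconv'
    have hxconv : Filter.Tendsto (fun n => σ n (τ n)) (U : Filter ℕ) (nhds (γl t0)) := by
      rw [tendsto_iff_dist_tendsto_zero]
      have hbound : ∀ n, dist (σ n (τ n)) (γl t0) ≤ |τ n - t0| + dist (σ n t0) (γl t0) := by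
        intro n
        refine (dist_triangle _ (σ n t0) _).trans ?_
        gcongr
        have := (hσlip n).dist_le_mul (τ n) t0
        simpa [Real.dist_eq] using this
      refine squeeze_zero (fun n => dist_nonneg) hbound ?_
      have h1 : Filter.Tendsto (fun n => |τ n - t0|) (U : Filter ℕ) (nhds 0) := by
        have h := (hconv.sub_const t0).abs
        simpa using h
      have h2 : Filter.Tendsto (fun n => dist (σ n t0) (γl t0)) (U : Filter ℕ) (nhds 0) :=
        tendsto_iff_dist_tendsto_zero.1 (hγl t0)
      simpa using h1.add h2
    have hU1 : γl t0 ∉ ⋃ i, E i := by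
      have hclosed : IsClosed ((⋃ i, E i)ᶜ) := (isOpen_iUnion hEopen).isClosed_compl
      exact hclosed.mem_of_tendsto hxconv (Filter.Eventually.of_forall hτE)
    have hU2 : γl t0 ∈ M := by
      have hd : Filter.Tendsto (fun n => infDist (σ n (τ n)) M) (U : Filter ℕ)
          (nhds (infDist (γl t0) M)) :=
        ((continuous_infDist_pt M).continuousAt.tendsto.comp hxconv)
      have hb : Filter.Tendsto (fun n : ℕ => 1 / ((n:ℝ) + 1)) (U : Filter ℕ) (nhds 0) :=
        tendsto_one_div_add_atTop_nhds_zero_nat.mono_left hUatTop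
      have hle : infDist (γl t0) M ≤ 0 :=
        le_of_tendsto_of_tendsto' hd hb fun n => hτV n
      have h0 : infDist (γl t0) M = 0 := le_antisymm hle infDist_nonneg
      rwa [← hMcl.mem_iff_infDist_zero hMne] at h0
    exact hU1 (hEcov ⟨⟨t0, ht0, rfl⟩, hU2⟩)
  obtain ⟨n, hn⟩ := hfinal
  have hlt : hausdorffContent (σ n '' Set.Icc 0 C ∩ V n) < ENNReal.ofReal ε :=
    lt_of_le_of_lt (hausdorffContent_le_of_cover hn) hEsum
  exact absurd hlt (not_lt.2 (hcontσ n))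
end

section
/- Let Ω be a convex subset of a Banach space, M ⊆ Ω, p ∈ Ω, and let f : Ω → [0,1] be a Borel function such that lim_{r → 0} sup_{x ∈ [M]_r} f(x) = 0, where [M]_r = {x ∈ Ω : d(x,M) ≤ r}. Define φ_{f,p}(x) := inf_γ ∫_γ f ds, the infimum over all Lipschitz curves γ : [a,b] → Ω with γ(a) = p and γ(b) = x. Then φ_{f,p}(p) = 0 and the restriction of φ_{f,p} to M is a 1-Lipschitz locally flat function. -/
open Metric Set MeasureTheory
open scoped ENNReal NNReal

section CurveInfrastructure

variable {E : Type*} [PseudoMetricSpace E]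

theorem evar_Icc_ne_top {K : ℝ≥0} {γ : ℝ → E} (hγ : LipschitzWith K γ) (s t : ℝ) :
    eVariationOn γ (Set.Icc s t) ≠ ⊤ := by
  have h := (hγ.locallyBoundedVariationOn Set.univ) s t (Set.mem_univ s) (Set.mem_univ t)
  simpa [BoundedVariationOn, Set.univ_inter] using h

theorem evar_Icc_le {K : ℝ≥0} {γ : ℝ → E} (hγ : LipschitzWith K γ) {s t : ℝ} (_hst : s ≤ t) :
    eVariationOn γ (Set.Icc s t) ≤ (K : ℝ≥0∞) * ENNReal.ofReal (t - s) := by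
  have h1 : eVariationOn γ (Set.Icc s t) ≤ (K : ℝ≥0∞) * eVariationOn id (Set.Icc s t) := by
    have := hγ.lipschitzOnWith.comp_eVariationOn_le
      (Set.mapsTo_univ (id : ℝ → ℝ) (Set.Icc s t))
    simpa [Function.comp] using this
  have h2 : eVariationOn (id : ℝ → ℝ) (Set.Icc s t) ≤ ENNReal.ofReal (t - s) := by
    have := (monotoneOn_id (s := (Set.univ : Set ℝ))).eVariationOn_le
      (Set.mem_univ s) (Set.mem_univ t)
    simpa [Set.univ_inter] using this
  exact h1.trans (by gcongr)

/-- The (clamped) variation function of the curve `γ` on `[a,b]`: `t ↦` the total variation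
of `γ` on `[a, max a (min t b)]`. -/
noncomputable def curveVar (γ : ℝ → E) (a b t : ℝ) : ℝ :=
  (eVariationOn γ (Set.Icc a (max a (min t b)))).toReal

theorem curveVar_mono {K : ℝ≥0} {γ : ℝ → E} (hγ : LipschitzWith K γ) (a b : ℝ) :
    Monotone (curveVar γ a b) := by
  intro s t hst
  have hc : max a (min s b) ≤ max a (min t b) :=
    max_le_max le_rfl (min_le_min hst le_rfl)
  exact ENNReal.toReal_mono (evar_Icc_ne_top hγ a _)
    (eVariationOn.mono γ (Set.Icc_subset_Icc le_rfl hc))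

theorem curveVar_lipschitzOnIci {K : ℝ≥0} {γ : ℝ → E} (hγ : LipschitzWith K γ) (a : ℝ) :
    LipschitzOnWith K (fun u => (eVariationOn γ (Set.Icc a u)).toReal) (Set.Ici a) := by
  rw [lipschitzOnWith_iff_dist_le_mul]
  intro u hu v hv
  wlog huv : v ≤ u generalizing u v
  · rw [dist_comm, dist_comm u v]
    exact this v hv u hu (le_of_not_ge huv)
  have hfin1 := evar_Icc_ne_top hγ a u
  have hfin2 := evar_Icc_ne_top hγ a v
  have hfin3 := evar_Icc_ne_top hγ v u
  have key : eVariationOn γ (Set.Icc a v) + eVariationOn γ (Set.Icc v u)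
      = eVariationOn γ (Set.Icc a u) := by
    simpa [Set.univ_inter] using
      eVariationOn.Icc_add_Icc γ (s := (Set.univ : Set ℝ)) hv huv (Set.mem_univ v)
  have hsplit : (eVariationOn γ (Set.Icc a u)).toReal
      = (eVariationOn γ (Set.Icc a v)).toReal + (eVariationOn γ (Set.Icc v u)).toReal := by
    rw [← ENNReal.toReal_add hfin2 hfin3, key]
  have hbound : (eVariationOn γ (Set.Icc v u)).toReal ≤ (K : ℝ) * (u - v) := by
    have h := evar_Icc_le hγ huv
    have := ENNReal.toReal_mono (by finiteness) h
    rwa [ENNReal.toReal_mul, ENNReal.coe_toReal, ENNReal.toReal_ofReal (by linarith)] at this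
  have hmono : (eVariationOn γ (Set.Icc a v)).toReal ≤ (eVariationOn γ (Set.Icc a u)).toReal :=
    ENNReal.toReal_mono hfin1 (eVariationOn.mono γ (Set.Icc_subset_Icc le_rfl huv))
  rw [Real.dist_eq, abs_of_nonneg (by linarith), Real.dist_eq, abs_of_nonneg (by linarith)]
  calc (eVariationOn γ (Set.Icc a u)).toReal - (eVariationOn γ (Set.Icc a v)).toReal
      = (eVariationOn γ (Set.Icc v u)).toReal := by rw [hsplit]; ring
    _ ≤ (K : ℝ) * (u - v) := hbound

theorem curveVar_lipschitz {K : ℝ≥0} {γ : ℝ → E} (hγ : LipschitzWith K γ) (a b : ℝ) :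
    LipschitzWith K (curveVar γ a b) := by
  have hclamp : LipschitzWith 1 (fun t : ℝ => max a (min t b)) :=
    (LipschitzWith.id.min_const b).const_max a
  have hmaps : Set.MapsTo (fun t : ℝ => max a (min t b)) Set.univ (Set.Ici a) :=
    fun t _ => Set.mem_Ici.mpr (le_max_left _ _)
  have hcomp := (curveVar_lipschitzOnIci hγ a).comp
    (hclamp.lipschitzOnWith (s := Set.univ)) hmaps
  rw [← lipschitzOnWith_univ]
  rw [mul_one] at hcomp
  exact hcomp

/-- The variation function of a Lipschitz curve on `[a,b]`, as a Stieltjes function. -/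
noncomputable def curveStieltjes (γ : ℝ → E) (K : ℝ≥0) (hγ : LipschitzWith K γ) (a b : ℝ) :
    StieltjesFunction ℝ where
  toFun := curveVar γ a b
  mono' := curveVar_mono hγ a b
  right_continuous' := fun _ =>
    ((curveVar_lipschitz hγ a b).continuous.continuousAt).continuousWithinAt

/-- The length measure `μ_γ` of a Lipschitz curve `γ` restricted to `[a,b]`: the pushforward
under `γ` of the Lebesgue–Stieltjes measure of the variation function of `γ` on `[a,b]`. -/
noncomputable def curveMeasure [MeasurableSpace E] (γ : ℝ → E) (K : ℝ≥0)
    (hγ : LipschitzWith K γ) (a b : ℝ) : Measure E :=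
  Measure.map γ (curveStieltjes γ K hγ a b).measure

/-- The path integral `∫_γ f ds` of a nonnegative Borel function along a Lipschitz curve. -/
noncomputable def pathLIntegral [MeasurableSpace E] (f : E → ℝ) (γ : ℝ → E) (K : ℝ≥0)
    (hγ : LipschitzWith K γ) (a b : ℝ) : ℝ≥0∞ :=
  ∫⁻ x, ENNReal.ofReal (f x) ∂(curveMeasure γ K hγ a b)

end CurveInfrastructure

section Aux

open Filter

variable {E : Type*} [PseudoMetricSpace E]

theorem curveVar_of_le {γ : ℝ → E} {a b t : ℝ} (hab : a ≤ b) (ht : t ≤ a) :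
    curveVar γ a b t = 0 := by
  have : max a (min t b) = a := by
    rcases min_le_iff.mpr (Or.inl ht) with h
    exact max_eq_left h
  simp [curveVar, this, eVariationOn.subsingleton γ (by simp [Set.Icc_self] : (Set.Icc a a).Subsingleton)]

theorem curveVar_of_mem {γ : ℝ → E} {a b t : ℝ} (ha : a ≤ t) (hb : t ≤ b) :
    curveVar γ a b t = (eVariationOn γ (Set.Icc a t)).toReal := by
  have : max a (min t b) = t := by rw [min_eq_left hb, max_eq_right ha]
  simp [curveVar, this]

theorem curveVar_of_ge {γ : ℝ → E} {a b t : ℝ} (hab : a ≤ b) (ht : b ≤ t) :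
    curveVar γ a b t = (eVariationOn γ (Set.Icc a b)).toReal := by
  have : max a (min t b) = b := by rw [min_eq_right ht, max_eq_right hab]
  simp [curveVar, this]

theorem curveMeasure_Iic {K : ℝ≥0} {γ : ℝ → E} (hγ : LipschitzWith K γ) {a b : ℝ}
    (hab : a ≤ b) : (curveStieltjes γ K hγ a b).measure (Set.Iic a) = 0 := by
  have htendsto : Tendsto (curveStieltjes γ K hγ a b) atBot (nhds 0) := by
    apply Tendsto.congr' _ (tendsto_const_nhds (x := (0:ℝ)))
    filter_upwards [Iic_mem_atBot a] with t ht
    exact (curveVar_of_le hab ht).symm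
  rw [StieltjesFunction.measure_Iic _ htendsto]
  simp [curveVar_of_le hab le_rfl, show (curveStieltjes γ K hγ a b) a = curveVar γ a b a from rfl,
    curveVar_of_le hab le_rfl]

theorem curveMeasure_Ioi {K : ℝ≥0} {γ : ℝ → E} (hγ : LipschitzWith K γ) {a b : ℝ}
    (hab : a ≤ b) : (curveStieltjes γ K hγ a b).measure (Set.Ioi b) = 0 := by
  have hsub : Set.Ioi b ⊆ ⋃ n : ℕ, Set.Ioc b (b + (n + 1)) := by
    intro x hx
    rcases exists_nat_ge (x - b) with ⟨n, hn⟩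
    exact Set.mem_iUnion.mpr ⟨n, hx, by push_cast; linarith⟩
  refine le_antisymm ?_ zero_le
  refine le_trans (measure_mono hsub) (le_trans (measure_iUnion_le _) ?_)
  have : ∀ n : ℕ, (curveStieltjes γ K hγ a b).measure (Set.Ioc b (b + (n + 1))) = 0 := by
    intro n
    rw [StieltjesFunction.measure_Ioc]
    have h1 : (curveStieltjes γ K hγ a b) (b + (n + 1)) = (eVariationOn γ (Set.Icc a b)).toReal :=
      curveVar_of_ge hab (le_add_of_nonneg_right (by positivity))
    have h2 : (curveStieltjes γ K hγ a b) b = (eVariationOn γ (Set.Icc a b)).toReal :=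
      curveVar_of_ge hab le_rfl
    simp [h1, h2]
  simp [this]

theorem pathLIntegral_eq [MeasurableSpace E] [BorelSpace E] {f : E → ℝ} (hf : Measurable f)
    {K : ℝ≥0} {γ : ℝ → E} (hγ : LipschitzWith K γ) (a b : ℝ) :
    pathLIntegral f γ K hγ a b
      = ∫⁻ t, ENNReal.ofReal (f (γ t)) ∂(curveStieltjes γ K hγ a b).measure := by
  unfold pathLIntegral curveMeasure
  exact lintegral_map hf.ennreal_ofReal hγ.continuous.measurable

/-- If `f ∘ γ ≤ ε` on `[a,b]`, then the path integral is at most `ε * K * (b - a)`. -/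
theorem pathLIntegral_le [MeasurableSpace E] [BorelSpace E] {f : E → ℝ} (hf : Measurable f)
    {K : ℝ≥0} {γ : ℝ → E} (hγ : LipschitzWith K γ) {a b : ℝ} (hab : a ≤ b)
    {ε : ℝ} (hε : 0 ≤ ε) (hfb : ∀ t ∈ Set.Icc a b, f (γ t) ≤ ε) :
    pathLIntegral f γ K hγ a b ≤ ENNReal.ofReal ε * ((K : ℝ≥0∞) * ENNReal.ofReal (b - a)) := by
  rw [pathLIntegral_eq hf hγ a b]
  set ν := (curveStieltjes γ K hγ a b).measure with hν
  have hcompl : ν ((Set.Icc a b)ᶜ) = 0 := by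
    have : (Set.Icc a b)ᶜ ⊆ Set.Iic a ∪ Set.Ioi b := by
      intro x hx
      simp only [Set.mem_compl_iff, Set.mem_Icc, not_and_or, not_le] at hx
      rcases hx with h | h
      · exact Or.inl (le_of_lt h)
      · exact Or.inr h
    refine le_antisymm (le_trans (measure_mono this) ?_) zero_le
    refine le_trans (measure_union_le _ _) ?_
    rw [curveMeasure_Iic hγ hab, curveMeasure_Ioi hγ hab]; simp
  rw [← lintegral_add_compl (fun t => ENNReal.ofReal (f (γ t))) measurableSet_Icc (μ := ν)]
  have h2 : ∫⁻ t in (Set.Icc a b)ᶜ, ENNReal.ofReal (f (γ t)) ∂ν = 0 := by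
    rw [Measure.restrict_eq_zero.mpr hcompl]; simp
  rw [h2, add_zero]
  calc ∫⁻ t in Set.Icc a b, ENNReal.ofReal (f (γ t)) ∂ν
      ≤ ∫⁻ _ in Set.Icc a b, ENNReal.ofReal ε ∂ν := by
        refine setLIntegral_mono' measurableSet_Icc fun t ht => ?_
        exact ENNReal.ofReal_le_ofReal (hfb t ht)
    _ = ENNReal.ofReal ε * ν (Set.Icc a b) := by rw [setLIntegral_const, mul_comm]
    _ ≤ ENNReal.ofReal ε * ((K : ℝ≥0∞) * ENNReal.ofReal (b - a)) := by
        refine mul_le_mul_right ?_ _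
        have hsub : Set.Icc a b ⊆ Set.Ioc (a - 1) b := fun x hx => ⟨by linarith [hx.1], hx.2⟩
        refine le_trans (measure_mono hsub) ?_
        rw [StieltjesFunction.measure_Ioc]
        have h1 : (curveStieltjes γ K hγ a b) b = (eVariationOn γ (Set.Icc a b)).toReal :=
          curveVar_of_ge hab le_rfl
        have h0 : (curveStieltjes γ K hγ a b) (a - 1) = 0 := curveVar_of_le hab (by linarith)
        rw [h1, h0, sub_zero, ENNReal.ofReal_toReal (evar_Icc_ne_top hγ a b)]
        exact evar_Icc_le hγ hab

end Aux

section Aux2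

open Filter

/-- Two Stieltjes functions that agree on `Iic b` have the same measure there. -/
theorem stieltjes_restrict_Iic_eq {F G : StieltjesFunction ℝ} {b : ℝ}
    (h : ∀ t ≤ b, F t = G t) :
    F.measure.restrict (Set.Iic b) = G.measure.restrict (Set.Iic b) := by
  refine MeasureTheory.Measure.ext_of_Ioc' _ _ (fun s t hst => ?_) (fun s t hst => ?_)
  · rw [Measure.restrict_apply measurableSet_Ioc]
    exact ne_top_of_le_ne_top (by simp [StieltjesFunction.measure_Ioc])
      (measure_mono Set.inter_subset_left)
  · rw [Measure.restrict_apply measurableSet_Ioc, Measure.restrict_apply measurableSet_Ioc]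
    have hint : Set.Ioc s t ∩ Set.Iic b = Set.Ioc s (min t b) := by
      ext x; simp [Set.mem_Ioc, Set.mem_Iic, and_assoc, le_min_iff]
    rw [hint]
    by_cases hsb : s ≤ b
    · rw [StieltjesFunction.measure_Ioc, StieltjesFunction.measure_Ioc,
        h _ (min_le_right t b), h _ hsb]
    · rw [Set.Ioc_eq_empty (by push_neg at hsb; exact not_lt.mpr ((min_le_right t b).trans hsb.le))]
      simp

/-- Two Stieltjes functions that differ by a constant on `Ici b` have the same measure on
`Ioi b`. -/
theorem stieltjes_restrict_Ioi_eq {F G : StieltjesFunction ℝ} {b c : ℝ}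
    (h : ∀ t, b ≤ t → F t = G t + c) :
    F.measure.restrict (Set.Ioi b) = G.measure.restrict (Set.Ioi b) := by
  refine MeasureTheory.Measure.ext_of_Ioc' _ _ (fun s t hst => ?_) (fun s t hst => ?_)
  · rw [Measure.restrict_apply measurableSet_Ioc]
    exact ne_top_of_le_ne_top (by simp [StieltjesFunction.measure_Ioc])
      (measure_mono Set.inter_subset_left)
  · rw [Measure.restrict_apply measurableSet_Ioc, Measure.restrict_apply measurableSet_Ioc]
    have hint : Set.Ioc s t ∩ Set.Ioi b = Set.Ioc (max s b) t := by
      ext x; simp only [Set.mem_inter_iff, Set.mem_Ioc, Set.mem_Ioi, max_lt_iff]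
      tauto
    rw [hint]
    by_cases htb : b ≤ t
    · rw [StieltjesFunction.measure_Ioc, StieltjesFunction.measure_Ioc,
        h _ htb, h _ (le_max_right s b)]
      ring_nf
    · rw [Set.Ioc_eq_empty (by push_neg at htb; exact not_lt.mpr (htb.le.trans (le_max_right s b)))]
      simp

variable {E : Type*} [PseudoMetricSpace E]

/-- Lipschitz property of the gluing of two Lipschitz curves agreeing at `b`. -/
theorem concat_lipschitz {K₁ K₂ : ℝ≥0} {γ σ : ℝ → E} (hγ : LipschitzWith K₁ γ)
    (hσ : LipschitzWith K₂ σ) {b : ℝ} (hb : γ b = σ b) :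
    LipschitzWith (K₁ ⊔ K₂) (fun t => if t ≤ b then γ t else σ t) := by
  have key : ∀ s t : ℝ, s ≤ t →
      dist (if s ≤ b then γ s else σ s) (if t ≤ b then γ t else σ t)
        ≤ (K₁ ⊔ K₂ : ℝ≥0) * dist s t := by
    intro s t hst
    by_cases hs : s ≤ b <;> by_cases ht : t ≤ b
    · simp only [if_pos hs, if_pos ht]
      exact (hγ.dist_le_mul s t).trans (by gcongr; exact le_max_left _ _)
    · push_neg at ht
      simp only [if_pos hs, if_neg (not_le.mpr ht)]
      calc dist (γ s) (σ t) ≤ dist (γ s) (γ b) + dist (σ b) (σ t) := by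
            rw [hb]; exact dist_triangle _ _ _
        _ ≤ K₁ * dist s b + K₂ * dist b t := by
            gcongr; exacts [hγ.dist_le_mul s b, hσ.dist_le_mul b t]
        _ ≤ (K₁ ⊔ K₂ : ℝ≥0) * dist s b + (K₁ ⊔ K₂ : ℝ≥0) * dist b t := by
            gcongr <;> [exact_mod_cast le_max_left K₁ K₂; exact_mod_cast le_max_right K₁ K₂]
        _ = (K₁ ⊔ K₂ : ℝ≥0) * (dist s b + dist b t) := by ring
        _ = (K₁ ⊔ K₂ : ℝ≥0) * dist s t := by
            rw [Real.dist_eq, Real.dist_eq, Real.dist_eq,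
              abs_of_nonpos (by linarith), abs_of_nonpos (by linarith),
              abs_of_nonpos (by linarith)]
            ring
    · linarith [hst.trans ht]
    · push_neg at hs
      simp only [if_neg (not_le.mpr hs), if_neg ht]
      exact (hσ.dist_le_mul s t).trans (by gcongr; exact le_max_right _ _)
  refine LipschitzWith.of_dist_le_mul fun s t => ?_
  rcases le_total s t with h | h
  · exact key s t h
  · rw [dist_comm, dist_comm s t]; exact key t s h

/-- Splitting the path integral of a concatenated curve. -/
theorem pathLIntegral_concat [MeasurableSpace E] [BorelSpace E] {f : E → ℝ} (hf : Measurable f)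
    {K₁ K₂ : ℝ≥0} {γ σ : ℝ → E} (hγ : LipschitzWith K₁ γ) (hσ : LipschitzWith K₂ σ)
    {a b c : ℝ} (hab : a ≤ b) (hbc : b ≤ c) (hb : γ b = σ b)
    (hη : LipschitzWith (K₁ ⊔ K₂) (fun t => if t ≤ b then γ t else σ t)) :
    pathLIntegral f (fun t => if t ≤ b then γ t else σ t) (K₁ ⊔ K₂) hη a c
      ≤ pathLIntegral f γ K₁ hγ a b + pathLIntegral f σ K₂ hσ b c := by
  set η : ℝ → E := fun t => if t ≤ b then γ t else σ t with hηdef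
  have hEqγ : Set.EqOn η γ (Set.Iic b) := fun t ht => if_pos ht
  have hEqσ : Set.EqOn η σ (Set.Ici b) := by
    intro t ht
    rcases eq_or_lt_of_le (Set.mem_Ici.mp ht) with h | h
    · simp only [hηdef, ← h, if_pos le_rfl, hb]
    · simp [hηdef, if_neg (not_le.mpr h)]
  -- the Stieltjes functions agree appropriately
  have hFγ : ∀ t ≤ b, (curveStieltjes η (K₁ ⊔ K₂) hη a c) t = (curveStieltjes γ K₁ hγ a b) t := by
    intro t ht
    show curveVar η a c t = curveVar γ a b t
    have hmm : max a (min t c) = max a (min t b) := by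
      rw [min_eq_left (ht.trans hbc), min_eq_left ht]
    unfold curveVar
    rw [hmm]
    have hsub : Set.Icc a (max a (min t b)) ⊆ Set.Iic b := fun x hx =>
      hx.2.trans (max_le hab ((min_le_right t b).trans le_rfl))
    exact congrArg ENNReal.toReal (eVariationOn.eq_of_eqOn (hEqγ.mono hsub))
  have hfin : eVariationOn η (Set.Icc a b) ≠ ⊤ := evar_Icc_ne_top hη a b
  have hFσ : ∀ t, b ≤ t → (curveStieltjes η (K₁ ⊔ K₂) hη a c) t
      = (curveStieltjes σ K₂ hσ b c) t + (eVariationOn η (Set.Icc a b)).toReal := by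
    intro t ht
    show curveVar η a c t = curveVar σ b c t + _
    set u := min t c with hu
    have hbu : b ≤ u := le_min ht hbc
    have hmm : max a (min t c) = u := max_eq_right (hab.trans hbu)
    have hmm2 : max b (min t c) = u := max_eq_right hbu
    unfold curveVar
    rw [hmm, hmm2]
    have hsplit : eVariationOn η (Set.Icc a b) + eVariationOn η (Set.Icc b u)
        = eVariationOn η (Set.Icc a u) := by
      simpa [Set.univ_inter] using
        eVariationOn.Icc_add_Icc η (s := (Set.univ : Set ℝ)) hab hbu (Set.mem_univ b)
    have hσu : eVariationOn η (Set.Icc b u) = eVariationOn σ (Set.Icc b u) :=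
      eVariationOn.eq_of_eqOn (hEqσ.mono (fun x hx => hx.1))
    rw [← hsplit, ENNReal.toReal_add hfin (by rw [hσu]; exact evar_Icc_ne_top hσ b u), hσu]
    ring
  -- split the integral
  rw [pathLIntegral_eq hf hη a c, pathLIntegral_eq hf hγ a b, pathLIntegral_eq hf hσ b c]
  rw [← lintegral_add_compl (fun t => ENNReal.ofReal (f (η t))) (measurableSet_Iic (a := b))
    (μ := (curveStieltjes η (K₁ ⊔ K₂) hη a c).measure)]
  have hc1 : ∫⁻ t in Set.Iic b, ENNReal.ofReal (f (η t))
      ∂(curveStieltjes η (K₁ ⊔ K₂) hη a c).measure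
      ≤ ∫⁻ t, ENNReal.ofReal (f (γ t)) ∂(curveStieltjes γ K₁ hγ a b).measure := by
    rw [stieltjes_restrict_Iic_eq hFγ]
    calc ∫⁻ t in Set.Iic b, ENNReal.ofReal (f (η t)) ∂(curveStieltjes γ K₁ hγ a b).measure
        = ∫⁻ t in Set.Iic b, ENNReal.ofReal (f (γ t))
            ∂(curveStieltjes γ K₁ hγ a b).measure := by
          refine setLIntegral_congr_fun measurableSet_Iic ?_
          intro t ht; simp only [hEqγ ht]
      _ ≤ _ := setLIntegral_le_lintegral _ _
  have hc2 : ∫⁻ t in (Set.Iic b)ᶜ, ENNReal.ofReal (f (η t))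
      ∂(curveStieltjes η (K₁ ⊔ K₂) hη a c).measure
      ≤ ∫⁻ t, ENNReal.ofReal (f (σ t)) ∂(curveStieltjes σ K₂ hσ b c).measure := by
    rw [Set.compl_Iic, stieltjes_restrict_Ioi_eq hFσ]
    calc ∫⁻ t in Set.Ioi b, ENNReal.ofReal (f (η t)) ∂(curveStieltjes σ K₂ hσ b c).measure
        = ∫⁻ t in Set.Ioi b, ENNReal.ofReal (f (σ t))
            ∂(curveStieltjes σ K₂ hσ b c).measure := by
          refine setLIntegral_congr_fun measurableSet_Ioi ?_
          intro t ht; simp only [hEqσ (Set.mem_Ici.mpr (le_of_lt ht))]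
      _ ≤ _ := setLIntegral_le_lintegral _ _
  exact add_le_add hc1 hc2

end Aux2


/-- `φ_{f,p}(x) = inf_γ ∫_γ f ds`, the infimum over all Lipschitz curves `γ : [a,b] → Ω`
joining `p` to `x` (as an extended nonnegative real). -/
noncomputable def phiENN {X : Type*} [NormedAddCommGroup X] [NormedSpace ℝ X]
    [MeasurableSpace X] (Ω : Set X) (f : X → ℝ) (p x : X) : ℝ≥0∞ :=
  ⨅ (a : ℝ) (b : ℝ) (_ : a ≤ b) (γ : ℝ → X) (K : ℝ≥0) (hγ : LipschitzWith K γ)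
    (_ : γ '' Set.Icc a b ⊆ Ω) (_ : γ a = p) (_ : γ b = x),
    pathLIntegral f γ K hγ a b

/-- The real-valued function `φ_{f,p}`. -/
noncomputable def phiFn {X : Type*} [NormedAddCommGroup X] [NormedSpace ℝ X]
    [MeasurableSpace X] (Ω : Set X) (f : X → ℝ) (p : X) : X → ℝ :=
  fun x => (phiENN Ω f p x).toReal

section Aux3

variable {X : Type*} [NormedAddCommGroup X] [NormedSpace ℝ X]

theorem seg_mem_segment (x y : X) {s : ℝ} (hs : s ∈ Set.Icc (0:ℝ) 1) :
    y + s • (x - y) ∈ segment ℝ y x := by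
  refine ⟨1 - s, s, by linarith [hs.2], hs.1, by linarith, ?_⟩
  rw [sub_smul, one_smul, smul_sub]; abel

theorem seg_lipschitz (x y b : X) (c : ℝ) :
    LipschitzWith ‖x - y‖₊ (fun t : ℝ => b + (t - c) • (x - y)) := by
  refine LipschitzWith.of_dist_le_mul fun s t => ?_
  rw [dist_eq_norm]
  have h : b + (s - c) • (x - y) - (b + (t - c) • (x - y)) = (s - t) • (x - y) := by
    module
  rw [h, norm_smul, Real.norm_eq_abs, Real.dist_eq, coe_nnnorm, mul_comm]

theorem phiENN_triangle [MeasurableSpace X] [BorelSpace X]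
    {Ω : Set X} {f : X → ℝ} {p : X} (hf : Measurable f)
    {x y : X} (hsegΩ : segment ℝ y x ⊆ Ω) {ε : ℝ} (hε : 0 ≤ ε)
    (hseg : ∀ z ∈ segment ℝ y x, f z ≤ ε) :
    phiENN Ω f p x ≤ phiENN Ω f p y + ENNReal.ofReal ε * ENNReal.ofReal ‖x - y‖ := by
  unfold phiENN
  simp only [ENNReal.iInf_add]
  refine le_iInf fun a => le_iInf fun b => le_iInf fun hab => le_iInf fun γ => le_iInf fun K =>
    le_iInf fun hγ => le_iInf fun himg => le_iInf fun ha => le_iInf fun hy => ?_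
  set σ : ℝ → X := fun t => γ b + (t - b) • (x - y) with hσdef
  have hσL : LipschitzWith ‖x - y‖₊ σ := seg_lipschitz x y (γ b) b
  have hσb : γ b = σ b := by simp [hσdef]
  have hσseg : ∀ t ∈ Set.Icc b (b + 1), σ t ∈ segment ℝ y x := by
    intro t ht
    have : σ t = y + (t - b) • (x - y) := by rw [hσdef]; simp [hy]
    rw [this]
    exact seg_mem_segment x y ⟨by linarith [ht.1], by linarith [ht.2]⟩
  set η : ℝ → X := fun t => if t ≤ b then γ t else σ t with hηdef
  have hη : LipschitzWith (K ⊔ ‖x - y‖₊) η := concat_lipschitz hγ hσL hσb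
  have himg' : η '' Set.Icc a (b + 1) ⊆ Ω := by
    rintro _ ⟨t, ht, rfl⟩
    by_cases htb : t ≤ b
    · have : η t = γ t := if_pos htb
      rw [this]
      exact himg ⟨t, ⟨ht.1, htb⟩, rfl⟩
    · have : η t = σ t := if_neg htb
      rw [this]
      exact hsegΩ (hσseg t ⟨le_of_not_ge htb, ht.2⟩)
  have ha' : η a = p := by
    show (if a ≤ b then γ a else σ a) = p
    rw [if_pos hab, ha]
  have hb' : η (b + 1) = x := by
    show (if b + 1 ≤ b then γ (b+1) else σ (b+1)) = x
    rw [if_neg (by linarith), hσdef]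
    simp only [add_sub_cancel_left, one_smul, hy]
    abel
  calc phiENN Ω f p x
      ≤ pathLIntegral f η (K ⊔ ‖x - y‖₊) hη a (b + 1) := by
        unfold phiENN
        exact iInf_le_of_le a <| iInf_le_of_le (b+1) <| iInf_le_of_le (by linarith) <|
          iInf_le_of_le η <| iInf_le_of_le (K ⊔ ‖x - y‖₊) <| iInf_le_of_le hη <|
          iInf_le_of_le himg' <| iInf_le_of_le ha' <| iInf_le_of_le hb' le_rfl
    _ ≤ pathLIntegral f γ K hγ a b + pathLIntegral f σ ‖x - y‖₊ hσL b (b + 1) :=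
        pathLIntegral_concat hf hγ hσL hab (by linarith) hσb hη
    _ ≤ pathLIntegral f γ K hγ a b + ENNReal.ofReal ε * ENNReal.ofReal ‖x - y‖ := by
        refine add_le_add le_rfl ?_
        refine le_trans (pathLIntegral_le hf hσL (by linarith) hε
          (fun t ht => hseg _ (hσseg t ht))) ?_
        rw [show b + 1 - b = (1:ℝ) by ring, ENNReal.ofReal_one, mul_one,
          ofReal_norm, enorm_eq_nnnorm]

end Aux3


/-- `f` is *locally flat on `S`*: for every `p ∈ S` and `ε > 0` there is `δ > 0` such that
`|f x - f y| ≤ ε * d(x,y)` for all `x, y ∈ S` within distance `δ` of `p`. -/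
def LocallyFlatOn {X : Type*} [PseudoMetricSpace X] (f : X → ℝ) (S : Set X) : Prop :=
  ∀ p ∈ S, ∀ ε : ℝ, 0 < ε → ∃ δ : ℝ, 0 < δ ∧ ∀ x ∈ S, ∀ y ∈ S,
    dist x p < δ → dist y p < δ → |f x - f y| ≤ ε * dist x y

/-- Let `Ω` be a convex subset of a Banach space, `M ⊆ Ω`, `p ∈ Ω`, and let
`f : Ω → [0,1]` be Borel with `lim_{r → 0} sup_{x ∈ [M]_r} f x = 0`. Then `φ_{f,p}(p) = 0`
and the restriction of `φ_{f,p}` to `M` is a 1-Lipschitz locally flat function. -/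
theorem phi_locallyFlat_on
    {X : Type*} [NormedAddCommGroup X] [NormedSpace ℝ X] [CompleteSpace X]
    [MeasurableSpace X] [BorelSpace X]
    (Ω : Set X) (hΩ : Convex ℝ Ω) (M : Set X) (hMΩ : M ⊆ Ω) (p : X) (hp : p ∈ Ω)
    (f : X → ℝ) (hmeas : Measurable f) (hrange : ∀ x : X, f x ∈ Set.Icc (0:ℝ) 1)
    (hflat : ∀ ε : ℝ, 0 < ε → ∃ r : ℝ, 0 < r ∧
      ∀ x ∈ Ω, (∃ m ∈ M, dist x m ≤ r) → f x ≤ ε) :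
    phiFn Ω f p p = 0 ∧ LipschitzOnWith 1 (phiFn Ω f p) M ∧
      LocallyFlatOn (phiFn Ω f p) M := by
  -- φ(p) = 0
  have hΦp : phiENN Ω f p p = 0 := by
    refine le_antisymm ?_ zero_le
    have hle : phiENN Ω f p p ≤ pathLIntegral f (fun _ => p) 0 (LipschitzWith.const p) 0 0 := by
      unfold phiENN
      exact iInf_le_of_le 0 <| iInf_le_of_le 0 <| iInf_le_of_le le_rfl <|
        iInf_le_of_le (fun _ => p) <| iInf_le_of_le 0 <|
        iInf_le_of_le (LipschitzWith.const p) <|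
        iInf_le_of_le (by rintro _ ⟨t, _, rfl⟩; exact hp) <|
        iInf_le_of_le rfl <| iInf_le_of_le rfl le_rfl
    refine le_trans hle (le_trans (pathLIntegral_le hmeas (LipschitzWith.const p) le_rfl
      zero_le_one (fun t _ => (hrange p).2)) ?_)
    simp
  -- finiteness on Ω
  have hΦfin : ∀ x ∈ Ω, phiENN Ω f p x ≠ ⊤ := by
    intro x hx
    have h := phiENN_triangle (Ω := Ω) (p := p) hmeas (hΩ.segment_subset hp hx)
      zero_le_one (fun z _ => (hrange z).2)
    rw [hΦp, zero_add, ENNReal.ofReal_one, one_mul] at h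
    exact ne_top_of_le_ne_top ENNReal.ofReal_ne_top h
  -- key real inequality
  have key : ∀ ε : ℝ, 0 ≤ ε → ∀ x ∈ M, ∀ y ∈ M, (∀ z ∈ segment ℝ y x, f z ≤ ε) →
      phiFn Ω f p x ≤ phiFn Ω f p y + ε * ‖x - y‖ := by
    intro ε hε x hx y hy hseg
    have h := phiENN_triangle (Ω := Ω) (p := p) hmeas
      (hΩ.segment_subset (hMΩ hy) (hMΩ hx)) hε hseg
    have hfy : phiENN Ω f p y ≠ ⊤ := hΦfin y (hMΩ hy)
    have hC : ENNReal.ofReal ε * ENNReal.ofReal ‖x - y‖ ≠ ⊤ :=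
      ENNReal.mul_ne_top ENNReal.ofReal_ne_top ENNReal.ofReal_ne_top
    have := ENNReal.toReal_mono (ENNReal.add_ne_top.mpr ⟨hfy, hC⟩) h
    rw [ENNReal.toReal_add hfy hC, ENNReal.toReal_mul, ENNReal.toReal_ofReal hε,
      ENNReal.toReal_ofReal (norm_nonneg _)] at this
    exact this
  have hdistseg : ∀ x y z : X, z ∈ segment ℝ y x → dist z y ≤ ‖x - y‖ := by
    rintro x y _ ⟨u, v, hu, hv, huv, rfl⟩
    rw [dist_eq_norm]
    have h : u • y + v • x - y = v • (x - y) := by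
      have hu1 : u = 1 - v := by linarith
      rw [hu1]; module
    rw [h, norm_smul, Real.norm_eq_abs, abs_of_nonneg hv]
    nlinarith [norm_nonneg (x - y)]
  refine ⟨by simp [phiFn, hΦp], ?_, ?_⟩
  · -- 1-Lipschitz on M
    rw [lipschitzOnWith_iff_dist_le_mul]
    intro x hx y hy
    rw [Real.dist_eq, NNReal.coe_one, one_mul]
    have h1 := key 1 zero_le_one x hx y hy (fun z _ => (hrange z).2)
    have h2 := key 1 zero_le_one y hy x hx (fun z _ => (hrange z).2)
    rw [one_mul] at h1 h2
    rw [abs_sub_le_iff]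
    constructor
    · rw [dist_eq_norm]; linarith
    · rw [dist_eq_norm, ← norm_sub_rev]; linarith
  · -- locally flat
    intro q hq ε hε
    obtain ⟨r, hr, hfr⟩ := hflat ε hε
    refine ⟨r / 2, by linarith, ?_⟩
    intro x hx y hy hxq hyq
    have hnorm : ‖x - y‖ < r := by
      calc ‖x - y‖ = dist x y := (dist_eq_norm x y).symm
        _ ≤ dist x q + dist q y := dist_triangle x q y
        _ < r / 2 + r / 2 := by rw [dist_comm q y]; exact add_lt_add hxq hyq
        _ = r := by ring
    have hsegxy : ∀ z ∈ segment ℝ y x, f z ≤ ε := by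
      intro z hz
      refine hfr z (hΩ.segment_subset (hMΩ hy) (hMΩ hx) hz) ⟨y, hy, ?_⟩
      exact le_trans (hdistseg x y z hz) (le_of_lt hnorm)
    have hsegyx : ∀ z ∈ segment ℝ x y, f z ≤ ε := by
      intro z hz
      refine hfr z (hΩ.segment_subset (hMΩ hx) (hMΩ hy) hz) ⟨x, hx, ?_⟩
      refine le_trans (hdistseg y x z hz) ?_
      rw [norm_sub_rev]; exact le_of_lt hnorm
    have h1 := key ε (le_of_lt hε) x hx y hy hsegxy
    have h2 := key ε (le_of_lt hε) y hy x hx hsegyx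
    rw [abs_sub_le_iff]
    constructor
    · rw [dist_eq_norm]; linarith
    · have : ‖y - x‖ = ‖x - y‖ := norm_sub_rev y x
      rw [this] at h2
      rw [dist_eq_norm]; linarith
end

section
/- Let (M,d) be a proper metric space (every closed ball is compact) with a distinguished base point 0 ∈ M, and assume M is purely 1-unrectifiable. Then for every p, q ∈ M and every δ > 0 there exists a function f : M → ℝ with f(0) = 0 such that f is 1-Lipschitz, locally flat, flat at infinity, and f(q) − f(p) ≥ d(p,q) − δ. -/
open Metric Set MeasureTheory
open scoped ENNReal NNReal

/-- A Lipschitz function `f : M → ℝ` is *locally flat* if for every point `p` and every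
`ε > 0` there is `δ > 0` such that `|f x - f y| ≤ ε * d(x,y)` whenever `x, y` are within
distance `δ` of `p`. -/
def LocallyFlat {M : Type*} [MetricSpace M] (f : M → ℝ) : Prop :=
  ∀ p : M, ∀ ε : ℝ, 0 < ε → ∃ δ : ℝ, 0 < δ ∧ ∀ x y : M,
    dist x p < δ → dist y p < δ → |f x - f y| ≤ ε * dist x y

/-- A function `f : M → ℝ` is *flat at infinity* (with respect to the base point `z`) if for
every `ε > 0` there is `r > 0` such that `|f x - f y| ≤ ε * d(x,y)` whenever
`d(x,z) ≥ r` and `d(y,z) ≥ r`. -/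
def FlatAtInfinity {M : Type*} [MetricSpace M] (z : M) (f : M → ℝ) : Prop :=
  ∀ ε : ℝ, 0 < ε → ∃ r : ℝ, 0 < r ∧ ∀ x y : M,
    r ≤ dist x z → r ≤ dist y z → |f x - f y| ≤ ε * dist x y

/-- A metric space `M` is *purely 1-unrectifiable* if for every `A ⊆ ℝ` and every Lipschitz
map `f : A → M`, the 1-dimensional Hausdorff measure of `f(A)` is zero. -/
def Purely1Unrectifiable (M : Type*) [MetricSpace M] [MeasurableSpace M] [BorelSpace M] :
    Prop :=
  ∀ (A : Set ℝ) (f : ℝ → M) (K : ℝ≥0), LipschitzOnWith K f A → μH[1] (f '' A) = 0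


open Filter Topology

section Chains
variable {M : Type*} [MetricSpace M]

/-- cost of a chain `x 0, x 1, ..., x m` under gauge `c` -/
def LLFccost (c : M → M → ℝ) (m : ℕ) (x : ℕ → M) : ℝ :=
  ∑ i ∈ Finset.range m, c (x i) (x (i+1))

/-- prefix length of a chain -/
def LLFplen (x : ℕ → M) (i : ℕ) : ℝ :=
  ∑ j ∈ Finset.range i, dist (x j) (x (j+1))

lemma LLFplen_mono (x : ℕ → M) {i j : ℕ} (h : i ≤ j) : LLFplen x i ≤ LLFplen x j := by
  apply Finset.sum_le_sum_of_subset_of_nonneg (Finset.range_subset_range.2 h)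
  intros; positivity

lemma LLFplen_succ (x : ℕ → M) (i : ℕ) :
    LLFplen x (i+1) = LLFplen x i + dist (x i) (x (i+1)) :=
  Finset.sum_range_succ _ _

lemma LLFdist_le_plen (x : ℕ → M) {i j : ℕ} (h : i ≤ j) :
    dist (x i) (x j) ≤ LLFplen x j - LLFplen x i := by
  induction j, h using Nat.le_induction with
  | base => simp
  | succ k hk ih =>
      calc dist (x i) (x (k+1)) ≤ dist (x i) (x k) + dist (x k) (x (k+1)) := dist_triangle _ _ _
      _ ≤ (LLFplen x k - LLFplen x i) + dist (x k) (x (k+1)) := by linarith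
      _ = LLFplen x (k+1) - LLFplen x i := by rw [LLFplen_succ]; ring

lemma LLFdist_le_plen' (x : ℕ → M) {i : ℕ} :
    dist (x 0) (x i) ≤ LLFplen x i := by
  have h := LLFdist_le_plen x (Nat.zero_le i)
  have h0 : LLFplen x 0 = 0 := by simp [LLFplen]
  rw [h0] at h
  linarith

lemma LLFccost_nonneg {c : M → M → ℝ} (h : ∀ a b, 0 ≤ c a b) (m : ℕ) (x : ℕ → M) :
    0 ≤ LLFccost c m x :=
  Finset.sum_nonneg fun _ _ => h _ _

lemma LLFccost_mono {c c' : M → M → ℝ} (h : ∀ a b, c' a b ≤ c a b) (m : ℕ) (x : ℕ → M) :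
    LLFccost c' m x ≤ LLFccost c m x :=
  Finset.sum_le_sum fun _ _ => h _ _

lemma LLFmul_plen_le_ccost {c : M → M → ℝ} {ε : ℝ} (h : ∀ a b, ε * dist a b ≤ c a b)
    (m : ℕ) (x : ℕ → M) : ε * LLFplen x m ≤ LLFccost c m x := by
  rw [LLFplen, Finset.mul_sum]
  exact Finset.sum_le_sum fun i _ => h _ _

/-- cost of the 2-step chain prepended -/
lemma LLFccost_prepend2 (c : M → M → ℝ) (m : ℕ) (x : ℕ → M) (v₀ v₁ : M) :
    LLFccost c (m+2) (fun i => match i with | 0 => v₀ | 1 => v₁ | (i+2) => x i)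
      = c v₀ v₁ + c v₁ (x 0) + LLFccost c m x := by
  rw [LLFccost, Finset.sum_range_succ', Finset.sum_range_succ']
  simp only [LLFccost]
  ring

end Chains

section Ulim
variable (U : Ultrafilter ℕ)

/-- limit of a bounded real sequence along an ultrafilter -/
lemma LLFtendsto_ulim {f : ℕ → ℝ} {C : ℝ} (h : ∀ n, f n ∈ Set.Icc (-C) C) :
    Tendsto f U (𝓝 (limUnder (U : Filter ℕ) f)) := by
  have hle : (U.map f : Filter ℝ) ≤ Filter.principal (Set.Icc (-C) C) := by
    rw [Filter.le_principal_iff]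
    exact Filter.eventually_map.2 (Filter.Eventually.of_forall h)
  obtain ⟨x, -, hx⟩ := (isCompact_Icc (a := -C) (b := C)).ultrafilter_le_nhds (U.map f) hle
  have hx' : Tendsto f U (𝓝 x) := hx
  rwa [hx'.limUnder_eq]

lemma LLFtendsto_ulim2 (U : Ultrafilter ℕ) {f : ℕ → ℝ} {lo hi : ℝ}
    (h : ∀ n, f n ∈ Set.Icc lo hi) :
    Tendsto f U (𝓝 (limUnder (U : Filter ℕ) f)) := by
  have hle : (U.map f : Filter ℝ) ≤ Filter.principal (Set.Icc lo hi) := by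
    rw [Filter.le_principal_iff]
    exact Filter.eventually_map.2 (Filter.Eventually.of_forall h)
  obtain ⟨x, -, hx⟩ := (isCompact_Icc (a := lo) (b := hi)).ultrafilter_le_nhds (U.map f) hle
  have hx' : Tendsto f U (𝓝 x) := hx
  rwa [hx'.limUnder_eq]

lemma LLFtendsto_ulimM {M : Type*} [MetricSpace M] [Nonempty M] {s : Set M} (hs : IsCompact s)
    {f : ℕ → M} (h : ∀ n, f n ∈ s) :
    Tendsto f U (𝓝 (limUnder (U : Filter ℕ) f)) := by
  have hle : (U.map f : Filter M) ≤ Filter.principal s := by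
    rw [Filter.le_principal_iff]
    exact Filter.eventually_map.2 (Filter.Eventually.of_forall h)
  obtain ⟨x, -, hx⟩ := hs.ultrafilter_le_nhds (U.map f) hle
  have hx' : Tendsto f U (𝓝 x) := hx
  rwa [hx'.limUnder_eq]

end Ulim


section Cover
variable {M : Type*} [MetricSpace M] [MeasurableSpace M] [BorelSpace M] [Nonempty M]

lemma LLFexists_cover_of_null {S : Set M} (hS : IsCompact S) (h0 : μH[1] S = 0)
    {η : ℝ} (hη : 0 < η) :
    ∃ (A : Finset ℕ) (y : ℕ → M) (r : ℕ → ℝ), (∀ k, 0 < r k) ∧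
      (∀ x ∈ S, ∃ k ∈ A, x ∈ ball (y k) (r k)) ∧ ∑ k ∈ A, r k ≤ η := by
  -- the infimum over covers with diam ≤ 1 is 0
  have hinf : (⨅ (t : ℕ → Set M) (_ : S ⊆ ⋃ n, t n) (_ : ∀ n, EMetric.diam (t n) ≤ 1),
      (∑' n, ⨆ _ : (t n).Nonempty, EMetric.diam (t n) ^ (1:ℝ))) = 0 := by
    refine le_antisymm ?_ zero_le
    calc (⨅ (t : ℕ → Set M) (_ : S ⊆ ⋃ n, t n) (_ : ∀ n, EMetric.diam (t n) ≤ 1),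
        (∑' n, ⨆ _ : (t n).Nonempty, EMetric.diam (t n) ^ (1:ℝ)))
        ≤ μH[1] S := by
          rw [MeasureTheory.Measure.hausdorffMeasure_apply]
          exact le_iSup₂ (f := fun (r : ℝ≥0∞) (_ : 0 < r) =>
            ⨅ (t : ℕ → Set M) (_ : S ⊆ ⋃ n, t n) (_ : ∀ n, EMetric.diam (t n) ≤ r),
              ∑' n, ⨆ _ : (t n).Nonempty, EMetric.diam (t n) ^ (1:ℝ)) 1 zero_lt_one
      _ = 0 := h0
  have hηE : (0:ℝ≥0∞) < ENNReal.ofReal (η/4) := by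
    simp [ENNReal.ofReal_pos]; linarith
  have : ∃ (t : ℕ → Set M), ∃ (_ : S ⊆ ⋃ n, t n) (_ : ∀ n, EMetric.diam (t n) ≤ 1),
      (∑' n, ⨆ _ : (t n).Nonempty, EMetric.diam (t n) ^ (1:ℝ)) < ENNReal.ofReal (η/4) := by
    have h2 : (⨅ (t : ℕ → Set M) (_ : S ⊆ ⋃ n, t n) (_ : ∀ n, EMetric.diam (t n) ≤ 1),
        (∑' n, ⨆ _ : (t n).Nonempty, EMetric.diam (t n) ^ (1:ℝ))) < ENNReal.ofReal (η/4) := by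
      rw [hinf]; exact hηE
    simpa only [iInf_lt_iff] using h2
  obtain ⟨t, hcov, hdiam, hsum⟩ := this
  -- real-valued radii
  set D : ℕ → ℝ≥0∞ := fun n => ⨆ _ : (t n).Nonempty, EMetric.diam (t n) with hD
  have hDne : ∀ n, EMetric.diam (t n) ≠ ⊤ := fun n => (lt_of_le_of_lt (hdiam n) (by norm_num)).ne
  have hsum' : (∑' n, D n) < ENNReal.ofReal (η/4) := by
    have heq : (∑' n, D n) = ∑' n, ⨆ _ : (t n).Nonempty, EMetric.diam (t n) ^ (1:ℝ) := by
      apply tsum_congr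
      intro n
      rcases Set.eq_empty_or_nonempty (t n) with h | h
      · simp [hD, h]
      · simp [hD, h, ENNReal.rpow_one]
    rw [heq]; exact hsum
  have hsumne : (∑' n, D n) ≠ ⊤ := hsum'.ne_top
  classical
  set y : ℕ → M := fun n => if h : (t n).Nonempty then h.choose else Classical.arbitrary M with hy
  set r : ℕ → ℝ := fun n => (D n).toReal + η * (2:ℝ)⁻¹ ^ n / 8 with hr
  have hrpos : ∀ n, 0 < r n := by
    intro n
    have : (0:ℝ) ≤ (D n).toReal := ENNReal.toReal_nonneg
    have h2 : (0:ℝ) < η * (2:ℝ)⁻¹ ^ n / 8 := by positivity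
    simp only [hr]; linarith
  have hsub : ∀ n, t n ⊆ ball (y n) (r n) := by
    intro n x hx
    have hne : (t n).Nonempty := ⟨x, hx⟩
    have hyn : y n ∈ t n := by simp only [hy, dif_pos hne]; exact hne.choose_spec
    have hedist : edist x (y n) ≤ EMetric.diam (t n) := EMetric.edist_le_diam_of_mem hx hyn
    have hdist : dist x (y n) ≤ (EMetric.diam (t n)).toReal := by
      rw [dist_edist]
      exact ENNReal.toReal_mono (hDne n) hedist
    have hDn : (D n).toReal = (EMetric.diam (t n)).toReal := by simp [hD, hne]
    have : dist x (y n) < r n := by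
      rw [hr]; dsimp only
      have h2 : (0:ℝ) < η * (2:ℝ)⁻¹ ^ n / 8 := by positivity
      rw [hDn]; linarith
    exact mem_ball.2 this
  -- finite subcover
  obtain ⟨A, hA⟩ := hS.elim_finite_subcover (fun n => ball (y n) (r n))
    (fun n => isOpen_ball) (hcov.trans (Set.iUnion_mono hsub))
  refine ⟨A, y, r, hrpos, ?_, ?_⟩
  · intro x hx
    simpa using hA hx
  · -- sum bound
    have h1 : ∑ k ∈ A, ((D k).toReal) ≤ η/4 := by
      rw [← ENNReal.toReal_sum (fun k _ => (ne_top_of_le_ne_top hsumne (ENNReal.le_tsum k)))]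
      have hle : (∑ k ∈ A, D k) ≤ ∑' k, D k := ENNReal.sum_le_tsum A
      have := ENNReal.toReal_mono hsumne hle
      have h4 : (∑' n, D n).toReal ≤ η/4 := by
        have := ENNReal.toReal_mono (by simp) hsum'.le
        rwa [ENNReal.toReal_ofReal (by linarith)] at this
      linarith
    have h2 : ∑ k ∈ A, (η * (2:ℝ)⁻¹ ^ k / 8) ≤ η/4 := by
      have hgeo : ∑ k ∈ A, (2:ℝ)⁻¹ ^ k ≤ 2 := by
        calc ∑ k ∈ A, (2:ℝ)⁻¹ ^ k ≤ ∑ k ∈ Finset.range (A.sup id + 1), (2:ℝ)⁻¹ ^ k := by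
              apply Finset.sum_le_sum_of_subset_of_nonneg
              · intro k hk
                exact Finset.mem_range.2 (Nat.lt_succ_of_le (Finset.le_sup (f := id) hk))
              · intros; positivity
          _ ≤ 2 := by
              have := sum_geometric_two_le (A.sup id + 1)
              simpa [one_div] using this
      calc ∑ k ∈ A, (η * (2:ℝ)⁻¹ ^ k / 8) = (η/8) * ∑ k ∈ A, (2:ℝ)⁻¹ ^ k := by
            rw [Finset.mul_sum]; congr 1; ext k; ring
        _ ≤ (η/8) * 2 := by
            apply mul_le_mul_of_nonneg_left hgeo; linarith
        _ ≤ η/4 := by linarith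
    calc ∑ k ∈ A, r k = ∑ k ∈ A, ((D k).toReal) + ∑ k ∈ A, (η * (2:ℝ)⁻¹ ^ k / 8) := by
          rw [← Finset.sum_add_distrib]
      _ ≤ η/4 + η/4 := add_le_add h1 h2
      _ ≤ η := by linarith
end Cover


section WalkSec
variable {M : Type*} [MetricSpace M]

lemma LLFwalk {c : M → M → ℝ} (hc0 : ∀ a b, 0 ≤ c a b) (hcd : ∀ a b, c a b ≤ dist a b)
    {T : Set ℝ} (hTcl : IsClosed T) {τ : ℝ} (hτT : τ ∈ T)
    {γ : ℝ → M} (hγ : ∀ s ∈ T, ∀ t ∈ T, dist (γ s) (γ t) ≤ |s - t|)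
    {y : ℕ → M} {r : ℕ → ℝ} (hr : ∀ k, 0 < r k) {σ : ℝ} (hσ : 0 < σ) :
    ∀ (n : ℕ) (A : Finset ℕ), A.card = n → ∀ s ∈ T, s ≤ τ →
    (∀ t ∈ T, s ≤ t → t ≤ τ → ∃ k ∈ A, γ t ∈ ball (y k) (r k)) →
    ∃ (m : ℕ) (w : ℕ → M) (J : Finset (ℝ × ℝ)),
      w 0 = γ s ∧ w m = γ τ ∧
      (∀ g ∈ J, g.1 ∈ T ∧ g.2 ∈ T ∧ s ≤ g.1 ∧ g.1 < g.2 ∧ g.2 ≤ τ ∧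
        ∀ t ∈ T, ¬(g.1 < t ∧ t < g.2)) ∧
      LLFccost c m w ≤ ∑ k ∈ A, (2 * r k + σ) + ∑ g ∈ J, c (γ g.1) (γ g.2) := by
  intro n
  induction n using Nat.strong_induction_on with
  | _ n IH =>
  intro A hAcard s hsT hsτ hcov
  have hsum_nonneg : (0:ℝ) ≤ ∑ k ∈ A, (2 * r k + σ) :=
    Finset.sum_nonneg fun k _ => by have := hr k; linarith
  by_cases hsτeq : s = τ
  · refine ⟨0, fun _ => γ s, ∅, rfl, by rw [hsτeq], by simp, ?_⟩
    simp only [LLFccost, Finset.range_zero, Finset.sum_empty, Finset.sum_empty, add_zero]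
    exact hsum_nonneg
  · have hslt : s < τ := lt_of_le_of_ne hsτ hsτeq
    obtain ⟨k, hkA, hks⟩ := hcov s hsT le_rfl hsτ
    set V := {t | t ∈ T ∧ s ≤ t ∧ t ≤ τ ∧ γ t ∈ ball (y k) (r k)} with hV
    have hVne : V.Nonempty := ⟨s, hsT, le_rfl, hsτ, hks⟩
    have hVbdd : BddAbove V := ⟨τ, fun t ht => ht.2.2.1⟩
    set s₁ := sSup V with hs₁
    have hs₁cl : s₁ ∈ closure V := csSup_mem_closure hVne hVbdd
    have hVsub : V ⊆ T ∩ Icc s τ := fun t ht => ⟨ht.1, ht.2.1, ht.2.2.1⟩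
    have hs₁mem : s₁ ∈ T ∩ Icc s τ :=
      closure_minimal hVsub (hTcl.inter isClosed_Icc) hs₁cl
    have hs₁T : s₁ ∈ T := hs₁mem.1
    have hss₁ : s ≤ s₁ := hs₁mem.2.1
    have hs₁τ : s₁ ≤ τ := hs₁mem.2.2
    have hγs₁ : dist (γ s₁) (y k) ≤ r k := by
      refine le_of_forall_pos_le_add ?_
      intro ε hε
      obtain ⟨v, hvV, hvd⟩ := Metric.mem_closure_iff.1 hs₁cl ε hε
      calc dist (γ s₁) (y k) ≤ dist (γ s₁) (γ v) + dist (γ v) (y k) := dist_triangle _ _ _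
        _ ≤ |s₁ - v| + r k := add_le_add (hγ _ hs₁T _ hvV.1) (le_of_lt (mem_ball.1 hvV.2.2.2))
        _ ≤ ε + r k := by rw [← Real.dist_eq]; exact add_le_add_left hvd.le _
        _ = r k + ε := by ring
    have hjump : c (γ s) (γ s₁) ≤ 2 * r k := by
      calc c (γ s) (γ s₁) ≤ dist (γ s) (γ s₁) := hcd _ _
        _ ≤ dist (γ s) (y k) + dist (γ s₁) (y k) := dist_triangle_right _ _ _
        _ ≤ r k + r k := add_le_add (le_of_lt (mem_ball.1 hks)) hγs₁
        _ = 2 * r k := by ring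
    have hAterm : 2 * r k + σ + ∑ k' ∈ A.erase k, (2 * r k' + σ) = ∑ k' ∈ A, (2 * r k' + σ) :=
      Finset.add_sum_erase A (fun k' => 2 * r k' + σ) hkA
    by_cases hs₁τeq : s₁ = τ
    · refine ⟨1, fun i => if i = 0 then γ s else γ τ, ∅, by simp, by simp, by simp, ?_⟩
      have h1 : LLFccost c 1 (fun i => if i = 0 then γ s else γ τ) = c (γ s) (γ τ) := by
        simp [LLFccost]
      rw [h1]
      have h2 : (0:ℝ) ≤ ∑ k' ∈ A.erase k, (2 * r k' + σ) :=
        Finset.sum_nonneg fun k' _ => by have := hr k'; linarith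
      have h3 : c (γ s) (γ τ) ≤ 2 * r k := by rw [← hs₁τeq]; exact hjump
      simp only [Finset.sum_empty, add_zero]
      rw [← hAterm]
      linarith
    · have hs₁lt : s₁ < τ := lt_of_le_of_ne hs₁τ hs₁τeq
      set T' := {t | t ∈ T ∧ s₁ < t ∧ t ≤ τ} with hT'
      have hT'ne : T'.Nonempty := ⟨τ, hτT, hs₁lt, le_rfl⟩
      have hT'bdd : BddBelow T' := ⟨s₁, fun t ht => le_of_lt ht.2.1⟩
      set u := sInf T' with hu
      have huge : s₁ ≤ u := le_csInf hT'ne fun t ht => le_of_lt ht.2.1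
      have hT'sub : T' ⊆ T ∩ Icc s₁ τ := fun t ht => ⟨ht.1, le_of_lt ht.2.1, ht.2.2⟩
      have humem : u ∈ T ∩ Icc s₁ τ :=
        closure_minimal hT'sub (hTcl.inter isClosed_Icc) (csInf_mem_closure hT'ne hT'bdd)
      -- covering property after erasing ball k, starting from any point > s₁
      have hcov' : ∀ s₂, s₁ < s₂ → ∀ t ∈ T, s₂ ≤ t → t ≤ τ →
          ∃ k' ∈ A.erase k, γ t ∈ ball (y k') (r k') := by
        intro s₂ hs₂ t ht hst htτ
        have hstt : s ≤ t := le_trans hss₁ (le_trans (le_of_lt hs₂) hst)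
        obtain ⟨k', hk', hb⟩ := hcov t ht hstt htτ
        refine ⟨k', Finset.mem_erase.2 ⟨?_, hk'⟩, hb⟩
        rintro rfl
        have htV : t ∈ V := ⟨ht, hstt, htτ, hb⟩
        have := le_csSup hVbdd htV
        linarith [lt_of_lt_of_le hs₂ hst]
      have hcard' : (A.erase k).card < n := by
        rw [← hAcard]
        exact Finset.card_erase_lt_of_mem hkA
      by_cases hgap : s₁ < u
      · -- gap case
        obtain ⟨m', w', J', hw0, hwm, hJ', hcost'⟩ :=
          IH (A.erase k).card hcard' (A.erase k) rfl u humem.1 humem.2.2 (hcov' u hgap)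
        have hnotmem : (s₁, u) ∉ J' := by
          intro hmem
          have := (hJ' _ hmem).2.2.1
          simp only at this
          linarith [(hJ' _ hmem).2.2.2.1]
        refine ⟨m' + 2, fun i => match i with | 0 => γ s | 1 => γ s₁ | (i+2) => w' i,
          insert (s₁, u) J', rfl, hwm, ?_, ?_⟩
        · intro g hg
          rcases Finset.mem_insert.1 hg with h | h
          · subst h
            refine ⟨hs₁T, humem.1, hss₁, hgap, humem.2.2, ?_⟩
            intro t ht hth
            obtain ⟨h1, h2⟩ := hth
            have : t ∈ T' := ⟨ht, h1, le_trans h2.le humem.2.2⟩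
            have := csInf_le hT'bdd this
            linarith
          · obtain ⟨h1, h2, h3, h4, h5, h6⟩ := hJ' g h
            exact ⟨h1, h2, le_trans hss₁ (le_trans huge h3), h4, h5, h6⟩
        · rw [LLFccost_prepend2, hw0, Finset.sum_insert hnotmem]
          have hstep : c (γ s₁) (γ u) ≤ c (γ s₁) (γ u) := le_rfl
          rw [← hAterm]
          linarith
      · -- accumulation case
        have hueq : u = s₁ := le_antisymm (not_lt.1 hgap) huge
        have : sInf T' < s₁ + σ := by rw [← hu, hueq]; linarith
        obtain ⟨t', ht'T', ht'lt⟩ := exists_lt_of_csInf_lt hT'ne this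
        obtain ⟨ht'T, ht's₁, ht'τ⟩ := ht'T'
        obtain ⟨m', w', J', hw0, hwm, hJ', hcost'⟩ :=
          IH (A.erase k).card hcard' (A.erase k) rfl t' ht'T ht'τ (hcov' t' ht's₁)
        have hstep : c (γ s₁) (γ t') ≤ σ := by
          calc c (γ s₁) (γ t') ≤ dist (γ s₁) (γ t') := hcd _ _
            _ ≤ |s₁ - t'| := hγ _ hs₁T _ ht'T
            _ ≤ σ := by rw [abs_sub_comm, abs_of_pos (by linarith)]; linarith
        refine ⟨m' + 2, fun i => match i with | 0 => γ s | 1 => γ s₁ | (i+2) => w' i,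
          J', rfl, hwm, ?_, ?_⟩
        · intro g hg
          obtain ⟨h1, h2, h3, h4, h5, h6⟩ := hJ' g hg
          exact ⟨h1, h2, le_trans hss₁ (le_trans (le_of_lt ht's₁) h3), h4, h5, h6⟩
        · rw [LLFccost_prepend2, hw0]
          rw [← hAterm]
          linarith

lemma LLFccost_dist (m : ℕ) (x : ℕ → M) :
    LLFccost dist m x = LLFplen x m := rfl

-- refined (small-scale discounted) gauge
def LLFrefine (c : M → M → ℝ) (ε' a : ℝ) : M → M → ℝ :=
  fun x y => min (c x y) (max (ε' * dist x y) (ε' * a + 2 * (dist x y - a)))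

lemma LLFrefine_le (c : M → M → ℝ) (ε' a : ℝ) (x y : M) :
    LLFrefine c ε' a x y ≤ c x y := min_le_left _ _

lemma LLFrefine_floor {c : M → M → ℝ} {ε' : ℝ} (a : ℝ)
    (h : ∀ x y, ε' * dist x y ≤ c x y) (x y : M) :
    ε' * dist x y ≤ LLFrefine c ε' a x y :=
  le_min (h x y) (le_max_left _ _)

lemma LLFrefine_sym {c : M → M → ℝ} (ε' a : ℝ) (hsym : ∀ x y, c x y = c y x) (x y : M) :
    LLFrefine c ε' a x y = LLFrefine c ε' a y x := by
  unfold LLFrefine; rw [hsym x y, dist_comm x y]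

lemma LLFrefine_cont {c : M → M → ℝ} (ε' a : ℝ)
    (hc : Continuous fun xy : M × M => c xy.1 xy.2) :
    Continuous fun xy : M × M => LLFrefine c ε' a xy.1 xy.2 := by
  apply Continuous.min hc
  apply Continuous.max
  · exact continuous_const.mul continuous_dist
  · exact continuous_const.add (continuous_const.mul (continuous_dist.sub continuous_const))

lemma LLFrefine_small {c : M → M → ℝ} {ε' a : ℝ} (hε2 : ε' ≤ 2) {x y : M}
    (hxy : dist x y ≤ a) : LLFrefine c ε' a x y ≤ ε' * dist x y := by
  apply min_le_of_right_le
  apply max_le le_rfl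
  nlinarith [hxy]

lemma LLFrefine_far {c : M → M → ℝ} {ε' a : ℝ} (hε0 : 0 ≤ ε') (ha : 0 ≤ a) {x y : M}
    (h2a : 2 * a ≤ dist x y) (hle : c x y ≤ dist x y) :
    LLFrefine c ε' a x y = c x y := by
  apply min_eq_left
  apply le_max_of_le_right
  nlinarith [hle, h2a]

lemma LLFrefine_nonneg {c : M → M → ℝ} {ε' : ℝ} (a : ℝ) (hε0 : 0 ≤ ε')
    (h : ∀ x y, ε' * dist x y ≤ c x y) (x y : M) : 0 ≤ LLFrefine c ε' a x y := by
  have := LLFrefine_floor a h x y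
  have h2 : (0:ℝ) ≤ ε' * dist x y := mul_nonneg hε0 dist_nonneg
  linarith






lemma LLFspatial (p q z : M) (c : M → M → ℝ) (ε' Λ : ℝ) (hε0 : 0 < ε')
    (hsym : ∀ x y, c x y = c y x) (hcont : Continuous fun xy : M × M => c xy.1 xy.2)
    (hle : ∀ x y, c x y ≤ dist x y) (hfl : ∀ x y, ε' * dist x y ≤ c x y)
    (hlow : ∀ m x, x 0 = p → x m = q → Λ ≤ LLFccost c m x) :
    ∃ (c' : M → M → ℝ) (R : ℝ), 0 < R ∧ (∀ x y, c' x y ≤ c x y) ∧ (∀ x y, c' x y = c' y x) ∧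
      Continuous (fun xy : M × M => c' xy.1 xy.2) ∧
      (∀ x y, ε' * dist x y ≤ c' x y) ∧
      (∀ m x, x 0 = p → x m = q → Λ ≤ LLFccost c' m x) ∧
      (∀ x y, R ≤ dist x z → R ≤ dist y z → c' x y ≤ ε' * dist x y) := by
  set R₀ : ℝ := dist p z + (max Λ 0)/ε' + 1 with hR₀def
  have hR₀ : 0 < R₀ := by
    have h1 : (0:ℝ) ≤ dist p z := dist_nonneg
    have h2 : (0:ℝ) ≤ (max Λ 0)/ε' := div_nonneg (le_max_right _ _) hε0.le
    rw [hR₀def]; linarith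
  set θ : ℝ → ℝ := fun t => max ε' (min 1 (2 - t/R₀)) with hθdef
  set c' : M → M → ℝ := fun x y => min (c x y) (θ (min (dist x z) (dist y z)) * dist x y)
    with hc'def
  have hθ1 : ∀ t, t ≤ R₀ → (1:ℝ) ≤ θ t := by
    intro t ht
    have : (1:ℝ) ≤ min 1 (2 - t/R₀) := by
      refine le_min le_rfl ?_
      have : t/R₀ ≤ 1 := (div_le_one hR₀).2 ht
      linarith
    exact le_trans this (le_max_right _ _)
  have hθfl : ∀ t, ε' ≤ θ t := fun t => le_max_left _ _
  have hc'eq : ∀ x y : M, min (dist x z) (dist y z) ≤ R₀ → c' x y = c x y := by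
    intro x y hmin
    apply min_eq_left
    calc c x y ≤ dist x y := hle x y
      _ = 1 * dist x y := (one_mul _).symm
      _ ≤ θ (min (dist x z) (dist y z)) * dist x y :=
          mul_le_mul_of_nonneg_right (hθ1 _ hmin) dist_nonneg
  refine ⟨c', 2*R₀, by linarith, fun x y => min_le_left _ _, ?_, ?_, ?_, ?_, ?_⟩
  · intro x y
    simp only [hc'def, hsym x y, dist_comm x y, min_comm (dist x z) (dist y z)]
  · apply Continuous.min hcont
    have hθc : Continuous θ :=
      continuous_const.max (continuous_const.min (continuous_const.sub (continuous_id.div_const R₀)))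
    exact ((hθc.comp ((continuous_fst.dist continuous_const).min
      (continuous_snd.dist continuous_const))).mul continuous_dist)
  · intro x y
    refine le_min (hfl x y) ?_
    exact mul_le_mul_of_nonneg_right (hθfl _) dist_nonneg
  · intro m x h0 hm
    by_contra hlt
    push_neg at hlt
    have hfl' : ∀ a b : M, ε' * dist a b ≤ c' a b := by
      intro a b
      refine le_min (hfl a b) (mul_le_mul_of_nonneg_right (hθfl _) dist_nonneg)
    have hplen : ε' * LLFplen x m ≤ LLFccost c' m x := LLFmul_plen_le_ccost hfl' m x
    have hΛmax : LLFccost c' m x ≤ max Λ 0 := le_trans hlt.le (le_max_left _ _)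
    have hplen2 : LLFplen x m ≤ (max Λ 0)/ε' := by
      rw [le_div_iff₀ hε0]
      calc LLFplen x m * ε' = ε' * LLFplen x m := by ring
        _ ≤ max Λ 0 := le_trans hplen hΛmax
    have hkey : LLFccost c' m x = LLFccost c m x := by
      apply Finset.sum_congr rfl
      intro i hi
      apply hc'eq
      have hd : dist (x i) z ≤ R₀ := by
        calc dist (x i) z ≤ dist (x i) (x 0) + dist (x 0) z := dist_triangle _ _ _
          _ = dist (x 0) (x i) + dist p z := by rw [dist_comm, h0]
          _ ≤ LLFplen x i + dist p z := by linarith [LLFdist_le_plen' x (i := i)]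
          _ ≤ LLFplen x m + dist p z :=
              add_le_add_left (LLFplen_mono x (Finset.mem_range.1 hi).le) _
          _ ≤ (max Λ 0)/ε' + dist p z := add_le_add_left hplen2 _
          _ ≤ R₀ := by rw [hR₀def]; linarith
      exact le_trans (min_le_left _ _) hd
    rw [hkey] at hlt
    exact absurd (hlow m x h0 hm) (not_le.2 hlt)
  · intro x y hx hy
    have hmin : 2*R₀ ≤ min (dist x z) (dist y z) := le_min hx hy
    have hθε : θ (min (dist x z) (dist y z)) = ε' := by
      apply max_eq_left
      have h2 : 2 ≤ (min (dist x z) (dist y z))/R₀ := by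
        rw [le_div_iff₀ hR₀]; linarith
      calc min 1 (2 - (min (dist x z) (dist y z))/R₀) ≤ 2 - (min (dist x z) (dist y z))/R₀ :=
            min_le_right _ _
        _ ≤ 0 := by linarith
        _ ≤ ε' := hε0.le
    calc c' x y ≤ θ (min (dist x z) (dist y z)) * dist x y := min_le_right _ _
      _ = ε' * dist x y := by rw [hθε]


end WalkSec

section Assembly
variable {M : Type*} [MetricSpace M] [ProperSpace M] [MeasurableSpace M] [BorelSpace M]

structure LLFGS (M : Type*) [MetricSpace M] (p q : M) where
  c : M → M → ℝ
  β : ℝ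
  Λ : ℝ
  hβ0 : 0 < β
  hβ1 : β ≤ 1
  hsym : ∀ x y, c x y = c y x
  hcont : Continuous fun xy : M × M => c xy.1 xy.2
  hle : ∀ x y, c x y ≤ dist x y
  hfl : ∀ x y, β * dist x y ≤ c x y
  hlow : ∀ m x, x 0 = p → x m = q → Λ ≤ LLFccost c m x

lemma LLFGS.c_nonneg {p q : M} (S : LLFGS M p q) (x y : M) : 0 ≤ S.c x y := by
  have h1 := S.hfl x y
  have h2 : (0:ℝ) ≤ S.β * dist x y := mul_nonneg S.hβ0.le dist_nonneg
  linarith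

set_option maxHeartbeats 2000000 in
lemma LLFscale (hM : Purely1Unrectifiable M) (p q : M)
    (c : M → M → ℝ) (ε' δ' Λ : ℝ) (hε0 : 0 < ε') (hε1 : ε' ≤ 1) (hδ' : 0 < δ')
    (hsym : ∀ x y, c x y = c y x) (hcont : Continuous fun xy : M × M => c xy.1 xy.2)
    (hle : ∀ x y, c x y ≤ dist x y) (hfl : ∀ x y, ε' * dist x y ≤ c x y)
    (hlow : ∀ m x, x 0 = p → x m = q → Λ ≤ LLFccost c m x) :
    ∃ a : ℝ, 0 < a ∧
      ∀ m x, x 0 = p → x m = q → Λ - δ' ≤ LLFccost (LLFrefine c ε' a) m x := by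
  classical
  haveI : Nonempty M := ⟨p⟩
  by_cases hΛδ : Λ - δ' ≤ 0
  · refine ⟨1, one_pos, ?_⟩
    intro m x h0 hm
    refine le_trans hΛδ (LLFccost_nonneg ?_ m x)
    intro a b
    exact LLFrefine_nonneg _ hε0.le hfl a b
  push_neg at hΛδ
  have hΛL : Λ ≤ dist p q := by
    have h1 := hlow 1 (fun i => if i = 0 then p else q) (by simp) (by simp)
    have h2 : LLFccost c 1 (fun i => if i = 0 then p else q) = c p q := by
      simp [LLFccost]
    rw [h2] at h1
    exact le_trans h1 (hle p q)
  set L := dist p q with hLdef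
  have hL0 : 0 < L := lt_of_lt_of_le (by linarith) hΛL
  set Λb : ℝ := L/ε' with hΛbdef
  have hΛb0 : 0 < Λb := by positivity
  by_contra hcon
  push_neg at hcon
  set aa : ℕ → ℝ := fun n => min 1 (((n:ℝ)+1))⁻¹ with haa
  have haapos : ∀ n, 0 < aa n := fun n => lt_min one_pos (by positivity)
  have haasmall : ∀ b : ℝ, 0 < b → ∀ᶠ n in atTop, aa n ≤ b := by
    intro b hb
    have h1 : Tendsto (fun n : ℕ => ((n:ℝ)+1)⁻¹) atTop (𝓝 0) :=
      tendsto_one_div_add_atTop_nhds_zero_nat.congr (by intro n; rw [one_div])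
    filter_upwards [h1.eventually (eventually_le_nhds hb)] with n hn
    exact le_trans (min_le_right _ _) hn
  choose mm X0 h00 hm0 hcost0 using fun n => hcon (aa n) (haapos n)
  set cn : ℕ → M → M → ℝ := fun n => LLFrefine c ε' (aa n) with hcn
  have hcn0 : ∀ n a b, 0 ≤ cn n a b := fun n a b => LLFrefine_nonneg _ hε0.le hfl a b
  have hcnfl : ∀ n a b, ε' * dist a b ≤ cn n a b := fun n a b => LLFrefine_floor _ hfl a b
  have hcnle : ∀ n a b, cn n a b ≤ c a b := fun n a b => LLFrefine_le _ _ _ _ _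
  -- capped chains
  set X : ℕ → ℕ → M := fun n i => X0 n (min i (mm n)) with hX
  have hX0 : ∀ n, X n 0 = p := by intro n; simp only [hX, Nat.zero_min]; exact h00 n
  have hXm : ∀ n, X n (mm n) = q := by intro n; simp only [hX, min_self]; exact hm0 n
  have hcostX : ∀ n, LLFccost (cn n) (mm n) (X n) < Λ - δ' := by
    intro n
    have heq : LLFccost (cn n) (mm n) (X n) = LLFccost (cn n) (mm n) (X0 n) := by
      apply Finset.sum_congr rfl
      intro i hi
      have hi' := Finset.mem_range.1 hi
      have e1 : min i (mm n) = i := min_eq_left hi'.le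
      have e2 : min (i+1) (mm n) = i+1 := min_eq_left (Nat.succ_le_of_lt hi')
      simp only [hX, e1, e2]
    rw [heq]; exact hcost0 n
  set tpar : ℕ → ℕ → ℝ := fun n i => LLFplen (X n) i with htpar
  have htpar0 : ∀ n i, 0 ≤ tpar n i := by
    intro n i
    apply Finset.sum_nonneg
    intros; positivity
  have htparmono : ∀ n {i j : ℕ}, i ≤ j → tpar n i ≤ tpar n j :=
    fun n _ _ h => LLFplen_mono _ h
  have hdistpar : ∀ n i j, dist (X n i) (X n j) ≤ |tpar n i - tpar n j| := by
    intro n i j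
    rcases le_total i j with h | h
    · have := LLFdist_le_plen (X n) h
      have h2 := htparmono n h
      rw [abs_of_nonpos (by linarith)]
      simp only [htpar] at *
      linarith
    · have := LLFdist_le_plen (X n) h
      have h2 := htparmono n h
      rw [dist_comm, abs_of_nonneg (by linarith)]
      simp only [htpar] at *
      linarith
  have hLenb : ∀ n, tpar n (mm n) ≤ Λb := by
    intro n
    have h1 : ε' * LLFplen (X n) (mm n) ≤ LLFccost (cn n) (mm n) (X n) :=
      LLFmul_plen_le_ccost (hcnfl n) _ _
    have h2 := hcostX n
    rw [hΛbdef, le_div_iff₀ hε0]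
    simp only [htpar]
    nlinarith
  have hLLen : ∀ n, L ≤ tpar n (mm n) := by
    intro n
    have := LLFdist_le_plen' (X n) (i := mm n)
    rw [hX0 n, hXm n] at this
    exact this
  have htparb : ∀ n (i : ℕ), i ≤ mm n → tpar n i ∈ Set.Icc (0:ℝ) Λb :=
    fun n i hi => ⟨htpar0 n i, le_trans (htparmono n hi) (hLenb n)⟩
  have hXB : ∀ n i, X n i ∈ closedBall p Λb := by
    intro n i
    have h1 : X n i = X n (min i (mm n)) := by
      simp only [hX]
      congr 1
      rw [min_assoc, min_self]
    rw [mem_closedBall, dist_comm, h1, ← hX0 n]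
    refine le_trans (LLFdist_le_plen' (X n)) ?_
    exact (htparb n _ (min_le_right _ _)).2
  -- ultrafilter machinery
  set U : Ultrafilter ℕ := Ultrafilter.of atTop with hU
  have hUatTop : (U : Filter ℕ) ≤ atTop := Ultrafilter.of_le _
  have hNex : ∀ (n : ℕ) (t : ℝ), ∃ i, i ∈ Finset.range (mm n + 1) ∧
      ∀ j ∈ Finset.range (mm n + 1), |t - tpar n i| ≤ |t - tpar n j| := by
    intro n t
    obtain ⟨i, hi, hmin⟩ := Finset.exists_min_image (Finset.range (mm n + 1))
      (fun i => |t - tpar n i|) ⟨0, by simp⟩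
    exact ⟨i, hi, hmin⟩
  choose Nidx hNmem hNmin using hNex
  have hNle : ∀ n t, Nidx n t ≤ mm n := fun n t =>
    Nat.lt_succ_iff.1 (Finset.mem_range.1 (hNmem n t))
  set nrst : ℕ → ℝ → ℝ := fun n t => tpar n (Nidx n t) with hnrst
  set npt : ℕ → ℝ → M := fun n t => X n (Nidx n t) with hnpt
  have hnrstIcc : ∀ n t, nrst n t ∈ Set.Icc (0:ℝ) Λb := fun n t => htparb n _ (hNle n t)
  set Dfun : ℝ → ℝ := fun t => limUnder (U : Filter ℕ) (fun n => |t - nrst n t|) with hDfun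
  have htendD : ∀ t, Tendsto (fun n => |t - nrst n t|) U (𝓝 (Dfun t)) := by
    intro t
    apply LLFtendsto_ulim (C := |t| + Λb)
    intro n
    have h1 := hnrstIcc n t
    constructor
    · have : (0:ℝ) ≤ |t - nrst n t| := abs_nonneg _
      have h2 : (0:ℝ) ≤ |t| + Λb := by positivity
      linarith
    · calc |t - nrst n t| ≤ |t| + |nrst n t| := abs_sub _ _
        _ ≤ |t| + Λb := by
            have := abs_of_nonneg h1.1
            rw [abs_of_nonneg h1.1]
            linarith [h1.2]
  have hD0 : ∀ t, 0 ≤ Dfun t := fun t =>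
    ge_of_tendsto (htendD t) (Eventually.of_forall fun n => abs_nonneg _)
  set τ : ℝ := limUnder (U : Filter ℕ) (fun n => tpar n (mm n)) with hτ
  have htendτ : Tendsto (fun n => tpar n (mm n)) U (𝓝 τ) := by
    apply LLFtendsto_ulim (C := Λb)
    intro n
    exact ⟨by linarith [htpar0 n (mm n), hΛb0], hLenb n⟩
  have hτL : L ≤ τ := ge_of_tendsto htendτ (Eventually.of_forall hLLen)
  have hτb : τ ≤ Λb := le_of_tendsto htendτ (Eventually.of_forall hLenb)
  set γp : ℝ → M := fun t => limUnder (U : Filter ℕ) (fun n => npt n t) with hγp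
  have htendγ : ∀ t, Tendsto (fun n => npt n t) U (𝓝 (γp t)) := by
    intro t
    exact LLFtendsto_ulimM U (isCompact_closedBall p Λb) (fun n => hXB n (Nidx n t))
  set T : Set ℝ := {t | Dfun t = 0 ∧ 0 ≤ t ∧ t ≤ τ} with hT
  have hDlip : ∀ s t : ℝ, Dfun t ≤ Dfun s + |t - s| := by
    intro s t
    refine le_of_tendsto_of_tendsto' (htendD t) (((htendD s).add tendsto_const_nhds)) ?_
    intro n
    calc |t - nrst n t| ≤ |t - nrst n s| := hNmin n t (Nidx n s) (hNmem n s)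
      _ = |(s - nrst n s) + (t - s)| := by rw [show t - nrst n s = (s - nrst n s) + (t - s) by ring]
      _ ≤ |s - nrst n s| + |t - s| := abs_add_le _ _
  have hTclosed : IsClosed T := by
    have hDcont : Continuous Dfun := by
      have hlip : LipschitzWith 1 Dfun := by
        apply LipschitzWith.of_dist_le_mul
        intro s t
        rw [NNReal.coe_one, one_mul, Real.dist_eq, Real.dist_eq, abs_sub_le_iff]
        constructor
        · have := hDlip t s
          linarith
        · have := hDlip s t
          rw [abs_sub_comm t s] at this
          linarith
      exact hlip.continuous
    have hTeq : T = Dfun ⁻¹' {0} ∩ Icc 0 τ := by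
      ext t
      simp only [hT, Set.mem_setOf_eq, Set.mem_inter_iff, Set.mem_preimage,
        Set.mem_singleton_iff, Set.mem_Icc]
    rw [hTeq]
    exact (isClosed_singleton.preimage hDcont).inter isClosed_Icc
  have hγlipT : ∀ s ∈ T, ∀ t ∈ T, dist (γp s) (γp t) ≤ |s - t| := by
    intro s hs t ht
    have h1 : Tendsto (fun n => dist (npt n s) (npt n t)) U (𝓝 (dist (γp s) (γp t))) :=
      (htendγ s).dist (htendγ t)
    have hDs := htendD s
    rw [hs.1] at hDs
    have hDt := htendD t
    rw [ht.1] at hDt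
    have h2 : Tendsto (fun n => |s - nrst n s| + |t - nrst n t| + |s - t|) U
        (𝓝 (0 + 0 + |s - t|)) := (hDs.add hDt).add tendsto_const_nhds
    have h3 : ∀ n, dist (npt n s) (npt n t) ≤ |s - nrst n s| + |t - nrst n t| + |s - t| := by
      intro n
      refine le_trans (hdistpar n _ _) ?_
      calc |nrst n s - nrst n t| ≤ |nrst n s - s| + |s - nrst n t| := abs_sub_le _ _ _
        _ ≤ |nrst n s - s| + (|s - t| + |t - nrst n t|) := by
            linarith [abs_sub_le s t (nrst n t)]
        _ = |s - nrst n s| + |t - nrst n t| + |s - t| := by rw [abs_sub_comm]; ring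
    have h4 := le_of_tendsto_of_tendsto' h1 h2 h3
    simpa using h4
  have hnrst0 : ∀ n, nrst n 0 = 0 := by
    intro n
    have h1 : |(0:ℝ) - nrst n 0| ≤ |(0:ℝ) - tpar n 0| :=
      hNmin n 0 0 (Finset.mem_range.2 (Nat.succ_pos _))
    have h2 : tpar n 0 = 0 := by simp [htpar, LLFplen]
    rw [h2] at h1
    simp only [sub_zero, zero_sub, abs_neg, abs_zero] at h1
    exact abs_eq_zero.1 (le_antisymm h1 (abs_nonneg _))
  have hnpt0 : ∀ n, npt n 0 = p := by
    intro n
    have h2 : tpar n 0 = 0 := by simp [htpar, LLFplen]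
    have h4 : dist (X n 0) (npt n 0) ≤ |tpar n 0 - nrst n 0| := hdistpar n 0 (Nidx n 0)
    rw [h2, hnrst0 n] at h4
    simp only [sub_zero, abs_zero] at h4
    have h5 : X n 0 = npt n 0 := dist_eq_zero.1 (le_antisymm h4 dist_nonneg)
    rw [← h5, hX0 n]
  have hτpos : 0 < τ := lt_of_lt_of_le hL0 hτL
  have h0T : (0:ℝ) ∈ T := by
    refine ⟨?_, le_rfl, hτpos.le⟩
    have h1 : (fun n => |(0:ℝ) - nrst n 0|) = fun _ => (0:ℝ) := by
      funext n
      rw [hnrst0 n]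
      simp
    have h2 := htendD 0
    rw [h1] at h2
    exact (tendsto_nhds_unique h2 tendsto_const_nhds)
  have hγ0 : γp 0 = p := by
    have h1 : (fun n => npt n 0) = fun _ => p := funext hnpt0
    have h2 := htendγ 0
    rw [h1] at h2
    exact tendsto_nhds_unique h2 tendsto_const_nhds
  have htendLen : Tendsto (fun n => |τ - tpar n (mm n)|) U (𝓝 0) := by
    have h1 : Tendsto (fun n => τ - tpar n (mm n)) U (𝓝 (τ - τ)) :=
      tendsto_const_nhds.sub htendτ
    rw [sub_self] at h1
    have := h1.abs
    rwa [abs_zero] at this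
  have hτT : τ ∈ T := by
    refine ⟨?_, hτpos.le, le_rfl⟩
    have h2 : ∀ n, |τ - nrst n τ| ≤ |τ - tpar n (mm n)| := fun n =>
      hNmin n τ (mm n) (Finset.self_mem_range_succ _)
    exact le_antisymm (le_of_tendsto_of_tendsto' (htendD τ) htendLen h2) (hD0 τ)
  have hγτ : γp τ = q := by
    have h1 : Tendsto (fun n => dist (npt n τ) q) U (𝓝 (dist (γp τ) q)) :=
      (htendγ τ).dist tendsto_const_nhds
    have h2 : ∀ n, dist (npt n τ) q ≤ |τ - nrst n τ| + |τ - tpar n (mm n)| := by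
      intro n
      rw [← hXm n]
      refine le_trans (hdistpar n _ _) ?_
      calc |nrst n τ - tpar n (mm n)| ≤ |nrst n τ - τ| + |τ - tpar n (mm n)| := abs_sub_le _ _ _
        _ = |τ - nrst n τ| + |τ - tpar n (mm n)| := by rw [abs_sub_comm]
    have hDτ := htendD τ
    rw [hτT.1] at hDτ
    have h3 : Tendsto (fun n => |τ - nrst n τ| + |τ - tpar n (mm n)|) U (𝓝 (0 + 0)) :=
      hDτ.add htendLen
    have h4 := le_of_tendsto_of_tendsto' h1 h3 h2
    simp only [add_zero] at h4
    exact dist_eq_zero.1 (le_antisymm h4 dist_nonneg)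
  -- purely 1-unrectifiable: the image is H¹-null, cover it cheaply
  have hlipOn : LipschitzOnWith 1 γp T := by
    rw [lipschitzOnWith_iff_dist_le_mul]
    intro x hx y hy
    rw [NNReal.coe_one, one_mul, Real.dist_eq]
    exact hγlipT x hx y hy
  have hμ : μH[1] (γp '' T) = 0 := hM T γp 1 hlipOn
  have hTcomp : IsCompact T :=
    IsCompact.of_isClosed_subset (isCompact_Icc (a := 0) (b := τ)) hTclosed
      (fun t ht => ⟨ht.2.1, ht.2.2⟩)
  have hScomp : IsCompact (γp '' T) := hTcomp.image_of_continuousOn hlipOn.continuousOn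
  obtain ⟨A, yb, rb, hrb, hAcov, hrbsum⟩ :=
    LLFexists_cover_of_null hScomp hμ (show (0:ℝ) < δ'/8 by linarith)
  set σ : ℝ := δ'/(4*(A.card+1)) with hσdef
  have hσ0 : 0 < σ := div_pos hδ' (by have h := (Nat.cast_nonneg (α := ℝ) A.card); linarith)
  have hc0 : ∀ a b : M, 0 ≤ c a b := fun a b =>
    le_trans (mul_nonneg hε0.le dist_nonneg) (hfl a b)
  obtain ⟨mw, w, J, hw0, hwm, hJ, hwcost⟩ :=
    LLFwalk hc0 hle hTclosed hτT hγlipT hrb hσ0 A.card A rfl 0 h0T hτpos.le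
      (fun t ht _ _ => hAcov _ (mem_image_of_mem _ ht))
  have hgapsum : ∑ g ∈ J, c (γp g.1) (γp g.2) ≤ Λ - δ' := by
    rcases Finset.eq_empty_or_nonempty J with rfl | hJne
    · simp only [Finset.sum_empty]
      linarith
    set ℓm : ℝ := J.inf' hJne (fun g => g.2 - g.1) with hℓm
    have hℓm0 : 0 < ℓm := by
      rw [hℓm, Finset.lt_inf'_iff]
      intro g hg
      linarith [(hJ g hg).2.2.2.1]
    have hdisj : ∀ g ∈ J, ∀ g' ∈ J, g ≠ g' → g.2 ≤ g'.1 ∨ g'.2 ≤ g.1 := by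
      intro g hg g' hg' hne
      obtain ⟨hg1T, hg2T, hg0, hglt, hgτ, hgmid⟩ := hJ g hg
      obtain ⟨hg1T', hg2T', hg0', hglt', hgτ', hgmid'⟩ := hJ g' hg'
      rcases lt_trichotomy g.1 g'.1 with h | h | h
      · left
        by_contra hcl
        push_neg at hcl
        exact hgmid g'.1 hg1T' ⟨h, hcl⟩
      · exfalso
        rcases lt_trichotomy g.2 g'.2 with h2 | h2 | h2
        · exact hgmid' g.2 hg2T ⟨h ▸ hglt, h2⟩
        · exact hne (Prod.ext h h2)
        · exact hgmid g'.2 hg2T' ⟨(h ▸ hglt' : g.1 < g'.2), h2⟩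
      · right
        by_contra hcl
        push_neg at hcl
        exact hgmid' g.1 hg1T ⟨h, hcl⟩
    have happrox : ∀ ζ : ℝ, 0 < ζ → ζ ≤ ℓm/4 → ∃ v : ℝ × ℝ → M × M,
        (∀ g ∈ J, dist (v g).1 (γp g.1) ≤ 3*ζ ∧ dist (v g).2 (γp g.2) ≤ 3*ζ) ∧
        ∑ g ∈ J, c (v g).1 (v g).2 ≤ Λ - δ' := by
      intro ζ hζ0 hζm
      have hE1 : ∀ᶠ n in (U : Filter ℕ), aa n ≤ ℓm/8 := hUatTop (haasmall _ (by linarith))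
      have hE2 : ∀ᶠ n in (U : Filter ℕ), τ - ζ < tpar n (mm n) :=
        htendτ.eventually (eventually_gt_nhds (by linarith))
      have hEg : ∀ g ∈ J, ∀ᶠ n in (U : Filter ℕ),
          ((|g.1 - nrst n g.1| ≤ ζ ∧ dist (npt n g.1) (γp g.1) ≤ ζ) ∧
          (|g.2 - nrst n g.2| ≤ ζ ∧ dist (npt n g.2) (γp g.2) ≤ ζ) ∧
          (∀ i ≤ mm n, ¬(g.1 + ζ < tpar n i ∧ tpar n i < g.2 - ζ))) := by
        intro g hg
        obtain ⟨hg1T, hg2T, hg0, hglt, hgτ, hgmid⟩ := hJ g hg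
        have ha1 : ∀ᶠ n in (U:Filter ℕ), |g.1 - nrst n g.1| ≤ ζ := by
          have hD := htendD g.1
          rw [hg1T.1] at hD
          exact hD.eventually (eventually_le_nhds hζ0)
        have hb1 : ∀ᶠ n in (U:Filter ℕ), dist (npt n g.1) (γp g.1) ≤ ζ :=
          (tendsto_iff_dist_tendsto_zero.1 (htendγ g.1)).eventually (eventually_le_nhds hζ0)
        have ha2 : ∀ᶠ n in (U:Filter ℕ), |g.2 - nrst n g.2| ≤ ζ := by
          have hD := htendD g.2
          rw [hg2T.1] at hD
          exact hD.eventually (eventually_le_nhds hζ0)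
        have hb2 : ∀ᶠ n in (U:Filter ℕ), dist (npt n g.2) (γp g.2) ≤ ζ :=
          (tendsto_iff_dist_tendsto_zero.1 (htendγ g.2)).eventually (eventually_le_nhds hζ0)
        have hmid : ∀ᶠ n in (U:Filter ℕ),
            ∀ i ≤ mm n, ¬(g.1 + ζ < tpar n i ∧ tpar n i < g.2 - ζ) := by
          rw [Filter.eventually_iff]
          by_contra hW
          have hWc : {n | ∃ i, i ≤ mm n ∧ (g.1 + ζ < tpar n i ∧ tpar n i < g.2 - ζ)}
              ∈ (U:Filter ℕ) := by
            have hc := (Ultrafilter.compl_mem_iff_notMem (f := U)).2 hW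
            have hset : {n | ∀ i ≤ mm n, ¬(g.1 + ζ < tpar n i ∧ tpar n i < g.2 - ζ)}ᶜ
                = {n | ∃ i, i ≤ mm n ∧ (g.1 + ζ < tpar n i ∧ tpar n i < g.2 - ζ)} := by
              ext n
              rw [Set.mem_compl_iff]
              simp only [Set.mem_setOf_eq]
              push_neg
              simp only [not_not]
            rwa [hset] at hc
          have hζζ : g.1 + ζ ≤ g.2 - ζ := by
            have hℓg : ℓm ≤ g.2 - g.1 := Finset.inf'_le _ hg
            linarith
          set sfun : ℕ → ℝ := fun n =>
            if h : ∃ i, i ≤ mm n ∧ (g.1 + ζ < tpar n i ∧ tpar n i < g.2 - ζ)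
            then tpar n h.choose else g.1 + ζ with hsfun
          have hsbnd : ∀ n, sfun n ∈ Set.Icc (g.1 + ζ) (g.2 - ζ) := by
            intro n
            by_cases h : ∃ i, i ≤ mm n ∧ (g.1 + ζ < tpar n i ∧ tpar n i < g.2 - ζ)
            · rw [hsfun]
              simp only [dif_pos h]
              exact ⟨(h.choose_spec.2.1).le, (h.choose_spec.2.2).le⟩
            · rw [hsfun]
              simp only [dif_neg h]
              exact ⟨le_rfl, hζζ⟩
          set tst : ℝ := limUnder (U : Filter ℕ) sfun with htst
          have htsttend : Tendsto sfun U (𝓝 tst) := LLFtendsto_ulim2 U hsbnd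
          have htsta : g.1 + ζ ≤ tst :=
            ge_of_tendsto htsttend (Eventually.of_forall fun n => (hsbnd n).1)
          have htstb : tst ≤ g.2 - ζ :=
            le_of_tendsto htsttend (Eventually.of_forall fun n => (hsbnd n).2)
          have hub : ∀ᶠ n in (U:Filter ℕ), |tst - nrst n tst| ≤ |tst - sfun n| := by
            filter_upwards [hWc] with n hn
            have heq : sfun n = tpar n hn.choose := by rw [hsfun]; simp only [dif_pos hn]
            rw [heq]
            exact hNmin n tst hn.choose
              (Finset.mem_range.2 (Nat.lt_succ_of_le hn.choose_spec.1))
          have h0' : Tendsto (fun n => |tst - sfun n|) U (𝓝 0) := by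
            have h1 : Tendsto (fun n => tst - sfun n) U (𝓝 (tst - tst)) :=
              tendsto_const_nhds.sub htsttend
            rw [sub_self] at h1
            have := h1.abs
            rwa [abs_zero] at this
          have hDtst : Dfun tst = 0 :=
            le_antisymm (le_of_tendsto_of_tendsto (htendD tst) h0' hub) (hD0 tst)
          have htstT : tst ∈ T :=
            ⟨hDtst, by linarith [hg1T.2.1], by linarith [hg2T.2.2]⟩
          exact hgmid tst htstT ⟨by linarith, by linarith⟩
        filter_upwards [ha1, hb1, ha2, hb2, hmid] with n h1 h2 h3 h4 h5
        exact ⟨⟨h1, h2⟩, ⟨h3, h4⟩, h5⟩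
      have hEall : ∀ᶠ n in (U:Filter ℕ), ((aa n ≤ ℓm/8) ∧ (τ - ζ < tpar n (mm n)) ∧
          ∀ g ∈ J, ((|g.1 - nrst n g.1| ≤ ζ ∧ dist (npt n g.1) (γp g.1) ≤ ζ) ∧
          (|g.2 - nrst n g.2| ≤ ζ ∧ dist (npt n g.2) (γp g.2) ≤ ζ) ∧
          (∀ i ≤ mm n, ¬(g.1 + ζ < tpar n i ∧ tpar n i < g.2 - ζ)))) := by
        filter_upwards [hE1, hE2, (Finset.eventually_all J).2 hEg] with n h1 h2 h3
        exact ⟨h1, h2, h3⟩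
      obtain ⟨n, hn1, hn2, hn3⟩ := hEall.exists
      set ig : ℝ × ℝ → ℕ := fun g => Nat.findGreatest (fun i => tpar n i ≤ g.1 + ζ) (mm n)
        with hig
      have hprop : ∀ g ∈ J, tpar n (ig g) ∈ Set.Icc (g.1 - ζ) (g.1 + ζ) ∧
          tpar n (ig g + 1) ∈ Set.Icc (g.2 - ζ) (g.2 + ζ) ∧ ig g < mm n := by
        intro g hg
        obtain ⟨hg1T, hg2T, hg0, hglt, hgτ, hgmid⟩ := hJ g hg
        obtain ⟨⟨hga, hgb⟩, ⟨hgc, hgd⟩, hgm⟩ := hn3 g hg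
        have hℓg : ℓm ≤ g.2 - g.1 := Finset.inf'_le _ hg
        have hζg : 4*ζ ≤ g.2 - g.1 := by linarith
        have hP0 : tpar n 0 ≤ g.1 + ζ := by
          have h0 : tpar n 0 = 0 := by simp [htpar, LLFplen]
          rw [h0]
          linarith [hg1T.2.1]
        have higle : ig g ≤ mm n := by
          simp only [hig]; exact Nat.findGreatest_le _
        have hPig : tpar n (ig g) ≤ g.1 + ζ := by
          have h9 := Nat.findGreatest_spec (P := fun i => tpar n i ≤ g.1 + ζ)
            (Nat.zero_le (mm n)) hP0
          simpa only [hig] using h9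
        have hga' := abs_le.1 hga
        have hgc' := abs_le.1 hgc
        have hα : g.1 - ζ ≤ tpar n (ig g) := by
          have h3 : Nidx n g.1 ≤ ig g := by
            simp only [hig]
            exact Nat.le_findGreatest (hNle n g.1)
              (by simp only [hnrst] at hga'; linarith [hga'.1])
          have h4 : tpar n (Nidx n g.1) ≤ tpar n (ig g) := htparmono n h3
          simp only [hnrst] at hga'
          linarith [hga'.1]
        have hmmP : ¬(tpar n (mm n) ≤ g.1 + ζ) := by
          push_neg
          calc g.1 + ζ < g.2 - ζ := by linarith
            _ ≤ τ - ζ := by linarith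
            _ < tpar n (mm n) := hn2
        have higlt : ig g < mm n := lt_of_le_of_ne higle (fun h => hmmP (h ▸ hPig))
        have hig1 : ¬(tpar n (ig g + 1) ≤ g.1 + ζ) := by
          have h9 := Nat.findGreatest_is_greatest (P := fun i => tpar n i ≤ g.1 + ζ)
            (k := ig g + 1) (n := mm n) (by simp only [hig]; exact Nat.lt_succ_self _)
            (Nat.succ_le_of_lt higlt)
          exact h9
        push_neg at hig1
        have hnomid := hgm (ig g + 1) (Nat.succ_le_of_lt higlt)
        have hig1b : g.2 - ζ ≤ tpar n (ig g + 1) := by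
          by_contra hcl
          push_neg at hcl
          exact hnomid ⟨hig1, hcl⟩
        have hβgt : ¬(tpar n (Nidx n g.2) ≤ g.1 + ζ) := by
          push_neg
          simp only [hnrst] at hgc'
          calc g.1 + ζ < g.2 - ζ := by linarith
            _ ≤ tpar n (Nidx n g.2) := by linarith [hgc'.1]
        have hβge : ig g + 1 ≤ Nidx n g.2 := by
          by_contra hcl
          push_neg at hcl
          have h5 : tpar n (Nidx n g.2) ≤ tpar n (ig g) := htparmono n (Nat.lt_succ_iff.1 hcl)
          exact hβgt (le_trans h5 hPig)
        have hig1c : tpar n (ig g + 1) ≤ g.2 + ζ := by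
          have h6 := htparmono n hβge
          simp only [hnrst] at hgc'
          linarith [hgc'.2]
        exact ⟨⟨hα, hPig⟩, ⟨hig1b, hig1c⟩, higlt⟩
      refine ⟨fun g => (X n (ig g), X n (ig g + 1)), ?_, ?_⟩
      · intro g hg
        obtain ⟨hI1, hI2, higlt⟩ := hprop g hg
        obtain ⟨⟨hga, hgb⟩, ⟨hgc, hgd⟩, hgm⟩ := hn3 g hg
        have hga' := abs_le.1 hga
        have hgc' := abs_le.1 hgc
        constructor
        · calc dist (X n (ig g)) (γp g.1)
              ≤ dist (X n (ig g)) (npt n g.1) + dist (npt n g.1) (γp g.1) :=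
                dist_triangle _ _ _
            _ ≤ |tpar n (ig g) - nrst n g.1| + ζ := add_le_add (hdistpar n _ _) hgb
            _ ≤ 2*ζ + ζ := by
                have h7 : |tpar n (ig g) - nrst n g.1| ≤ 2*ζ := by
                  rw [abs_le]
                  constructor <;> [skip; skip] <;>
                    (simp only [hnrst] at hga' ⊢; first | linarith [hI1.1, hI1.2, hga'.1, hga'.2])
                linarith
            _ = 3*ζ := by ring
        · calc dist (X n (ig g + 1)) (γp g.2)
              ≤ dist (X n (ig g + 1)) (npt n g.2) + dist (npt n g.2) (γp g.2) :=
                dist_triangle _ _ _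
            _ ≤ |tpar n (ig g + 1) - nrst n g.2| + ζ := add_le_add (hdistpar n _ _) hgd
            _ ≤ 2*ζ + ζ := by
                have h7 : |tpar n (ig g + 1) - nrst n g.2| ≤ 2*ζ := by
                  rw [abs_le]
                  constructor <;> [skip; skip] <;>
                    (simp only [hnrst] at hgc' ⊢; first | linarith [hI2.1, hI2.2, hgc'.1, hgc'.2])
                linarith
            _ = 3*ζ := by ring
      · have hinj : ∀ g ∈ J, ∀ g' ∈ J, ig g = ig g' → g = g' := by
          intro g hg g' hg' heq
          by_contra hne
          rcases hdisj g hg g' hg' hne with hor | hor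
          · have h1 : tpar n (ig g + 1) ≤ g'.1 + ζ :=
              le_trans (hprop g hg).2.1.2 (by linarith)
            have hk1 : ig g + 1 ≤ mm n := Nat.succ_le_of_lt (hprop g hg).2.2
            have hk2 : tpar n (ig g + 1) ≤ g'.1 + ζ := h1
            have h2 : ig g + 1 ≤ ig g' := by
              simp only [hig] at hk1 hk2 ⊢
              exact Nat.le_findGreatest hk1 hk2
            omega
          · have h1 : tpar n (ig g' + 1) ≤ g.1 + ζ :=
              le_trans (hprop g' hg').2.1.2 (by linarith)
            have hk1 : ig g' + 1 ≤ mm n := Nat.succ_le_of_lt (hprop g' hg').2.2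
            have hk2 : tpar n (ig g' + 1) ≤ g.1 + ζ := h1
            have h2 : ig g' + 1 ≤ ig g := by
              simp only [hig] at hk1 hk2 ⊢
              exact Nat.le_findGreatest hk1 hk2
            omega
        have hstep : ∀ g ∈ J,
            c (X n (ig g)) (X n (ig g + 1)) = cn n (X n (ig g)) (X n (ig g + 1)) := by
          intro g hg
          obtain ⟨hI1, hI2, higlt⟩ := hprop g hg
          have hℓg : ℓm ≤ g.2 - g.1 := Finset.inf'_le _ hg
          have hd : dist (X n (ig g)) (X n (ig g + 1)) = tpar n (ig g + 1) - tpar n (ig g) := by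
            have h8 := LLFplen_succ (X n) (ig g)
            simp only [htpar]
            rw [h8]
            ring
          have h2a : 2 * aa n ≤ dist (X n (ig g)) (X n (ig g + 1)):= by
            rw [hd]
            have h9 : (g.2 - ζ) - (g.1 + ζ) ≤ tpar n (ig g + 1) - tpar n (ig g) := by
              linarith [hI1.2, hI2.1]
            linarith [hn1]
          exact (LLFrefine_far hε0.le (haapos n).le h2a (hle _ _)).symm
        have himg : J.image ig ⊆ Finset.range (mm n) := by
          intro i hi
          obtain ⟨g, hg, rfl⟩ := Finset.mem_image.1 hi
          exact Finset.mem_range.2 (hprop g hg).2.2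
        calc ∑ g ∈ J, c (X n (ig g)) (X n (ig g + 1))
            = ∑ g ∈ J, cn n (X n (ig g)) (X n (ig g + 1)) := Finset.sum_congr rfl hstep
          _ = ∑ i ∈ J.image ig, cn n (X n i) (X n (i+1)) := (Finset.sum_image (f := fun i => cn n (X n i) (X n (i+1))) hinj).symm
          _ ≤ ∑ i ∈ Finset.range (mm n), cn n (X n i) (X n (i+1)) :=
              Finset.sum_le_sum_of_subset_of_nonneg himg (fun i _ _ => hcn0 n _ _)
          _ = LLFccost (cn n) (mm n) (X n) := rfl
          _ ≤ Λ - δ' := (hcostX n).le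
    set Z : ℕ → ℝ := fun j => min (ℓm/4) (((j:ℝ)+1)⁻¹) with hZ
    have hZ0 : ∀ j, 0 < Z j := fun j => lt_min (by linarith) (by positivity)
    have hZle : ∀ j, Z j ≤ ℓm/4 := fun j => min_le_left _ _
    have hZtend : Tendsto Z atTop (𝓝 0) := by
      apply squeeze_zero (fun j => (hZ0 j).le) (fun j => min_le_right _ _)
      exact tendsto_one_div_add_atTop_nhds_zero_nat.congr (by intro n; rw [one_div])
    choose vj hv1 hv2 using fun j => happrox (Z j) (hZ0 j) (hZle j)
    have h3Z : Tendsto (fun j => 3 * Z j) atTop (𝓝 0) := by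
      have := hZtend.const_mul (3:ℝ)
      rwa [mul_zero] at this
    have hlim : Tendsto (fun j => ∑ g ∈ J, c (vj j g).1 (vj j g).2) atTop
        (𝓝 (∑ g ∈ J, c (γp g.1) (γp g.2))) := by
      apply tendsto_finset_sum
      intro g hg
      have ht1 : Tendsto (fun j => (vj j g).1) atTop (𝓝 (γp g.1)) := by
        rw [tendsto_iff_dist_tendsto_zero]
        exact squeeze_zero (fun j => dist_nonneg) (fun j => (hv1 j g hg).1) h3Z
      have ht2 : Tendsto (fun j => (vj j g).2) atTop (𝓝 (γp g.2)) := by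
        rw [tendsto_iff_dist_tendsto_zero]
        exact squeeze_zero (fun j => dist_nonneg) (fun j => (hv1 j g hg).2) h3Z
      exact (hcont.tendsto ((γp g.1), (γp g.2))).comp (ht1.prodMk_nhds ht2)
    exact le_of_tendsto hlim (Eventually.of_forall hv2)
  have hlow' : Λ ≤ LLFccost c mw w := by
    apply hlow
    · rw [hw0, hγ0]
    · rw [hwm, hγτ]
  have hsum2 : ∑ k ∈ A, (2 * rb k + σ) ≤ δ'/2 := by
    rw [Finset.sum_add_distrib, Finset.sum_const, ← Finset.mul_sum]
    have h1 : 2 * ∑ k ∈ A, rb k ≤ 2 * (δ'/8) := by linarith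
    have h2 : (A.card : ℝ) * σ ≤ δ'/4 := by
      have hK : (0:ℝ) < 4*((A.card:ℝ)+1) := by have h := (Nat.cast_nonneg (α := ℝ) A.card); linarith
      have hKeq : σ * (4*((A.card:ℝ)+1)) = δ' := by
        rw [hσdef]; exact div_mul_cancel₀ δ' hK.ne'
      nlinarith [hσ0.le]
    have h3 : (A.card : ℕ) • σ = (A.card : ℝ) * σ := by
      rw [nsmul_eq_mul]
    rw [h3]
    linarith
  linarith [hwcost, hlow', hgapsum, hsum2]

lemma LLFstepEx (hM : Purely1Unrectifiable M) (p q z : M) (S : LLFGS M p q)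
    (δ' : ℝ) (hδ' : 0 < δ') :
    ∃ S' : LLFGS M p q, S'.β = S.β/2 ∧ S'.Λ = S.Λ - δ' ∧ (∀ x y, S'.c x y ≤ S.c x y) ∧
      (∃ a, 0 < a ∧ ∀ x y : M, dist x y ≤ a → S'.c x y ≤ S.β/2 * dist x y) ∧
      (∃ R, 0 < R ∧ ∀ x y : M, R ≤ dist x z → R ≤ dist y z → S'.c x y ≤ S.β/2 * dist x y) := by
  have hε0 : 0 < S.β/2 := by linarith [S.hβ0]
  have hε1 : S.β/2 ≤ 1 := by linarith [S.hβ1]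
  have hflε : ∀ x y, S.β/2 * dist x y ≤ S.c x y := by
    intro x y
    refine le_trans ?_ (S.hfl x y)
    have := dist_nonneg (x := x) (y := y)
    nlinarith [S.hβ0]
  obtain ⟨a, ha0, hlow1⟩ := LLFscale hM p q S.c (S.β/2) δ' S.Λ hε0 hε1 hδ'
    S.hsym S.hcont S.hle hflε S.hlow
  set c₁ := LLFrefine S.c (S.β/2) a with hc₁
  have h₁le : ∀ x y, c₁ x y ≤ S.c x y := fun x y => LLFrefine_le _ _ _ _ _
  have h₁led : ∀ x y, c₁ x y ≤ dist x y := fun x y => le_trans (h₁le x y) (S.hle x y)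
  have h₁fl : ∀ x y, S.β/2 * dist x y ≤ c₁ x y := fun x y => LLFrefine_floor a hflε x y
  have h₁sym : ∀ x y, c₁ x y = c₁ y x := fun x y => LLFrefine_sym _ _ S.hsym x y
  have h₁cont : Continuous fun xy : M × M => c₁ xy.1 xy.2 := LLFrefine_cont _ _ S.hcont
  obtain ⟨c', R, hR0, h'le, h'sym, h'cont, h'fl, h'low, h'far⟩ :=
    LLFspatial p q z c₁ (S.β/2) (S.Λ - δ') hε0 h₁sym h₁cont h₁led h₁fl hlow1
  refine ⟨⟨c', S.β/2, S.Λ - δ', hε0, hε1, h'sym, h'cont,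
    fun x y => le_trans (h'le x y) (h₁led x y), h'fl, h'low⟩, rfl, rfl, ?_, ⟨a, ha0, ?_⟩,
    ⟨R, hR0, h'far⟩⟩
  · exact fun x y => le_trans (h'le x y) (h₁le x y)
  · intro x y hxy
    exact le_trans (h'le x y) (LLFrefine_small (by linarith) hxy)

def LLFGS0 (p q : M) : LLFGS M p q where
  c := dist
  β := 1
  Λ := dist p q
  hβ0 := one_pos
  hβ1 := le_rfl
  hsym := dist_comm
  hcont := continuous_dist
  hle := fun x y => le_rfl
  hfl := fun x y => by rw [one_mul]
  hlow := fun m x h0 hm => by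
    have := LLFdist_le_plen' x (i := m)
    rw [LLFccost_dist, ← h0, ← hm]
    exact this

noncomputable def LLFseq (hM : Purely1Unrectifiable M) (p q z : M) (δ : ℝ) (hδ : 0 < δ) :
    ℕ → LLFGS M p q
  | 0 => LLFGS0 p q
  | (n+1) => (LLFstepEx hM p q z (LLFseq hM p q z δ hδ n) (δ/2^(n+3)) (by positivity)).choose

lemma LLFseq_spec (hM : Purely1Unrectifiable M) (p q z : M) (δ : ℝ) (hδ : 0 < δ) (n : ℕ) :
    (LLFseq hM p q z δ hδ (n+1)).β = (LLFseq hM p q z δ hδ n).β/2 ∧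
    (LLFseq hM p q z δ hδ (n+1)).Λ = (LLFseq hM p q z δ hδ n).Λ - δ/2^(n+3) ∧
    (∀ x y, (LLFseq hM p q z δ hδ (n+1)).c x y ≤ (LLFseq hM p q z δ hδ n).c x y) ∧
    (∃ a, 0 < a ∧ ∀ x y : M, dist x y ≤ a →
      (LLFseq hM p q z δ hδ (n+1)).c x y ≤ (LLFseq hM p q z δ hδ n).β/2 * dist x y) ∧
    (∃ R, 0 < R ∧ ∀ x y : M, R ≤ dist x z → R ≤ dist y z →
      (LLFseq hM p q z δ hδ (n+1)).c x y ≤ (LLFseq hM p q z δ hδ n).β/2 * dist x y) :=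
  (LLFstepEx hM p q z (LLFseq hM p q z δ hδ n) (δ/2^(n+3)) (by positivity)).choose_spec

lemma LLFseq_β (hM : Purely1Unrectifiable M) (p q z : M) (δ : ℝ) (hδ : 0 < δ) (n : ℕ) :
    (LLFseq hM p q z δ hδ n).β = (2:ℝ)⁻¹^n := by
  induction n with
  | zero => simp [LLFseq, LLFGS0]
  | succ n ih =>
      rw [(LLFseq_spec hM p q z δ hδ n).1, ih, pow_succ]
      ring

lemma LLFseq_Λ (hM : Purely1Unrectifiable M) (p q z : M) (δ : ℝ) (hδ : 0 < δ) (n : ℕ) :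
    (LLFseq hM p q z δ hδ n).Λ = dist p q - (δ/4) * (1 - (2:ℝ)⁻¹^n) := by
  induction n with
  | zero => simp [LLFseq, LLFGS0]
  | succ n ih =>
      rw [(LLFseq_spec hM p q z δ hδ n).2.1, ih, pow_succ]
      simp only [div_eq_mul_inv, mul_inv, ← inv_pow]
      ring

lemma LLFseq_mono (hM : Purely1Unrectifiable M) (p q z : M) (δ : ℝ) (hδ : 0 < δ)
    {k k' : ℕ} (h : k ≤ k') (x y : M) :
    (LLFseq hM p q z δ hδ k').c x y ≤ (LLFseq hM p q z δ hδ k).c x y := by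
  induction k', h using Nat.le_induction with
  | base => exact le_rfl
  | succ n hn ih => exact le_trans ((LLFseq_spec hM p q z δ hδ n).2.2.1 x y) ih

end Assembly



/-- If `M` is a proper purely 1-unrectifiable metric space with base point `z`, then for all
`p, q ∈ M` and `δ > 0` there is a 1-Lipschitz, locally flat, flat at infinity function
`f : M → ℝ` vanishing at `z` with `f q - f p ≥ d(p,q) - δ`. -/
theorem exists_littleLip_separating_of_proper_purely1Unrectifiable
    {M : Type*} [MetricSpace M] [ProperSpace M] [MeasurableSpace M] [BorelSpace M]
    (z : M) (hM : Purely1Unrectifiable M) (p q : M) (δ : ℝ) (hδ : 0 < δ) :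
    ∃ f : M → ℝ, f z = 0 ∧ LipschitzWith 1 f ∧ LocallyFlat f ∧ FlatAtInfinity z f ∧
      f q - f p ≥ dist p q - δ := by
  classical
  set Sq : ℕ → LLFGS M p q := LLFseq hM p q z δ hδ with hSq
  set Fs : M → Set ℝ := fun x =>
    {v | ∃ (k m : ℕ) (w : ℕ → M), w 0 = p ∧ w m = x ∧ v = LLFccost (Sq k).c m w} with hFs
  have hne : ∀ x, (Fs x).Nonempty := by
    intro x
    refine ⟨(Sq 0).c p x, 0, 1, (fun i => if i = 0 then p else x), by simp, by simp, ?_⟩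
    simp [LLFccost]
  have hbdd : ∀ x, BddBelow (Fs x) := by
    intro x
    refine ⟨0, ?_⟩
    rintro v ⟨k, m, w, h0, hm, rfl⟩
    exact LLFccost_nonneg (fun a b => (Sq k).c_nonneg a b) m w
  set f₀ : M → ℝ := fun x => sInf (Fs x) with hf₀
  have hkey : ∀ (k : ℕ) (x y : M), f₀ x ≤ f₀ y + (Sq k).c y x := by
    intro k x y
    refine le_of_forall_pos_le_add ?_
    intro ε hε
    have hlt : sInf (Fs y) < sInf (Fs y) + ε := lt_add_of_pos_right _ hε
    obtain ⟨v, hv, hvlt⟩ := exists_lt_of_csInf_lt (hne y) hlt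
    obtain ⟨k', m, w, h0, hm, rfl⟩ := hv
    set k'' := max k k' with hk''
    set w' : ℕ → M := fun i => if i ≤ m then w i else x with hw'
    have hmem : LLFccost (Sq k'').c (m+1) w' ∈ Fs x := by
      refine ⟨k'', m+1, w', ?_, ?_, rfl⟩
      · simp [hw', h0]
      · simp [hw']
    have hsplit : LLFccost (Sq k'').c (m+1) w'
        = LLFccost (Sq k'').c m w + (Sq k'').c (w m) x := by
      rw [LLFccost, Finset.sum_range_succ]
      congr 1
      · apply Finset.sum_congr rfl
        intro i hi
        have hi' := Finset.mem_range.1 hi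
        have h1 : w' i = w i := by simp [hw', hi'.le]
        have h2 : w' (i+1) = w (i+1) := by simp [hw', Nat.succ_le_of_lt hi']
        rw [h1, h2]
      · have h1 : w' m = w m := by simp [hw']
        have h2 : w' (m+1) = x := by simp [hw']
        rw [h1, h2]
    have hb1 : LLFccost (Sq k'').c m w ≤ LLFccost (Sq k').c m w :=
      LLFccost_mono (fun a b => LLFseq_mono hM p q z δ hδ (le_max_right k k') a b) m w
    have hb2 : (Sq k'').c (w m) x ≤ (Sq k).c y x := by
      rw [hm]
      exact LLFseq_mono hM p q z δ hδ (le_max_left k k') y x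
    have : f₀ x ≤ LLFccost (Sq k'').c (m+1) w' := csInf_le (hbdd x) hmem
    rw [hsplit] at this
    calc f₀ x ≤ LLFccost (Sq k'').c m w + (Sq k'').c (w m) x := this
      _ ≤ LLFccost (Sq k').c m w + (Sq k).c y x := add_le_add hb1 hb2
      _ ≤ (f₀ y + ε) + (Sq k).c y x := by
          have := hvlt.le
          exact add_le_add_left (by exact this) _
      _ = f₀ y + (Sq k).c y x + ε := by ring
  have habs : ∀ (k : ℕ) (x y : M), |f₀ x - f₀ y| ≤ (Sq k).c x y := by
    intro k x y
    rw [abs_sub_le_iff]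
    constructor
    · have := hkey k x y
      rw [(Sq k).hsym y x] at this
      linarith
    · have := hkey k y x
      linarith
  have hf₀p : f₀ p = 0 := by
    apply le_antisymm
    · apply csInf_le (hbdd p)
      exact ⟨0, 0, fun _ => p, rfl, rfl, by simp [LLFccost]⟩
    · apply le_csInf (hne p)
      rintro v ⟨k, m, w, h0, hm, rfl⟩
      exact LLFccost_nonneg (fun a b => (Sq k).c_nonneg a b) m w
  have hf₀q : dist p q - δ/2 ≤ f₀ q := by
    apply le_csInf (hne q)
    rintro v ⟨k, m, w, h0, hm, rfl⟩
    have hΛ := (Sq k).hlow m w h0 hm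
    have hΛval := LLFseq_Λ hM p q z δ hδ k
    rw [hSq] at hΛ ⊢
    have hpow : (0:ℝ) ≤ (2:ℝ)⁻¹^k := by positivity
    have hpow1 : (2:ℝ)⁻¹^k ≤ 1 := pow_le_one₀ (by norm_num) (by norm_num)
    nlinarith [hΛ, hΛval]
  refine ⟨fun x => f₀ x - f₀ z, by simp, ?_, ?_, ?_, ?_⟩
  · apply LipschitzWith.of_dist_le_mul
    intro x y
    rw [Real.dist_eq, NNReal.coe_one, one_mul]
    have := habs 0 x y
    have h0 : (Sq 0).c x y = dist x y := rfl
    simp only [sub_sub_sub_cancel_right]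
    rw [← h0]
    exact this
  · -- locally flat
    intro p₀ ε hε
    obtain ⟨n, hn⟩ := exists_pow_lt_of_lt_one hε (by norm_num : (2:ℝ)⁻¹ < 1)
    obtain ⟨a, ha0, hsmall⟩ := (LLFseq_spec hM p q z δ hδ n).2.2.2.1
    refine ⟨a/2, by linarith, ?_⟩
    intro x y hx hy
    have hxy : dist x y ≤ a := by
      calc dist x y ≤ dist x p₀ + dist y p₀ := dist_triangle_right _ _ _
        _ ≤ a := by linarith
    have h1 : |f₀ x - f₀ y| ≤ (Sq (n+1)).c x y := habs (n+1) x y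
    have h2 := hsmall x y hxy
    have hβ := LLFseq_β hM p q z δ hδ n
    simp only [sub_sub_sub_cancel_right]
    refine le_trans h1 (le_trans h2 ?_)
    rw [hβ]
    have hrate : (2:ℝ)⁻¹^n/2 ≤ ε := by
      have hp : (0:ℝ) ≤ (2:ℝ)⁻¹^n := by positivity
      linarith
    exact mul_le_mul_of_nonneg_right hrate dist_nonneg
  · -- flat at infinity
    intro ε hε
    obtain ⟨n, hn⟩ := exists_pow_lt_of_lt_one hε (by norm_num : (2:ℝ)⁻¹ < 1)
    obtain ⟨R, hR0, hfar⟩ := (LLFseq_spec hM p q z δ hδ n).2.2.2.2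
    refine ⟨R, hR0, ?_⟩
    intro x y hx hy
    have h1 : |f₀ x - f₀ y| ≤ (Sq (n+1)).c x y := habs (n+1) x y
    have h2 := hfar x y hx hy
    have hβ := LLFseq_β hM p q z δ hδ n
    simp only [sub_sub_sub_cancel_right]
    refine le_trans h1 (le_trans h2 ?_)
    rw [hβ]
    have hrate : (2:ℝ)⁻¹^n/2 ≤ ε := by
      have hp : (0:ℝ) ≤ (2:ℝ)⁻¹^n := by positivity
      linarith
    exact mul_le_mul_of_nonneg_right hrate dist_nonneg
  · have : f₀ q - f₀ p = f₀ q := by rw [hf₀p]; ring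
    have h2 : (f₀ q - f₀ z) - (f₀ p - f₀ z) = f₀ q - f₀ p := by ring
    rw [ge_iff_le, h2, this]
    linarith [hf₀q]
end

section
/- Let (M,d) be a proper metric space with base point 0 ∈ M, and let Y be a set of Lipschitz functions f : M → ℝ with f(0) = 0 which is a linear subspace, is closed under pointwise maximum (f, g ∈ Y implies f ∨ g ∈ Y), is closed under convergence in the Lipschitz norm (if g_n ∈ Y, g is Lipschitz with g(0) = 0, and the Lipschitz constant of g_n − g tends to 0, then g ∈ Y), and satisfies the following density condition: for every 1-Lipschitz f : M → ℝ with f(0) = 0, every finite subset A ⊆ M and every ε > 0 there exists a 1-Lipschitz h ∈ Y with |f(y) − h(y)| ≤ ε for all y ∈ A. Then Y contains a nonnegative coercive function, i.e., a function f ∈ Y with f ≥ 0 such that f(x) → ∞ as d(x,0) → ∞. -/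
open Metric Set Filter
open scoped NNReal Topology

/-- Auxiliary arithmetic fact: if `d` lies beyond the radius `2^N * (N+1) + 3`, then there is
an index `m` with `d ≤ 2^m * (m+1) + 3` and `(1/2)^m * (d - 3) ≥ N / 2`. -/
lemma exists_nonneg_coercive_mem_aux (N : ℕ) (hN : 1 ≤ N) (d : ℝ)
    (hd : 2 ^ N * ((N : ℝ) + 1) + 3 ≤ d) :
    ∃ m : ℕ, d ≤ 2 ^ m * ((m : ℝ) + 1) + 3 ∧ (N : ℝ) / 2 ≤ (1 / 2 : ℝ) ^ m * (d - 3) := by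
  classical
  have hmono : StrictMono (fun n : ℕ => (2 : ℝ) ^ n * ((n : ℝ) + 1) + 3) := by
    apply strictMono_nat_of_lt_succ
    intro n
    have h1 : (0 : ℝ) < 2 ^ n := by positivity
    have h2 : (2 : ℝ) ^ (n + 1) = 2 * 2 ^ n := by rw [pow_succ]; ring
    show (2 : ℝ) ^ n * ((n : ℝ) + 1) + 3 < 2 ^ (n + 1) * (((n : ℕ) + 1 : ℕ) + 1 : ℝ) + 3
    push_cast
    rw [h2]
    nlinarith [(Nat.cast_nonneg n : (0:ℝ) ≤ (n:ℝ))]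
  have hdex : ∃ m : ℕ, d ≤ 2 ^ m * ((m : ℝ) + 1) + 3 := by
    obtain ⟨m, hm⟩ := exists_nat_ge d
    refine ⟨m, ?_⟩
    have h1 : (m : ℝ) < 2 ^ m := by exact_mod_cast (Nat.lt_two_pow_self (n := m))
    have h2 : (2 : ℝ) ^ m ≤ 2 ^ m * ((m : ℝ) + 1) := by
      nlinarith [pow_pos (show (0:ℝ) < 2 by norm_num) m, (Nat.cast_nonneg m : (0:ℝ) ≤ (m:ℝ))]
    linarith
  set m : ℕ := Nat.find hdex with hmdef
  have hm1 : d ≤ 2 ^ m * ((m : ℝ) + 1) + 3 := Nat.find_spec hdex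
  have hNm : N ≤ m := by
    by_contra hc
    push_neg at hc
    have h : (2 : ℝ) ^ m * ((m : ℝ) + 1) + 3 < 2 ^ N * ((N : ℝ) + 1) + 3 := hmono hc
    linarith
  have hmpos : 1 ≤ m := le_trans hN hNm
  obtain ⟨p, hp⟩ : ∃ p, m = p + 1 := ⟨m - 1, (Nat.succ_pred_eq_of_pos hmpos).symm⟩
  have hm2 : 2 ^ p * ((p : ℝ) + 1) + 3 < d := by
    have hlt : p < m := by omega
    have hnle : ¬ d ≤ 2 ^ p * ((p : ℝ) + 1) + 3 := Nat.find_min hdex hlt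
    linarith [not_le.mp hnle]
  refine ⟨m, hm1, ?_⟩
  have hhalf : (1 / 2 : ℝ) ^ m * 2 ^ p = 1 / 2 := by
    rw [hp]
    have h1 : ((1 : ℝ) / 2) ^ (p + 1) * 2 ^ (p + 1) = 1 := by
      rw [← mul_pow]; norm_num
    have h2 : (2 : ℝ) ^ (p + 1) = 2 * 2 ^ p := by rw [pow_succ]; ring
    rw [h2] at h1
    nlinarith [pow_pos (show (0:ℝ) < 2 by norm_num) p,
      pow_pos (show (0:ℝ) < 1/2 by norm_num) (p + 1)]
  have hpowpos : (0 : ℝ) < (1 / 2 : ℝ) ^ m := by positivity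
  have h1 : (1 / 2 : ℝ) ^ m * (2 ^ p * ((p : ℝ) + 1)) ≤ (1 / 2 : ℝ) ^ m * (d - 3) :=
    mul_le_mul_of_nonneg_left (by linarith) hpowpos.le
  have h2 : (1 / 2 : ℝ) ^ m * (2 ^ p * ((p : ℝ) + 1)) = (m : ℝ) / 2 := by
    have hm_cast : (m : ℝ) = (p : ℝ) + 1 := by exact_mod_cast hp
    rw [← mul_assoc, hhalf, hm_cast]; ring
  have hNmR : (N : ℝ) ≤ (m : ℝ) := by exact_mod_cast hNm
  linarith

/-- **Existence of a positive coercive function.** Let `M` be a proper metric space with base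
point `z`, and let `Y` be a set of Lipschitz functions vanishing at `z` which is a linear
subspace, is a sublattice (closed under pointwise maximum), is closed under convergence in
the Lipschitz norm, and whose 1-Lipschitz elements are pointwise dense (on finite sets)
among all 1-Lipschitz functions vanishing at `z`. Then `Y` contains a nonnegative
coercive function. -/
theorem exists_nonneg_coercive_mem
    {M : Type*} [MetricSpace M] [ProperSpace M] (z : M) (Y : Set (M → ℝ))
    (hlip : ∀ f ∈ Y, (∃ K : ℝ≥0, LipschitzWith K f) ∧ f z = 0)
    (hzero : (0 : M → ℝ) ∈ Y)
    (hadd : ∀ f ∈ Y, ∀ g ∈ Y, f + g ∈ Y)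
    (hsmul : ∀ (c : ℝ), ∀ f ∈ Y, c • f ∈ Y)
    (hmax : ∀ f ∈ Y, ∀ g ∈ Y, (fun x => max (f x) (g x)) ∈ Y)
    (hclosed : ∀ (g : ℕ → M → ℝ) (g₀ : M → ℝ), (∀ n, g n ∈ Y) →
      (∃ K : ℝ≥0, LipschitzWith K g₀) → g₀ z = 0 →
      (∀ ε : ℝ, 0 < ε → ∃ N : ℕ, ∀ n ≥ N, LipschitzWith (Real.toNNReal ε) (g n - g₀)) →
      g₀ ∈ Y)
    (hdense : ∀ f : M → ℝ, LipschitzWith 1 f → f z = 0 → ∀ (A : Finset M), ∀ ε : ℝ, 0 < ε →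
      ∃ h ∈ Y, LipschitzWith 1 h ∧ ∀ y ∈ A, |f y - h y| ≤ ε) :
    ∃ f ∈ Y, (∀ x, 0 ≤ f x) ∧ ∀ C : ℝ, ∃ r : ℝ, ∀ x : M, r ≤ dist x z → C ≤ f x := by
  classical
  -- Step 1: for every radius `R` there is a `1`-Lipschitz element of `Y` that is within `3`
  -- of the distance function on the closed ball of radius `R`.
  have key : ∀ R : ℝ, ∃ h : M → ℝ, h ∈ Y ∧ LipschitzWith 1 h ∧ h z = 0 ∧
      ∀ x : M, dist x z ≤ R → dist x z - 3 ≤ h x := by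
    intro R
    obtain ⟨t, htfin, htcov⟩ := (Metric.totallyBounded_iff.mp
      (isCompact_closedBall z R).totallyBounded) 1 one_pos
    obtain ⟨h, hYh, hlip1, happ⟩ := hdense (fun x => dist x z)
      (LipschitzWith.dist_left z) (dist_self z) htfin.toFinset 1 one_pos
    refine ⟨h, hYh, hlip1, (hlip h hYh).2, fun x hx => ?_⟩
    have hx' : x ∈ ⋃ y ∈ t, ball y 1 := htcov (mem_closedBall.mpr hx)
    simp only [mem_iUnion, mem_ball, exists_prop] at hx'
    obtain ⟨y, hyt, hxy⟩ := hx'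
    have h1 : |dist y z - h y| ≤ 1 := happ y (htfin.mem_toFinset.mpr hyt)
    have h2 : |h y - h x| ≤ dist y x := by
      have := hlip1.dist_le_mul y x
      rw [Real.dist_eq] at this
      simpa using this
    have h3 : |dist x z - dist y z| ≤ dist x y := abs_dist_sub_le x y z
    have h4 : dist y x = dist x y := dist_comm y x
    have e1 := abs_le.mp h1
    have e2 := abs_le.mp h2
    have e3 := abs_le.mp h3
    have := hxy.le
    linarith [e1.1, e1.2, e2.1, e2.2, e3.1, e3.2]
  -- choose the approximants at radii `2^n * (n+1) + 3`
  choose h hY hL1 hz0 happ using fun n : ℕ => key (2 ^ n * ((n : ℝ) + 1) + 3)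
  -- basic bounds
  have hle : ∀ (n : ℕ) (x : M), h n x ≤ dist x z := by
    intro n x
    have hd := (hL1 n).dist_le_mul x z
    rw [Real.dist_eq, hz0 n, sub_zero] at hd
    calc h n x ≤ |h n x| := le_abs_self _
      _ ≤ dist x z := by simpa using hd
  set w : ℕ → M → ℝ := fun n x => (1 / 2 : ℝ) ^ n * max (h n x) 0 with hwdef
  have hw_nonneg : ∀ (n : ℕ) (x : M), 0 ≤ w n x := by
    intro n x
    exact mul_nonneg (by positivity) (le_max_right _ _)
  have hw_le : ∀ (n : ℕ) (x : M), w n x ≤ (1 / 2 : ℝ) ^ n * dist x z := by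
    intro n x
    refine mul_le_mul_of_nonneg_left ?_ (by positivity)
    exact max_le (hle n x) dist_nonneg
  have hgeom : Summable (fun n : ℕ => (1 / 2 : ℝ) ^ n) :=
    summable_geometric_of_lt_one (by norm_num) (by norm_num)
  have hsum : ∀ x : M, Summable (fun n => w n x) := fun x =>
    Summable.of_nonneg_of_le (fun n => hw_nonneg n x) (fun n => hw_le n x)
      (hgeom.mul_right _)
  set f : M → ℝ := fun x => ∑' n, w n x with hfdef
  have hw_diff : ∀ (n : ℕ) (x y : M), |w n x - w n y| ≤ (1 / 2 : ℝ) ^ n * dist x y := by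
    intro n x y
    have h1 : |max (h n x) 0 - max (h n y) 0| ≤ |h n x - h n y| :=
      abs_max_sub_max_le_abs _ _ _
    have h2 : |h n x - h n y| ≤ dist x y := by
      have := (hL1 n).dist_le_mul x y
      rw [Real.dist_eq] at this
      simpa using this
    have heq : w n x - w n y = (1 / 2 : ℝ) ^ n * (max (h n x) 0 - max (h n y) 0) := by
      simp only [hwdef]; ring
    rw [heq, abs_mul, abs_of_nonneg (show (0:ℝ) ≤ (1/2:ℝ)^n by positivity)]
    exact mul_le_mul_of_nonneg_left (le_trans h1 h2) (by positivity)
  -- tail sums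
  have htail_sum : ∀ (x : M) (k : ℕ), Summable (fun n => w (n + k) x) := fun x k =>
    (summable_nat_add_iff k).mpr (hsum x)
  have hgeom_tail : ∀ k : ℕ, Summable (fun n : ℕ => (1 / 2 : ℝ) ^ (n + k)) := fun k =>
    (summable_nat_add_iff k).mpr hgeom
  have hgeom_val : ∑' n : ℕ, (1 / 2 : ℝ) ^ n = 2 := by
    rw [tsum_geometric_of_lt_one (by norm_num) (by norm_num)]
    norm_num
  have hgeom_tail_val : ∀ k : ℕ, ∑' n : ℕ, (1 / 2 : ℝ) ^ (n + k) = 2 * (1 / 2 : ℝ) ^ k := by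
    intro k
    have heq : (fun n : ℕ => (1 / 2 : ℝ) ^ (n + k))
        = fun n : ℕ => (1 / 2 : ℝ) ^ n * (1 / 2) ^ k := by
      funext n; rw [pow_add]
    rw [heq, tsum_mul_right, hgeom_val]
  have key_tail : ∀ (k : ℕ) (x y : M),
      |(∑' n, w (n + k) x) - ∑' n, w (n + k) y| ≤ 2 * (1 / 2 : ℝ) ^ k * dist x y := by
    intro k x y
    rw [← Summable.tsum_sub (htail_sum x k) (htail_sum y k)]
    have habs : Summable (fun n => |w (n + k) x - w (n + k) y|) :=
      Summable.of_nonneg_of_le (fun n => abs_nonneg _) (fun n => hw_diff _ x y)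
        ((hgeom_tail k).mul_right _)
    have h1 : |∑' n, (w (n + k) x - w (n + k) y)| ≤ ∑' n, |w (n + k) x - w (n + k) y| := by
      have := norm_tsum_le_tsum_norm (f := fun n => w (n + k) x - w (n + k) y)
        (by simpa [Real.norm_eq_abs] using habs)
      simpa [Real.norm_eq_abs] using this
    refine h1.trans ?_
    have h2 : ∑' n, |w (n + k) x - w (n + k) y| ≤ ∑' n : ℕ, (1 / 2 : ℝ) ^ (n + k) * dist x y :=
      Summable.tsum_le_tsum (fun n => hw_diff _ x y) habs ((hgeom_tail k).mul_right _)
    refine h2.trans ?_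
    rw [tsum_mul_right, hgeom_tail_val k]
  -- `f` is Lipschitz
  have hf_bound : ∀ x y : M, |f x - f y| ≤ 2 * dist x y := by
    intro x y
    have := key_tail 0 x y
    simpa using this
  have hf_lip : LipschitzWith 2 f := by
    apply LipschitzWith.of_dist_le_mul
    intro x y
    rw [Real.dist_eq]
    have := hf_bound x y
    push_cast
    linarith
  have hfz : f z = 0 := by
    have hwz : ∀ n : ℕ, w n z = 0 := by
      intro n; simp [hwdef, hz0 n]
    have : f z = ∑' n : ℕ, w n z := rfl
    rw [this, tsum_congr hwz, tsum_zero]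
  -- partial sums
  set g : ℕ → M → ℝ := fun k x => ∑ i ∈ Finset.range k, w i x with hgdef
  have hgY : ∀ k, g k ∈ Y := by
    intro k
    induction k with
    | zero =>
      have h0 : g 0 = (0 : M → ℝ) := by funext x; simp [hgdef]
      rw [h0]; exact hzero
    | succ k ih =>
      have hmem : (fun x => max (h k x) 0) ∈ Y := by
        simpa using hmax (h k) (hY k) 0 hzero
      have hmem2 : ((1 / 2 : ℝ) ^ k • fun x => max (h k x) 0) ∈ Y := hsmul _ _ hmem
      have heq : g (k + 1) = g k + ((1 / 2 : ℝ) ^ k • fun x => max (h k x) 0) := by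
        funext x
        simp [hgdef, Finset.sum_range_succ, hwdef]
      rw [heq]
      exact hadd _ ih _ hmem2
  -- `f ∈ Y` via closedness
  have hfY : f ∈ Y := by
    refine hclosed g f hgY ⟨2, hf_lip⟩ hfz ?_
    intro ε hε
    obtain ⟨N, hN⟩ := exists_pow_lt_of_lt_one (half_pos hε) (by norm_num : (1 / 2 : ℝ) < 1)
    refine ⟨N, fun n hn => ?_⟩
    apply LipschitzWith.of_dist_le_mul
    intro x y
    have hts : ∀ u : M, g n u - f u = -(∑' i, w (i + n) u) := by
      intro u
      have h0 := Summable.sum_add_tsum_nat_add n (hsum u)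
      have hgu : g n u = ∑ i ∈ Finset.range n, w i u := rfl
      have hfu : f u = ∑' i, w i u := rfl
      rw [hgu, hfu]
      linarith
    have hkt := key_tail n x y
    have hpow : (1 / 2 : ℝ) ^ n ≤ (1 / 2 : ℝ) ^ N :=
      pow_le_pow_of_le_one (by norm_num) (by norm_num) hn
    have hcoe : (Real.toNNReal ε : ℝ) = ε := Real.coe_toNNReal _ hε.le
    have hdd : dist ((g n - f) x) ((g n - f) y) = |(g n x - f x) - (g n y - f y)| := by
      rw [Real.dist_eq]; rfl
    rw [hdd, hts x, hts y, hcoe]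
    have h5 : -(∑' i, w (i + n) x) - -(∑' i, w (i + n) y)
        = -((∑' i, w (i + n) x) - ∑' i, w (i + n) y) := by ring
    rw [h5, abs_neg]
    have hd0 : (0 : ℝ) ≤ dist x y := dist_nonneg
    have b1 := mul_le_mul_of_nonneg_right hpow hd0
    have b2 := mul_le_mul_of_nonneg_right hN.le hd0
    linarith
  -- conclusion
  refine ⟨f, hfY, fun x => tsum_nonneg (fun n => hw_nonneg n x), ?_⟩
  intro C
  refine ⟨2 ^ (max 1 ⌈2 * C⌉₊) * (((max 1 ⌈2 * C⌉₊ : ℕ) : ℝ) + 1) + 3, fun x hx => ?_⟩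
  obtain ⟨m, hm1, hm2⟩ := exists_nonneg_coercive_mem_aux (max 1 ⌈2 * C⌉₊)
    (le_max_left _ _) (dist x z) hx
  have happx : dist x z - 3 ≤ h m x := happ m x hm1
  have hterm : (1 / 2 : ℝ) ^ m * (dist x z - 3) ≤ w m x :=
    mul_le_mul_of_nonneg_left (happx.trans (le_max_left _ _)) (by positivity)
  have hfx : w m x ≤ f x := Summable.le_tsum (hsum x) m (fun j _ => hw_nonneg j x)
  have hCN : 2 * C ≤ ((max 1 ⌈2 * C⌉₊ : ℕ) : ℝ) := by
    have h1 : 2 * C ≤ (⌈2 * C⌉₊ : ℝ) := Nat.le_ceil _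
    have h2 : ((⌈2 * C⌉₊ : ℕ) : ℝ) ≤ ((max 1 ⌈2 * C⌉₊ : ℕ) : ℝ) := by
      exact_mod_cast le_max_right 1 ⌈2 * C⌉₊
    linarith
  linarith
end

section
/- Let (M,d) be a metric space. Define d_Γ(x,y) := sup{|f(y) − f(x)| : f : M → ℝ is 1-Lipschitz and curve-flat}. Then d_ur(x,y) = d_Γ(x,y) for all x, y ∈ M. -/
open Metric Set MeasureTheory
open scoped ENNReal NNReal

/-- The pseudometric `d_ur`: `d_ur(x,y)` is the infimum of `λ([min K, max K] ∖ K)` over all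
nonempty compact `K ⊆ ℝ` and 1-Lipschitz maps `γ : K → M` with `γ(min K) = x` and
`γ(max K) = y`. -/
noncomputable def dur {M : Type*} [MetricSpace M] (x y : M) : ℝ :=
  sInf { c : ℝ | ∃ (K : Set ℝ) (γ : ℝ → M), K.Nonempty ∧ IsCompact K ∧
    LipschitzOnWith 1 γ K ∧ γ (sInf K) = x ∧ γ (sSup K) = y ∧
    c = (volume (Set.Icc (sInf K) (sSup K) \ K)).toReal }

/-- A Lipschitz function `f : M → ℝ` is *curve-flat* if for every compact `K ⊆ ℝ` and every
Lipschitz `γ : K → M`, the Lebesgue measure of `f(γ(K))` is zero. -/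
def CurveFlat {M : Type*} [MetricSpace M] (f : M → ℝ) : Prop :=
  ∀ (K : Set ℝ) (γ : ℝ → M) (L : ℝ≥0), IsCompact K → LipschitzOnWith L γ K →
    volume (f '' (γ '' K)) = 0

/-- The pseudometric `d_Γ` given by the curve-flat 1-Lipschitz functions. -/
noncomputable def dGamma {M : Type*} [MetricSpace M] (x y : M) : ℝ :=
  sSup { c : ℝ | ∃ f : M → ℝ, LipschitzWith 1 f ∧ CurveFlat f ∧ c = |f y - f x| }

section AuxDur

open Filter
open scoped Topology

variable {M : Type*} [MetricSpace M]

/-- The index set in the definition of `dur`. -/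
def durSet (x y : M) : Set ℝ :=
  { c : ℝ | ∃ (K : Set ℝ) (γ : ℝ → M), K.Nonempty ∧ IsCompact K ∧
    LipschitzOnWith 1 γ K ∧ γ (sInf K) = x ∧ γ (sSup K) = y ∧
    c = (volume (Set.Icc (sInf K) (sSup K) \ K)).toReal }

lemma dur_def' (x y : M) : dur x y = sInf (durSet x y) := rfl

lemma durSet_nonneg {x y : M} {c : ℝ} (hc : c ∈ durSet x y) : 0 ≤ c := by
  obtain ⟨K, γ, _, _, _, _, _, rfl⟩ := hc; exact ENNReal.toReal_nonneg

lemma bddBelow_durSet (x y : M) : BddBelow (durSet x y) :=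
  ⟨0, fun _ hc => durSet_nonneg hc⟩

lemma gap_ne_top {a b : ℝ} {K : Set ℝ} : volume (Icc a b \ K) ≠ ∞ :=
  ((measure_mono diff_subset).trans_lt (isCompact_Icc.measure_lt_top)).ne

lemma dist_mem_durSet (x y : M) : dist x y ∈ durSet x y := by
  set d := dist x y with hd
  have hd0 : 0 ≤ d := dist_nonneg
  refine ⟨{0, d}, fun t => if t ≤ 0 then x else y, ⟨0, by simp⟩,
    (Set.toFinite _).isCompact, ?_, ?_, ?_, ?_⟩
  · rw [lipschitzOnWith_iff_dist_le_mul]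
    have hxy : dist x y ≤ 1 * dist 0 d := by
      rw [one_mul, Real.dist_eq, zero_sub, abs_neg, abs_of_nonneg hd0]
    rintro u (rfl | rfl) v (rfl | rfl)
    · simp
    · show dist (if (0:ℝ) ≤ 0 then x else y) (if d ≤ 0 then x else y) ≤ 1 * dist 0 d
      rw [if_pos le_rfl]
      rcases le_or_gt d 0 with h | h
      · rw [if_pos h]; simp [dist_nonneg]
      · rw [if_neg (not_le.2 h)]; exact hxy
    · show dist (if d ≤ 0 then x else y) (if (0:ℝ) ≤ 0 then x else y) ≤ 1 * dist d 0
      rw [if_pos le_rfl, dist_comm _ x, dist_comm d 0]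
      rcases le_or_gt d 0 with h | h
      · rw [if_pos h]; simp [dist_nonneg]
      · rw [if_neg (not_le.2 h)]; exact hxy
    · simp
  · rw [show sInf {0, d} = 0 by rw [csInf_pair]; exact min_eq_left hd0]
    simp
  · rw [show sSup {0, d} = d by rw [csSup_pair]; exact max_eq_right hd0]
    show (if d ≤ 0 then x else y) = y
    rcases eq_or_lt_of_le hd0 with h | h
    · rw [if_pos (le_of_eq h.symm)]
      exact dist_eq_zero.mp (by rw [← hd, ← h])
    · rw [if_neg (not_le.2 h)]
  · rw [show sInf {0, d} = 0 by rw [csInf_pair]; exact min_eq_left hd0,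
      show sSup {0, d} = d by rw [csSup_pair]; exact max_eq_right hd0]
    rw [Icc_diff_both, Real.volume_Ioo]
    simp [hd0]

lemma durSet_nonempty (x y : M) : (durSet x y).Nonempty := ⟨_, dist_mem_durSet x y⟩

lemma dur_nonneg (x y : M) : 0 ≤ dur x y :=
  le_csInf (durSet_nonempty x y) fun _ => durSet_nonneg

lemma dur_le {x y : M} {c : ℝ} (h : c ∈ durSet x y) : dur x y ≤ c :=
  csInf_le (bddBelow_durSet x y) h

lemma dur_le_dist (x y : M) : dur x y ≤ dist x y := dur_le (dist_mem_durSet x y)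

lemma dur_self (x : M) : dur x x = 0 := by
  refine le_antisymm ?_ (dur_nonneg x x)
  have : (0:ℝ) ∈ durSet x x := by
    refine ⟨{0}, fun _ => x, ⟨0, rfl⟩, isCompact_singleton, ?_, by simp, by simp, by simp⟩
    exact (((LipschitzWith.const x).weaken zero_le_one).lipschitzOnWith)
  exact dur_le this

lemma durSet_symm_subset (x y : M) : durSet x y ⊆ durSet y x := by
  rintro c ⟨K, γ, hne, hK, hγ, hx, hy, rfl⟩
  set a := sInf K with ha
  set b := sSup K with hb
  have haK : a ∈ K := hK.sInf_mem hne
  have hbK : b ∈ K := hK.sSup_mem hne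
  have hpre : Neg.neg ⁻¹' K = Neg.neg '' K := by
    rw [image_eq_preimage_of_inverse neg_neg neg_neg]
  refine ⟨Neg.neg ⁻¹' K, γ ∘ Neg.neg, ⟨-b, by simpa using hbK⟩, ?_, ?_, ?_, ?_, ?_⟩
  · rw [hpre]; exact hK.image continuous_neg
  · rw [lipschitzOnWith_iff_dist_le_mul]
    intro u hu v hv
    have := lipschitzOnWith_iff_dist_le_mul.mp hγ (-u) hu (-v) hv
    simpa [dist_neg_neg] using this
  · have h1 : sInf (Neg.neg ⁻¹' K) = -b :=
      IsLeast.csInf_eq ⟨by simpa using hbK, fun u hu => by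
        have : -u ≤ b := le_csSup hK.bddAbove hu
        linarith⟩
    rw [h1]; simpa using hy
  · have h2 : sSup (Neg.neg ⁻¹' K) = -a :=
      IsGreatest.csSup_eq ⟨by simpa using haK, fun u hu => by
        have : a ≤ -u := csInf_le hK.bddBelow hu
        linarith⟩
    rw [h2]; simpa using hx
  · have h1 : sInf (Neg.neg ⁻¹' K) = -b :=
      IsLeast.csInf_eq ⟨by simpa using hbK, fun u hu => by
        have : -u ≤ b := le_csSup hK.bddAbove hu
        linarith⟩
    have h2 : sSup (Neg.neg ⁻¹' K) = -a :=
      IsGreatest.csSup_eq ⟨by simpa using haK, fun u hu => by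
        have : a ≤ -u := csInf_le hK.bddBelow hu
        linarith⟩
    rw [h1, h2]
    have hset : Icc (-b) (-a) \ (Neg.neg ⁻¹' K) = Neg.neg ⁻¹' (Icc a b \ K) := by
      rw [preimage_diff]
      congr 1
      ext t; simp only [mem_Icc, mem_preimage]
      constructor <;> intro h <;> exact ⟨by linarith [h.1, h.2], by linarith [h.1, h.2]⟩
    rw [hset, Measure.measure_preimage_neg]

lemma dur_symm (x y : M) : dur x y = dur y x := by
  have h : ∀ u v : M, durSet u v = durSet v u := fun u v =>
    subset_antisymm (durSet_symm_subset u v) (durSet_symm_subset v u)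
  rw [dur_def', dur_def', h]

lemma dur_le_add_of_mem {x y z : M} {c₁ c₂ : ℝ}
    (h₁ : c₁ ∈ durSet x y) (h₂ : c₂ ∈ durSet y z) : dur x z ≤ c₁ + c₂ := by
  obtain ⟨K₁, γ₁, hne₁, hK₁, hγ₁, hx₁, hy₁, rfl⟩ := h₁
  obtain ⟨K₂, γ₂, hne₂, hK₂, hγ₂, hy₂, hz₂, rfl⟩ := h₂
  set a₁ := sInf K₁ with ha₁
  set b₁ := sSup K₁ with hb₁
  set a₂ := sInf K₂ with ha₂
  set b₂ := sSup K₂ with hb₂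
  have ha₁K : a₁ ∈ K₁ := hK₁.sInf_mem hne₁
  have hb₁K : b₁ ∈ K₁ := hK₁.sSup_mem hne₁
  have ha₂K : a₂ ∈ K₂ := hK₂.sInf_mem hne₂
  have hb₂K : b₂ ∈ K₂ := hK₂.sSup_mem hne₂
  have hab₁ : a₁ ≤ b₁ := csInf_le_csSup hne₁ hK₁.bddBelow hK₁.bddAbove
  have hab₂ : a₂ ≤ b₂ := csInf_le_csSup hne₂ hK₂.bddBelow hK₂.bddAbove
  set e := b₁ - a₂ with he
  set K₂' := (fun t => t + e) '' K₂ with hK₂'def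
  set K := K₁ ∪ K₂' with hKdef
  have hK₁le : ∀ u ∈ K₁, u ≤ b₁ := fun u hu => le_csSup hK₁.bddAbove hu
  have hK₁ge : ∀ u ∈ K₁, a₁ ≤ u := fun u hu => csInf_le hK₁.bddBelow hu
  have hK₂'ge : ∀ u ∈ K₂', b₁ ≤ u := by
    rintro _ ⟨v, hv, rfl⟩
    have := csInf_le hK₂.bddBelow hv
    simp only [← ha₂] at this
    show b₁ ≤ v + e
    linarith
  have hK₂'le : ∀ u ∈ K₂', u ≤ b₂ + e := by
    rintro _ ⟨v, hv, rfl⟩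
    have := le_csSup hK₂.bddAbove hv
    simp only [← hb₂] at this
    show v + e ≤ b₂ + e
    linarith
  set γ : ℝ → M := fun t => if t ≤ b₁ then γ₁ t else γ₂ (t - e) with hγdef
  have hjoin : γ₁ b₁ = γ₂ a₂ := hy₁.trans hy₂.symm
  have hγK₁ : ∀ u ∈ K₁, γ u = γ₁ u := fun u hu => if_pos (hK₁le u hu)
  have hγK₂' : ∀ u ∈ K₂', γ u = γ₂ (u - e) := by
    intro u hu
    rcases le_or_gt u b₁ with h | h
    · have hub : u = b₁ := le_antisymm h (hK₂'ge u hu)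
      show (if u ≤ b₁ then γ₁ u else γ₂ (u - e)) = γ₂ (u - e)
      rw [if_pos h, hub, hjoin]
      congr 1; rw [he]; ring
    · exact if_neg (not_le.2 h)
  have hKne : K.Nonempty := ⟨a₁, Or.inl ha₁K⟩
  have hKcomp : IsCompact K := hK₁.union (hK₂.image (continuous_add_right e))
  have hsInfK : sInf K = a₁ :=
    IsLeast.csInf_eq ⟨Or.inl ha₁K, by
      rintro u (hu | hu)
      · exact hK₁ge u hu
      · exact hab₁.trans (hK₂'ge u hu)⟩
  have hsSupK : sSup K = b₂ + e :=
    IsGreatest.csSup_eq ⟨Or.inr ⟨b₂, hb₂K, rfl⟩, by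
      rintro u (hu | hu)
      · exact (hK₁le u hu).trans (by linarith)
      · exact hK₂'le u hu⟩
  have hd₁ := lipschitzOnWith_iff_dist_le_mul.mp hγ₁
  have hd₂ := lipschitzOnWith_iff_dist_le_mul.mp hγ₂
  have mix : ∀ u ∈ K₁, ∀ w ∈ K₂, dist (γ u) (γ (w + e)) ≤ 1 * dist u (w + e) := by
    intro u hu w hw
    rw [hγK₁ u hu, hγK₂' (w + e) ⟨w, hw, rfl⟩, add_sub_cancel_right]
    have h1 : dist (γ₁ u) (γ₁ b₁) ≤ 1 * dist u b₁ := hd₁ u hu b₁ hb₁K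
    have h2 : dist (γ₂ a₂) (γ₂ w) ≤ 1 * dist a₂ w := hd₂ a₂ ha₂K w hw
    have hub : u ≤ b₁ := hK₁le u hu
    have haw : a₂ ≤ w := csInf_le hK₂.bddBelow hw
    have hd3 : dist u b₁ = b₁ - u := by rw [Real.dist_eq, abs_of_nonpos (by linarith)]; ring
    have hd4 : dist a₂ w = w - a₂ := by rw [Real.dist_eq, abs_of_nonpos (by linarith)]; ring
    have hd5 : dist u (w + e) = w + e - u := by
      rw [Real.dist_eq, abs_of_nonpos (by linarith)]; ring
    calc dist (γ₁ u) (γ₂ w) ≤ dist (γ₁ u) (γ₁ b₁) + dist (γ₁ b₁) (γ₂ w) := dist_triangle _ _ _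
      _ = dist (γ₁ u) (γ₁ b₁) + dist (γ₂ a₂) (γ₂ w) := by rw [hjoin]
      _ ≤ 1 * dist u b₁ + 1 * dist a₂ w := add_le_add h1 h2
      _ ≤ 1 * dist u (w + e) := by rw [hd3, hd4, hd5]; linarith [he]
  have hγLip : LipschitzOnWith 1 γ K := by
    rw [lipschitzOnWith_iff_dist_le_mul]
    rintro u (hu | ⟨w, hw, rfl⟩) v (hv | ⟨w', hw', rfl⟩)
    · rw [hγK₁ u hu, hγK₁ v hv]; exact hd₁ u hu v hv
    · exact mix u hu w' hw'
    · rw [dist_comm, dist_comm (w + e) v]; exact mix v hv w hw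
    · rw [hγK₂' (w + e) ⟨w, hw, rfl⟩, hγK₂' (w' + e) ⟨w', hw', rfl⟩,
        add_sub_cancel_right, add_sub_cancel_right]
      have := hd₂ w hw w' hw'
      have hde : dist (w + e) (w' + e) = dist w w' := by
        rw [Real.dist_eq, Real.dist_eq]; congr 1; ring
      rw [hde]; exact this
  have hmem : (volume (Icc (sInf K) (sSup K) \ K)).toReal ∈ durSet x z := by
    refine ⟨K, γ, hKne, hKcomp, hγLip, ?_, ?_, rfl⟩
    · rw [hsInfK, hγK₁ a₁ ha₁K]; exact hx₁
    · rw [hsSupK, hγK₂' (b₂ + e) ⟨b₂, hb₂K, rfl⟩, add_sub_cancel_right]; exact hz₂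
  refine (dur_le hmem).trans ?_
  have hIccim : (fun t => t + e) '' (Icc a₂ b₂) = Icc b₁ (b₂ + e) := by
    rw [Set.image_add_right]
    ext t; simp only [mem_preimage, mem_Icc]
    constructor <;> intro h <;> exact ⟨by linarith [h.1, h.2, he], by linarith [h.1, h.2, he]⟩
  have hm2 : volume (Icc b₁ (b₂ + e) \ K₂') = volume (Icc a₂ b₂ \ K₂) := by
    have himg : Icc b₁ (b₂ + e) \ K₂' = (fun t => t + e) '' (Icc a₂ b₂ \ K₂) := by
      rw [image_diff (add_left_injective e), hIccim, hK₂'def]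
    rw [himg, Set.image_add_right, measure_preimage_add_right]
  have hsub : Icc (sInf K) (sSup K) \ K ⊆ (Icc a₁ b₁ \ K₁) ∪ (Icc b₁ (b₂ + e) \ K₂') := by
    rw [hsInfK, hsSupK]
    rintro t ⟨ht, htK⟩
    rcases Icc_subset_Icc_union_Icc (b := b₁) ht with h | h
    · exact Or.inl ⟨h, fun hmem => htK (Or.inl hmem)⟩
    · exact Or.inr ⟨h, fun hmem => htK (Or.inr hmem)⟩
  have key : volume (Icc (sInf K) (sSup K) \ K)
      ≤ volume (Icc a₁ b₁ \ K₁) + volume (Icc a₂ b₂ \ K₂) := by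
    refine (measure_mono hsub).trans ?_
    refine (measure_union_le _ _).trans ?_
    rw [hm2]
  calc (volume (Icc (sInf K) (sSup K) \ K)).toReal
      ≤ (volume (Icc a₁ b₁ \ K₁) + volume (Icc a₂ b₂ \ K₂)).toReal :=
        ENNReal.toReal_mono (ENNReal.add_ne_top.2 ⟨gap_ne_top, gap_ne_top⟩) key
    _ = (volume (Icc a₁ b₁ \ K₁)).toReal + (volume (Icc a₂ b₂ \ K₂)).toReal :=
        ENNReal.toReal_add gap_ne_top gap_ne_top

lemma dur_triangle (x y z : M) : dur x z ≤ dur x y + dur y z := by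
  have H : ∀ c₁ ∈ durSet x y, ∀ c₂ ∈ durSet y z, dur x z ≤ c₁ + c₂ :=
    fun c₁ h₁ c₂ h₂ => dur_le_add_of_mem h₁ h₂
  have step1 : ∀ c₁ ∈ durSet x y, dur x z - c₁ ≤ dur y z := by
    intro c₁ h₁
    refine le_csInf (durSet_nonempty y z) fun c₂ h₂ => ?_
    linarith [H c₁ h₁ c₂ h₂]
  have step2 : dur x z - dur y z ≤ dur x y := by
    refine le_csInf (durSet_nonempty x y) fun c₁ h₁ => ?_
    linarith [step1 c₁ h₁]
  linarith

lemma abs_dur_sub_dur_le (x a b : M) : |dur x a - dur x b| ≤ dur a b := by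
  rw [abs_sub_le_iff]
  constructor
  · have h := dur_triangle x b a
    rw [dur_symm b a] at h
    linarith
  · have h := dur_triangle x a b
    linarith

lemma dur_le_gap {K : Set ℝ} {γ : ℝ → M} {L : ℝ≥0} (hK : IsCompact K)
    (hγ : LipschitzOnWith L γ K) {s t : ℝ} (hs : s ∈ K) (ht : t ∈ K) (hst : s ≤ t) :
    dur (γ s) (γ t) ≤ (L : ℝ) * (volume (Icc s t \ K)).toReal := by
  rcases eq_or_ne L 0 with rfl | hL
  · have h0 : γ s = γ t := by
      have := hγ hs ht
      simpa [edist_eq_zero] using this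
    rw [h0, dur_self]
    positivity
  set c : ℝ := (L : ℝ) with hc
  have hc0 : (0:ℝ) < c := NNReal.coe_pos.2 (zero_lt_iff.2 hL)
  set S := K ∩ Icc s t with hS
  have hScomp : IsCompact S := hK.inter_right isClosed_Icc
  have hsS : s ∈ S := ⟨hs, left_mem_Icc.2 hst⟩
  have htS : t ∈ S := ⟨ht, right_mem_Icc.2 hst⟩
  set K' := (fun u => c * u) '' S with hK'
  have hK'comp : IsCompact K' := hScomp.image (continuous_mul_left c)
  have hinfK' : sInf K' = c * s :=
    IsLeast.csInf_eq ⟨⟨s, hsS, rfl⟩, by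
      rintro _ ⟨v, hv, rfl⟩
      exact mul_le_mul_of_nonneg_left hv.2.1 hc0.le⟩
  have hsupK' : sSup K' = c * t :=
    IsGreatest.csSup_eq ⟨⟨t, htS, rfl⟩, by
      rintro _ ⟨v, hv, rfl⟩
      exact mul_le_mul_of_nonneg_left hv.2.2 hc0.le⟩
  set γ' : ℝ → M := fun u => γ (u / c) with hγ'
  have hval : ∀ v : ℝ, γ' (c * v) = γ v := by
    intro v
    show γ (c * v / c) = γ v
    rw [mul_div_cancel_left₀ _ hc0.ne']
  have hγ'lip : LipschitzOnWith 1 γ' K' := by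
    rw [lipschitzOnWith_iff_dist_le_mul]
    rintro _ ⟨v, hv, rfl⟩ _ ⟨w, hw, rfl⟩
    rw [hval v, hval w]
    have h1 := lipschitzOnWith_iff_dist_le_mul.mp hγ v hv.1 w hw.1
    have h2 : dist (c * v) (c * w) = c * dist v w := by
      rw [Real.dist_eq, Real.dist_eq, ← mul_sub, abs_mul, abs_of_pos hc0]
    show dist (γ v) (γ w) ≤ ((1:ℝ≥0) : ℝ) * dist (c * v) (c * w)
    rw [NNReal.coe_one, one_mul, h2]
    exact h1
  have hdiff : Icc s t \ S = Icc s t \ K := by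
    rw [hS, diff_inter_self_eq_diff]
  have hmeas : volume (Icc (c * s) (c * t) \ K') = ENNReal.ofReal c * volume (Icc s t \ K) := by
    have himg : Icc (c * s) (c * t) \ K' = (fun u => c * u) '' (Icc s t \ K) := by
      rw [← hdiff, image_diff (mul_right_injective₀ hc0.ne'), image_mul_left_Icc' hc0]
    have hpre : (fun u => c * u) '' (Icc s t \ K) = (fun u => c⁻¹ * u) ⁻¹' (Icc s t \ K) :=
      congrFun (image_eq_preimage_of_inverse
        (fun u => inv_mul_cancel_left₀ hc0.ne' u)
        (fun u => mul_inv_cancel_left₀ hc0.ne' u)) _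
    rw [himg, hpre, Real.volume_preimage_mul_left (inv_ne_zero hc0.ne'), inv_inv,
      abs_of_pos hc0]
  have hmem : (volume (Icc (sInf K') (sSup K') \ K')).toReal ∈ durSet (γ s) (γ t) := by
    refine ⟨K', γ', ⟨c * s, ⟨s, hsS, rfl⟩⟩, hK'comp, hγ'lip, ?_, ?_, rfl⟩
    · rw [hinfK', hval]
    · rw [hsupK', hval]
  refine (dur_le hmem).trans ?_
  rw [hinfK', hsupK', hmeas, ENNReal.toReal_mul, ENNReal.toReal_ofReal hc0.le]

lemma image_volume_zero_of_gap_bound {K : Set ℝ} (hK : IsCompact K) (g : ℝ → ℝ) (L : ℝ)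
    (hL : 0 ≤ L)
    (h : ∀ s ∈ K, ∀ t ∈ K, s ≤ t → |g t - g s| ≤ L * (volume (Icc s t \ K)).toReal) :
    volume (g '' K) = 0 := by
  have main : ∀ δ : ℝ, 0 < δ →
      volume (g '' K) ≤ ENNReal.ofReal (2 * L) * (volume (cthickening δ K) - volume K) := by
    intro δ hδ
    set A := cthickening δ K \ K with hA
    have hAm : MeasurableSet A :=
      (isClosed_cthickening.measurableSet).diff hK.isClosed.measurableSet
    have hcover : g '' K ⊆ ⋃ j : ℤ, g '' (K ∩ Icc (j * δ) ((j + 1) * δ)) := by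
      rintro _ ⟨u, hu, rfl⟩
      refine mem_iUnion.2 ⟨⌊u / δ⌋, mem_image_of_mem g ⟨hu, ?_, ?_⟩⟩
      · rw [← le_div_iff₀ hδ]
        exact Int.floor_le (u / δ)
      · rw [← div_le_iff₀ hδ]
        exact (Int.lt_floor_add_one (u / δ)).le
    have piece : ∀ j : ℤ, volume (g '' (K ∩ Icc (j * δ) ((j + 1) * δ)))
        ≤ ENNReal.ofReal (2 * L) * volume (Icc ((j:ℝ) * δ) (((j:ℝ) + 1) * δ) ∩ A) := by
      intro j
      set S := K ∩ Icc ((j:ℝ) * δ) (((j:ℝ) + 1) * δ) with hSdef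
      rcases S.eq_empty_or_nonempty with hS | hS
      · rw [hS]
        simp
      have hScomp : IsCompact S := hK.inter_right isClosed_Icc
      set s₀ := sInf S with hs₀
      set t₀ := sSup S with ht₀
      have hs₀S : s₀ ∈ S := hScomp.sInf_mem hS
      have ht₀S : t₀ ∈ S := hScomp.sSup_mem hS
      set r := L * (volume (Icc s₀ t₀ \ K)).toReal with hr
      have hr0 : 0 ≤ r := mul_nonneg hL ENNReal.toReal_nonneg
      have hb : ∀ u ∈ S, g u ∈ Icc (g s₀ - r) (g s₀ + r) := by
        intro u hu
        have hs₀u : s₀ ≤ u := csInf_le hScomp.bddBelow hu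
        have hut₀ : u ≤ t₀ := le_csSup hScomp.bddAbove hu
        have habs : |g u - g s₀| ≤ L * (volume (Icc s₀ u \ K)).toReal :=
          h s₀ hs₀S.1 u hu.1 hs₀u
        have hmono : (volume (Icc s₀ u \ K)).toReal ≤ (volume (Icc s₀ t₀ \ K)).toReal :=
          ENNReal.toReal_mono gap_ne_top
            (measure_mono (diff_subset_diff_left (Icc_subset_Icc_right hut₀)))
        have hru : |g u - g s₀| ≤ r :=
          habs.trans (mul_le_mul_of_nonneg_left hmono hL)
        rw [abs_sub_le_iff] at hru
        exact ⟨by linarith [hru.1], by linarith [hru.2]⟩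
      have himg : g '' S ⊆ Icc (g s₀ - r) (g s₀ + r) := by
        rintro _ ⟨u, hu, rfl⟩; exact hb u hu
      have hgap : Icc s₀ t₀ \ K ⊆ Icc ((j:ℝ) * δ) (((j:ℝ) + 1) * δ) ∩ A := by
        rintro u ⟨hu, huK⟩
        have h1 : (j:ℝ) * δ ≤ u := le_trans hs₀S.2.1 hu.1
        have h2 : u ≤ ((j:ℝ) + 1) * δ := le_trans hu.2 ht₀S.2.2
        refine ⟨⟨h1, h2⟩, ?_, huK⟩
        have hdist : dist u s₀ ≤ δ := by
          rw [Real.dist_eq, abs_of_nonneg (by linarith [hu.1])]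
          nlinarith [hu.1, hu.2, hs₀S.2.1, ht₀S.2.2]
        exact mem_cthickening_of_dist_le u s₀ δ K hs₀S.1 hdist
      calc volume (g '' S) ≤ volume (Icc (g s₀ - r) (g s₀ + r)) := measure_mono himg
        _ = ENNReal.ofReal (2 * r) := by rw [Real.volume_Icc]; congr 1; ring
        _ = ENNReal.ofReal (2 * L) * volume (Icc s₀ t₀ \ K) := by
            rw [← ENNReal.ofReal_toReal (gap_ne_top (a := s₀) (b := t₀) (K := K)),
              ← ENNReal.ofReal_mul (by linarith)]
            congr 1
            rw [hr]; ring
        _ ≤ ENNReal.ofReal (2 * L) * volume (Icc ((j:ℝ) * δ) (((j:ℝ) + 1) * δ) ∩ A) :=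
            mul_le_mul_right (measure_mono hgap) _
    have piece2 : ∀ j : ℤ, volume (Icc ((j:ℝ) * δ) (((j:ℝ) + 1) * δ) ∩ A)
        ≤ volume (Ico ((j:ℝ) * δ) (((j:ℝ) + 1) * δ) ∩ A) := by
      intro j
      have hsub : Icc ((j:ℝ) * δ) (((j:ℝ) + 1) * δ) ∩ A
          ⊆ (Ico ((j:ℝ) * δ) (((j:ℝ) + 1) * δ) ∩ A) ∪ {((j:ℝ) + 1) * δ} := by
        rintro u ⟨⟨h1, h2⟩, hu⟩
        rcases lt_or_eq_of_le h2 with hlt | heq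
        · exact Or.inl ⟨⟨h1, hlt⟩, hu⟩
        · exact Or.inr (by simp [heq])
      refine (measure_mono hsub).trans ?_
      refine (measure_union_le _ _).trans ?_
      simp
    have hsum : ∑' j : ℤ, volume (Ico ((j:ℝ) * δ) (((j:ℝ) + 1) * δ) ∩ A) ≤ volume A := by
      rw [← measure_iUnion ?_ fun j => measurableSet_Ico.inter hAm]
      · exact measure_mono (iUnion_subset fun j => inter_subset_right)
      · intro i j hij
        refine Disjoint.mono inter_subset_left inter_subset_left ?_
        rw [Set.Ico_disjoint_Ico]
        rcases lt_or_gt_of_ne hij with hlt | hgt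
        · have hle : ((i:ℝ) + 1) * δ ≤ (j:ℝ) * δ := by
            have : ((i:ℝ) + 1) ≤ (j:ℝ) := by exact_mod_cast hlt
            nlinarith
          exact le_trans (min_le_left _ _) (le_trans hle (le_max_right _ _))
        · have hle : ((j:ℝ) + 1) * δ ≤ (i:ℝ) * δ := by
            have : ((j:ℝ) + 1) ≤ (i:ℝ) := by exact_mod_cast hgt
            nlinarith
          exact le_trans (min_le_right _ _) (le_trans hle (le_max_left _ _))
    have hAeq : volume A = volume (cthickening δ K) - volume K :=
      measure_diff (self_subset_cthickening K) hK.isClosed.measurableSet.nullMeasurableSet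
        hK.measure_lt_top.ne
    calc volume (g '' K) ≤ ∑' j : ℤ, volume (g '' (K ∩ Icc ((j:ℝ) * δ) (((j:ℝ) + 1) * δ))) :=
          (measure_mono hcover).trans (measure_iUnion_le _)
      _ ≤ ∑' j : ℤ, ENNReal.ofReal (2 * L) * volume (Ico ((j:ℝ) * δ) (((j:ℝ) + 1) * δ) ∩ A) :=
          ENNReal.tsum_le_tsum fun j => (piece j).trans (mul_le_mul_right (piece2 j) _)
      _ = ENNReal.ofReal (2 * L) * ∑' j : ℤ, volume (Ico ((j:ℝ) * δ) (((j:ℝ) + 1) * δ) ∩ A) :=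
          ENNReal.tsum_mul_left
      _ ≤ ENNReal.ofReal (2 * L) * volume A := mul_le_mul_right hsum _
      _ = ENNReal.ofReal (2 * L) * (volume (cthickening δ K) - volume K) := by rw [hAeq]
  have h1 : Tendsto (fun δ => volume (cthickening δ K)) (𝓝[>] (0:ℝ)) (𝓝 (volume K)) :=
    (tendsto_measure_cthickening_of_isCompact hK).mono_left nhdsWithin_le_nhds
  have h2 : Tendsto (fun δ => volume (cthickening δ K) - volume K) (𝓝[>] (0:ℝ)) (𝓝 0) := by
    have := ENNReal.Tendsto.sub h1 (tendsto_const_nhds (x := volume K))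
      (Or.inr hK.measure_lt_top.ne)
    simpa [tsub_self] using this
  have h3 : Tendsto (fun δ => ENNReal.ofReal (2 * L) * (volume (cthickening δ K) - volume K))
      (𝓝[>] (0:ℝ)) (𝓝 0) := by
    have := ENNReal.Tendsto.const_mul (a := ENNReal.ofReal (2 * L)) h2
      (Or.inr ENNReal.ofReal_ne_top)
    simpa using this
  have hle : volume (g '' K) ≤ 0 :=
    ge_of_tendsto h3 (eventually_nhdsWithin_of_forall fun δ hδ => main δ hδ)
  exact le_antisymm hle zero_le

lemma curveFlat_dur (x : M) : CurveFlat (dur x) := by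
  intro K γ L hK hγ
  rw [← Set.image_comp]
  refine image_volume_zero_of_gap_bound hK (dur x ∘ γ) L L.coe_nonneg ?_
  intro s hs t ht hst
  have h1 : |dur x (γ t) - dur x (γ s)| ≤ dur (γ t) (γ s) := abs_dur_sub_dur_le x (γ t) (γ s)
  have h2 : dur (γ t) (γ s) = dur (γ s) (γ t) := dur_symm _ _
  exact h1.trans (h2.le.trans (dur_le_gap hK hγ hs ht hst))

lemma lipschitzWith_dur (x : M) : LipschitzWith 1 (dur x) := by
  refine LipschitzWith.of_dist_le_mul fun a b => ?_
  rw [Real.dist_eq, NNReal.coe_one, one_mul]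
  exact (abs_dur_sub_dur_le x a b).trans (dur_symm a b ▸ (dur_le_dist a b))

/-- The index set in the definition of `dGamma`. -/
def gammaSet (x y : M) : Set ℝ :=
  { c : ℝ | ∃ f : M → ℝ, LipschitzWith 1 f ∧ CurveFlat f ∧ c = |f y - f x| }

lemma dGamma_def' (x y : M) : dGamma x y = sSup (gammaSet x y) := rfl

lemma zero_mem_gammaSet (x y : M) : (0:ℝ) ∈ gammaSet x y := by
  refine ⟨fun _ => 0, (LipschitzWith.const 0).weaken zero_le_one, ?_, by simp⟩
  intro K γ L hK hγ
  refine measure_mono_null ?_ (measure_singleton (0:ℝ))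
  rintro _ ⟨_, _, rfl⟩
  rfl

lemma gammaSet_nonempty (x y : M) : (gammaSet x y).Nonempty := ⟨0, zero_mem_gammaSet x y⟩

lemma bddAbove_gammaSet (x y : M) : BddAbove (gammaSet x y) := by
  refine ⟨dist x y, ?_⟩
  rintro _ ⟨f, hf, _, rfl⟩
  calc |f y - f x| = dist (f y) (f x) := (Real.dist_eq _ _).symm
    _ ≤ 1 * dist y x := hf.dist_le_mul y x
    _ = dist x y := by rw [one_mul, dist_comm]

lemma abs_le_of_curveFlat {f : M → ℝ} (hf1 : LipschitzWith 1 f) (hcf : CurveFlat f)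
    {x y : M} {c : ℝ} (hc : c ∈ durSet x y) : |f y - f x| ≤ c := by
  obtain ⟨K, γ, hne, hK, hγ, hx, hy, rfl⟩ := hc
  set a := sInf K with ha
  set b := sSup K with hb
  have haK : a ∈ K := hK.sInf_mem hne
  have hbK : b ∈ K := hK.sSup_mem hne
  have hab : a ≤ b := csInf_le_csSup hne hK.bddBelow hK.bddAbove
  have hfγ : LipschitzOnWith 1 (f ∘ γ) K := by
    have := hf1.comp_lipschitzOnWith hγ
    simpa using this
  obtain ⟨g, hgl, hEq⟩ := hfγ.extend_real
  have hIVT : uIcc (g a) (g b) ⊆ g '' (Icc a b) := by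
    have := intermediate_value_uIcc (a := a) (b := b) (hgl.continuous.continuousOn)
    rwa [uIcc_of_le hab] at this
  have hnull : volume (g '' K) = 0 := by
    have himg : g '' K = f '' (γ '' K) := by
      rw [← hEq.image_eq, Set.image_comp]
    rw [himg]
    exact hcf K γ 1 hK hγ
  have hlip : volume (g '' (Icc a b \ K)) ≤ volume (Icc a b \ K) := by
    have h0 := (hgl.lipschitzOnWith (s := Icc a b \ K)).hausdorffMeasure_image_le
      (zero_le_one (α := ℝ))
    rw [MeasureTheory.hausdorffMeasure_real] at h0
    simpa using h0
  have hcb : volume (uIcc (g a) (g b)) ≤ volume (Icc a b \ K) := by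
    calc volume (uIcc (g a) (g b)) ≤ volume (g '' (Icc a b)) := measure_mono hIVT
      _ ≤ volume (g '' (Icc a b \ K) ∪ g '' K) := by
          refine measure_mono ?_
          rw [← image_union]
          exact image_mono (f := g) (fun u hu => (em (u ∈ K)).elim (fun h => Or.inr h)
            (fun h => Or.inl ⟨hu, h⟩))
      _ ≤ volume (g '' (Icc a b \ K)) + volume (g '' K) := measure_union_le _ _
      _ = volume (g '' (Icc a b \ K)) := by rw [hnull, add_zero]
      _ ≤ volume (Icc a b \ K) := hlip
  have hga : g a = f x := by rw [← hEq haK]; exact congrArg f hx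
  have hgb : g b = f y := by rw [← hEq hbK]; exact congrArg f hy
  rw [Real.volume_interval, hga, hgb] at hcb
  exact (ENNReal.ofReal_le_iff_le_toReal gap_ne_top).mp hcb

end AuxDur

/-- `d_ur` coincides with the pseudometric `d_Γ` induced by curve-flat 1-Lipschitz
functions. -/
theorem dur_eq_dGamma {M : Type*} [MetricSpace M] (x y : M) : dur x y = dGamma x y := by
  apply le_antisymm
  · have hmem : dur x y ∈ gammaSet x y := by
      refine ⟨dur x, lipschitzWith_dur x, curveFlat_dur x, ?_⟩
      rw [dur_self x, sub_zero, abs_of_nonneg (dur_nonneg x y)]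
    rw [dGamma_def']
    exact le_csSup (bddAbove_gammaSet x y) hmem
  · rw [dGamma_def', dur_def']
    refine csSup_le (gammaSet_nonempty x y) ?_
    rintro _ ⟨f, hf1, hcf, rfl⟩
    exact le_csInf (durSet_nonempty x y) fun c hc => abs_le_of_curveFlat hf1 hcf hc
end

section
/- Let (M,d) be a 1-bounded turning arc with parametrizing homeomorphism h : [0,1] → M. Then for all 0 ≤ s ≤ t ≤ u ≤ 1, max(d_ur(h(s),h(t)), d_ur(h(t),h(u))) ≤ d_ur(h(s),h(u)). -/
open Metric Set MeasureTheory
open scoped ENNReal NNReal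

private lemma dur_set_nonempty {M : Type*} [MetricSpace M] (x y : M) :
    { c : ℝ | ∃ (K : Set ℝ) (γ : ℝ → M), K.Nonempty ∧ IsCompact K ∧
      LipschitzOnWith 1 γ K ∧ γ (sInf K) = x ∧ γ (sSup K) = y ∧
      c = (volume (Set.Icc (sInf K) (sSup K) \ K)).toReal }.Nonempty := by
  by_cases hxy : x = y
  · refine ⟨_, {0}, fun _ => x, ⟨0, rfl⟩, isCompact_singleton, ?_, ?_, ?_, rfl⟩
    · intro a _ b _; simp
    · simp
    · simp [hxy.symm]
  · set D := dist x y with hD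
    have hDpos : 0 < D := dist_pos.mpr hxy
    have hinf : sInf ({0, D} : Set ℝ) = 0 := by
      rw [csInf_pair]; exact min_eq_left hDpos.le
    have hsup : sSup ({0, D} : Set ℝ) = D := by
      rw [csSup_pair]; exact max_eq_right hDpos.le
    refine ⟨_, {0, D}, fun a => if a ≤ 0 then x else y, ⟨0, by simp⟩,
      ((Set.finite_singleton D).insert 0).isCompact, ?_, ?_, ?_, rfl⟩
    · intro a ha b hb
      have key : ∀ a b : ℝ, a ∈ ({0, D} : Set ℝ) → b ∈ ({0, D} : Set ℝ) → a ≤ b →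
          edist (if a ≤ 0 then x else y) (if b ≤ 0 then x else y) ≤ 1 * edist a b := by
        intro a b ha hb hab
        rcases ha with rfl | rfl <;> rcases hb with rfl | rfl
        · simp
        · rw [if_pos le_rfl, if_neg (not_le.mpr hDpos), one_mul]
          rw [edist_dist, edist_dist, Real.dist_eq]
          exact ENNReal.ofReal_le_ofReal (by rw [abs_of_nonpos (by linarith)]; linarith)
        · exact absurd (hab.trans_lt hDpos) (by simp)
        · simp
      rcases le_total a b with hab | hab
      · exact key a b ha hb hab
      · rw [edist_comm, edist_comm a b]; exact key b a hb ha hab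
    · rw [hinf]; simp
    · rw [hsup]; simp [hDpos.not_ge]

private lemma dur_comp_lipschitz {M : Type*} [MetricSpace M] {r : M → M}
    (hr : LipschitzWith 1 r) (x y : M) : dur (r x) (r y) ≤ dur x y := by
  unfold dur
  apply csInf_le_csInf
  · refine ⟨0, fun c hc => ?_⟩
    obtain ⟨K, γ, _, _, _, _, _, hc⟩ := hc
    rw [hc]; exact ENNReal.toReal_nonneg
  · exact dur_set_nonempty x y
  · rintro c ⟨K, γ, hK, hKc, hγ, hγx, hγy, rfl⟩
    exact ⟨K, r ∘ γ, hK, hKc, by simpa using hr.comp_lipschitzOnWith hγ,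
      by simp [Function.comp, hγx], by simp [Function.comp, hγy], rfl⟩

private lemma clamp_lip {M : Type*} [MetricSpace M] (h : Set.Icc (0:ℝ) 1 ≃ₜ M)
    (hbt : ∀ s t u : Set.Icc (0:ℝ) 1, s ≤ t → t ≤ u →
      max (dist (h s) (h t)) (dist (h t) (h u)) ≤ dist (h s) (h u))
    (p q : Set.Icc (0:ℝ) 1) (hpq : p ≤ q) :
    LipschitzWith 1 (fun m => h (max p (min q (h.symm m)))) := by
  apply LipschitzWith.of_dist_le_mul
  intro x y
  rw [NNReal.coe_one, one_mul]
  have hx : x = h (h.symm x) := (h.apply_symm_apply x).symm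
  have hy : y = h (h.symm y) := (h.apply_symm_apply y).symm
  have key : ∀ a b : Set.Icc (0:ℝ) 1, a ≤ b →
      dist (h (max p (min q a))) (h (max p (min q b))) ≤ dist (h a) (h b) := by
    intro a b hab
    rcases le_total b p with hbp | hpb
    · have h1 : min q a = a := min_eq_right ((hab.trans hbp).trans hpq)
      have h2 : min q b = b := min_eq_right (hbp.trans hpq)
      rw [h1, h2, max_eq_left hbp, max_eq_left (hab.trans hbp)]
      simpa using dist_nonneg
    · rcases le_total q a with hqa | haq
      · rw [min_eq_left hqa, min_eq_left (hqa.trans hab), max_eq_right hpq]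
        simpa using dist_nonneg
      · have e1 : min q a = a := min_eq_right haq
        have e2 : max p (min q b) = min q b := max_eq_right (le_min hpq hpb)
        rw [e1, e2]
        have hab1 : max p a ≤ min q b := max_le (le_min hpq hpb) (le_min haq hab)
        have step1 : dist (h (max p a)) (h (min q b)) ≤ dist (h a) (h (min q b)) :=
          le_trans (le_max_right _ _) (hbt a (max p a) (min q b) (le_max_right p a) hab1)
        have step2 : dist (h a) (h (min q b)) ≤ dist (h a) (h b) :=
          le_trans (le_max_left _ _)
            (hbt a (min q b) b ((le_max_right p a).trans hab1) (min_le_right q b))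
        exact step1.trans step2
  rcases le_total (h.symm x) (h.symm y) with hab | hab
  · calc dist (h (max p (min q (h.symm x)))) (h (max p (min q (h.symm y))))
        ≤ dist (h (h.symm x)) (h (h.symm y)) := key _ _ hab
      _ = dist x y := by rw [← hx, ← hy]
  · calc dist (h (max p (min q (h.symm x)))) (h (max p (min q (h.symm y))))
        = dist (h (max p (min q (h.symm y)))) (h (max p (min q (h.symm x)))) := dist_comm _ _
      _ ≤ dist (h (h.symm y)) (h (h.symm x)) := key _ _ hab
      _ = dist x y := by rw [← hx, ← hy, dist_comm]

/-- If `(M,d)` is a 1-bounded turning arc parametrized by the homeomorphism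
`h : [0,1] → M`, then the pseudometric `d_ur` also satisfies the 1-bounded turning
inequality along `h`. -/
theorem dur_bounded_turning_of_bounded_turning_arc
    {M : Type*} [MetricSpace M] (h : Set.Icc (0:ℝ) 1 ≃ₜ M)
    (hbt : ∀ s t u : Set.Icc (0:ℝ) 1, s ≤ t → t ≤ u →
      max (dist (h s) (h t)) (dist (h t) (h u)) ≤ dist (h s) (h u)) :
    ∀ s t u : Set.Icc (0:ℝ) 1, s ≤ t → t ≤ u →
      max (dur (h s) (h t)) (dur (h t) (h u)) ≤ dur (h s) (h u) := by
  intro s t u hst htu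
  apply max_le
  · have := dur_comp_lipschitz (clamp_lip h hbt s t hst) (h s) (h u)
    simpa [h.symm_apply_apply, min_eq_right hst, min_eq_left htu, max_self,
      max_eq_right hst] using this
  · have := dur_comp_lipschitz (clamp_lip h hbt t u htu) (h s) (h u)
    simpa [h.symm_apply_apply, min_eq_right (hst.trans htu), min_self, max_self,
      max_eq_left hst, max_eq_right htu] using this
end
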